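/- arXiv:1906.10950 — 8 statements merged into one kernel-verified Lean document; each statement's English description precedes it below -/
import Mathlib

section
/- The set {x in R^{d+1} : max_i x_i - min_j x_j ≤ 1, sum_i x_i = 0} equals the set {y - (1/(d+1))(sum_i y_i)·1 : y in [-1/2, 1/2]^{d+1}}, i.e., the tropical unit ball is the projection of the cube [-1/2,1/2]^{d+1} along the all-ones direction. -/
noncomputable def tropDist {d : ℕ} (a b : Fin (d + 1) → ℝ) : ℝ :=
  (Finset.univ.sup' Finset.univ_nonempty fun i => a i - b i) -
    (Finset.univ.inf' Finset.univ_nonempty fun i => a i - b i)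

open Finset in
lemma sup'_sub_const' {d : ℕ} (f : Fin (d+1) → ℝ) (c : ℝ) :
    (univ.sup' univ_nonempty fun i => f i - c) = (univ.sup' univ_nonempty f) - c := by
  apply le_antisymm
  · exact Finset.sup'_le _ _ fun i _ => sub_le_sub_right (Finset.le_sup' f (mem_univ i)) c
  · obtain ⟨i, -, hi⟩ := Finset.exists_mem_eq_sup' univ_nonempty f
    rw [hi, sub_le_iff_le_add]
    have := Finset.le_sup' (f := fun j => f j - c) (mem_univ i)
    linarith

open Finset in
lemma inf'_sub_const' {d : ℕ} (f : Fin (d+1) → ℝ) (c : ℝ) :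
    (univ.inf' univ_nonempty fun i => f i - c) = (univ.inf' univ_nonempty f) - c := by
  apply le_antisymm
  · obtain ⟨i, -, hi⟩ := Finset.exists_mem_eq_inf' univ_nonempty f
    rw [hi]
    have := Finset.inf'_le (f := fun j => f j - c) (mem_univ i)
    linarith
  · exact Finset.le_inf' _ _ fun i _ => sub_le_sub_right (Finset.inf'_le f (mem_univ i)) c

/-- The tropical unit ball, realized inside the hyperplane `∑ x_i = 0`, is the
projection of the cube `[-1/2, 1/2]^{d+1}` along the all-ones direction:
`{x : max x - min x ≤ 1, ∑ x = 0} = {y - (∑ y)/(d+1)·𝟙 : y ∈ [-1/2,1/2]^{d+1}}`. -/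
theorem tropBall_eq_proj_cube {d : ℕ} :
    {x : Fin (d + 1) → ℝ | tropDist x 0 ≤ 1 ∧ ∑ i, x i = 0} =
      (fun y : Fin (d + 1) → ℝ =>
          y - ((∑ i, y i) / ((d : ℝ) + 1)) • (1 : Fin (d + 1) → ℝ)) ''
        {y : Fin (d + 1) → ℝ | ∀ i, y i ∈ Set.Icc (-(1 / 2) : ℝ) (1 / 2)} := by
  have hd : ((d : ℝ) + 1) ≠ 0 := by positivity
  ext x
  simp only [Set.mem_setOf_eq, Set.mem_image, tropDist, Pi.zero_apply, sub_zero]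
  constructor
  · rintro ⟨h1, h2⟩
    set M := Finset.univ.sup' Finset.univ_nonempty x with hM
    set m := Finset.univ.inf' Finset.univ_nonempty x with hm
    set c := (M + m) / 2 with hc
    refine ⟨fun i => x i - c, fun i => ?_, ?_⟩
    · have h3 : x i ≤ M := Finset.le_sup' x (Finset.mem_univ i)
      have h4 : m ≤ x i := Finset.inf'_le x (Finset.mem_univ i)
      simp only [Set.mem_Icc]; constructor <;> linarith
    · have hs : ∑ i, (x i - c) = -(((d : ℝ) + 1) * c) := by
        rw [Finset.sum_sub_distrib, h2, Finset.sum_const]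
        simp [Finset.card_univ]
      funext i
      simp only [Pi.sub_apply, Pi.smul_apply, Pi.one_apply, smul_eq_mul, hs]
      field_simp
      ring
  · rintro ⟨y, hy, rfl⟩
    set s := (∑ i, y i) / ((d : ℝ) + 1) with hs
    have hx : ∀ i, (y - s • (1 : Fin (d+1) → ℝ)) i = y i - s := fun i => by
      simp [Pi.sub_apply]
    constructor
    · have e1 := sup'_sub_const' y s
      have e2 := inf'_sub_const' y s
      have hconv : (fun i => (y - s • (1 : Fin (d+1) → ℝ)) i) = fun i => y i - s := by
        funext i; exact hx i
      rw [show (Finset.univ.sup' Finset.univ_nonempty fun i => (y - s • (1:Fin (d+1)→ℝ)) i)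
          = Finset.univ.sup' Finset.univ_nonempty fun i => y i - s by rw [hconv],
        show (Finset.univ.inf' Finset.univ_nonempty fun i => (y - s • (1:Fin (d+1)→ℝ)) i)
          = Finset.univ.inf' Finset.univ_nonempty fun i => y i - s by rw [hconv],
        e1, e2]
      obtain ⟨i, -, hi⟩ := Finset.exists_mem_eq_sup' (Finset.univ_nonempty) y
      obtain ⟨j, -, hj⟩ := Finset.exists_mem_eq_inf' (Finset.univ_nonempty) y
      have h5 := (hy i).2
      have h6 := (hy j).1
      rw [hi, hj] at *
      linarith [ (hy i).2, (hy j).1 ]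
    · have : ∑ i, (y - s • (1:Fin (d+1)→ℝ)) i = ∑ i, (y i - s) := by
        refine Finset.sum_congr rfl fun i _ => hx i
      rw [this, Finset.sum_sub_distrib, Finset.sum_const]
      simp [Finset.card_univ, hs]
      field_simp
      ring
end

section
/- A partition of [d+1] into three parts (F_-, F_*, F_+) corresponds to a nonempty face of the tropical unit ball, realized as the Minkowski sum ∑ s_i where s_i = {-e_i} for i in F_-, s_i = [-e_i, e_i] for i in F_*, and s_i = {e_i} for i in F_+, if and only if both F_- and F_+ are non-empty; moreover the dimension of this face equals the cardinality of F_*. -/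
private lemma memK_iff {d : ℕ} (z : Fin (d + 1) → ℝ) :
    tropDist z 0 ≤ 2 ↔ ∀ i j, z i - z j ≤ 2 := by
  unfold tropDist
  simp only [Pi.zero_apply, sub_zero]
  rw [sub_le_iff_le_add, Finset.sup'_le_iff]
  constructor
  · intro h i j
    have h1 := h i (Finset.mem_univ i)
    have h2 : Finset.univ.inf' Finset.univ_nonempty z ≤ z j :=
      Finset.inf'_le _ (Finset.mem_univ j)
    linarith
  · intro h i _
    rw [← sub_le_iff_le_add']
    apply Finset.le_inf'
    intro j _
    have := h i j
    linarith

/-- Faces of the tropical unit ball (realized as the projection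
`K = [-1,1]^{d+1} + ℝ·𝟙 = {x : max x - min x ≤ 2}` of the cube along the
all-ones direction).  A partition `(F₋, F₊, F₀)` of `[d+1]` yields, via the
Minkowski sum `∑ sᵢ` with `sᵢ = {-eᵢ}` on `F₋`, `sᵢ = [-eᵢ, eᵢ]` on `F₀` and
`sᵢ = {eᵢ}` on `F₊` (plus the lineality direction `ℝ·𝟙`), a nonempty proper
face of `K` if and only if both `F₋` and `F₊` are nonempty; moreover the
dimension of this face (in the tropical torus, i.e. `finrank` of its direction
space minus the all-ones direction) equals `|F₀|`. -/
theorem face_of_tropBall_iff {d : ℕ} (Fm Fs Fp : Finset (Fin (d + 1)))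
    (hms : Disjoint Fm Fs) (hmp : Disjoint Fm Fp) (hsp : Disjoint Fs Fp)
    (hcover : Fm ∪ Fs ∪ Fp = Finset.univ) :
    ((Fm.Nonempty ∧ Fp.Nonempty) ↔
      ({z : Fin (d + 1) → ℝ | ∃ x : Fin (d + 1) → ℝ,
          ((∀ i ∈ Fm, x i = -1) ∧ (∀ i ∈ Fp, x i = 1) ∧
            ∀ i ∈ Fs, x i ∈ Set.Icc (-1 : ℝ) 1) ∧
          ∃ t : ℝ, z = x + t • (1 : Fin (d + 1) → ℝ)}.Nonempty ∧
        IsExposed ℝ {x : Fin (d + 1) → ℝ | tropDist x 0 ≤ 2}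
          {z : Fin (d + 1) → ℝ | ∃ x : Fin (d + 1) → ℝ,
            ((∀ i ∈ Fm, x i = -1) ∧ (∀ i ∈ Fp, x i = 1) ∧
              ∀ i ∈ Fs, x i ∈ Set.Icc (-1 : ℝ) 1) ∧
            ∃ t : ℝ, z = x + t • (1 : Fin (d + 1) → ℝ)} ∧
        {z : Fin (d + 1) → ℝ | ∃ x : Fin (d + 1) → ℝ,
            ((∀ i ∈ Fm, x i = -1) ∧ (∀ i ∈ Fp, x i = 1) ∧
              ∀ i ∈ Fs, x i ∈ Set.Icc (-1 : ℝ) 1) ∧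
            ∃ t : ℝ, z = x + t • (1 : Fin (d + 1) → ℝ)} ≠
          {x : Fin (d + 1) → ℝ | tropDist x 0 ≤ 2})) ∧
    (Fm.Nonempty → Fp.Nonempty →
      Module.finrank ℝ
          ↥(vectorSpan ℝ {z : Fin (d + 1) → ℝ | ∃ x : Fin (d + 1) → ℝ,
            ((∀ i ∈ Fm, x i = -1) ∧ (∀ i ∈ Fp, x i = 1) ∧
              ∀ i ∈ Fs, x i ∈ Set.Icc (-1 : ℝ) 1) ∧
            ∃ t : ℝ, z = x + t • (1 : Fin (d + 1) → ℝ)}) = Fs.card + 1) := by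
  set K : Set (Fin (d + 1) → ℝ) := {x : Fin (d + 1) → ℝ | tropDist x 0 ≤ 2} with hKdef
  set F : Set (Fin (d + 1) → ℝ) := {z : Fin (d + 1) → ℝ | ∃ x : Fin (d + 1) → ℝ,
      ((∀ i ∈ Fm, x i = -1) ∧ (∀ i ∈ Fp, x i = 1) ∧
        ∀ i ∈ Fs, x i ∈ Set.Icc (-1 : ℝ) 1) ∧
      ∃ t : ℝ, z = x + t • (1 : Fin (d + 1) → ℝ)} with hFdef
  have hcov : ∀ i : Fin (d + 1), i ∈ Fm ∨ i ∈ Fs ∨ i ∈ Fp := by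
    intro i
    have : i ∈ Fm ∪ Fs ∪ Fp := hcover ▸ Finset.mem_univ i
    simpa [Finset.mem_union, or_assoc] using this
  have hms' := Finset.disjoint_left.1 hms
  have hmp' := Finset.disjoint_left.1 hmp
  have hsp' := Finset.disjoint_left.1 hsp
  -- every element of F is in K
  have hFK : F ⊆ K := by
    rintro z ⟨x, ⟨cm, cp, cs⟩, t, rfl⟩
    have hub : ∀ i, x i ≤ 1 := by
      intro i
      rcases hcov i with h | h | h
      · rw [cm i h]; norm_num
      · exact (cs i h).2
      · rw [cp i h]
    have hlb : ∀ i, -1 ≤ x i := by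
      intro i
      rcases hcov i with h | h | h
      · rw [cm i h]
      · exact (cs i h).1
      · rw [cp i h]; norm_num
    show tropDist _ 0 ≤ 2
    rw [memK_iff]
    intro i j
    have h1 := hub i
    have h2 := hlb j
    simp only [Pi.add_apply, Pi.smul_apply, Pi.one_apply, smul_eq_mul]
    linarith
  constructor
  · constructor
    · -- forward direction
      rintro ⟨hm, hp⟩
      obtain ⟨j₀, hj₀⟩ := hm
      obtain ⟨i₀, hi₀⟩ := hp
      -- the base point
      set x₀ : Fin (d + 1) → ℝ := fun i => if i ∈ Fm then -1 else if i ∈ Fp then 1 else 0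
        with hx₀def
      have cm₀ : ∀ i ∈ Fm, x₀ i = -1 := fun i hi => by simp [hx₀def, hi]
      have cp₀ : ∀ i ∈ Fp, x₀ i = 1 := fun i hi => by
        simp [hx₀def, hi, fun h => hmp' h hi]
        intro h; exact absurd hi (hmp' h)
      have cs₀ : ∀ i ∈ Fs, x₀ i ∈ Set.Icc (-1 : ℝ) 1 := fun i hi => by
        have h1 : i ∉ Fm := fun h => hms' h hi
        have h2 : i ∉ Fp := hsp' hi
        simp [hx₀def, h1, h2]
      have hx₀F : x₀ ∈ F := ⟨x₀, ⟨cm₀, cp₀, cs₀⟩, 0, by simp⟩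
      -- the exposing functional
      set lin : (Fin (d + 1) → ℝ) →ₗ[ℝ] ℝ :=
        { toFun := fun z => ∑ p ∈ Fp ×ˢ Fm, (z p.1 - z p.2)
          map_add' := fun x y => by
            rw [← Finset.sum_add_distrib]
            exact Finset.sum_congr rfl fun p _ => by simp only [Pi.add_apply]; ring
          map_smul' := fun c x => by
            simp only [RingHom.id_apply, smul_eq_mul, Finset.mul_sum]
            exact Finset.sum_congr rfl fun p _ => by
              simp only [Pi.smul_apply, smul_eq_mul]; ring } with hlindef
      set l : (Fin (d + 1) → ℝ) →L[ℝ] ℝ := LinearMap.toContinuousLinearMap lin with hldef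
      have hl : ∀ z, l z = ∑ p ∈ Fp ×ˢ Fm, (z p.1 - z p.2) := fun z => rfl
      have hlF : ∀ z ∈ F, l z = (Fp.card * Fm.card : ℝ) * 2 := by
        rintro z ⟨x, ⟨cm, cp, _⟩, t, rfl⟩
        have h2 : ∀ p ∈ Fp ×ˢ Fm,
            ((x + t • (1 : Fin (d + 1) → ℝ)) p.1 - (x + t • (1 : Fin (d + 1) → ℝ)) p.2)
              = (2 : ℝ) := by
          intro p hp
          obtain ⟨h1, h2⟩ := Finset.mem_product.1 hp
          simp [cp _ h1, cm _ h2]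
          norm_num
        rw [hl, Finset.sum_congr rfl h2, Finset.sum_const, Finset.card_product,
          nsmul_eq_mul]
        push_cast
        ring
      have hlK : ∀ z ∈ K, l z ≤ (Fp.card * Fm.card : ℝ) * 2 := by
        intro z hz
        rw [hl]
        calc ∑ p ∈ Fp ×ˢ Fm, (z p.1 - z p.2) ≤ ∑ _p ∈ Fp ×ˢ Fm, (2 : ℝ) :=
              Finset.sum_le_sum fun p _ => (memK_iff z).1 hz p.1 p.2
          _ = (Fp.card * Fm.card : ℝ) * 2 := by
              rw [Finset.sum_const, Finset.card_product, nsmul_eq_mul]; push_cast; ring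
      have hexp : IsExposed ℝ K F := by
        intro _
        refine ⟨l, ?_⟩
        ext z
        constructor
        · intro hzF
          refine ⟨hFK hzF, fun y hy => ?_⟩
          rw [hlF z hzF]
          exact hlK y hy
        · rintro ⟨hzK, hmax⟩
          have h2 := hmax x₀ (hFK hx₀F)
          rw [hlF x₀ hx₀F] at h2
          have h1 := hlK z hzK
          have hsum : ∑ p ∈ Fp ×ˢ Fm, (z p.1 - z p.2) = ∑ _p ∈ Fp ×ˢ Fm, (2 : ℝ) := by
            have hconst : (∑ _p ∈ Fp ×ˢ Fm, (2 : ℝ)) = (Fp.card * Fm.card : ℝ) * 2 := by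
              rw [Finset.sum_const, Finset.card_product, nsmul_eq_mul]; push_cast; ring
            rw [hl] at h1
            rw [hl z] at h2
            rw [hconst]
            linarith
          have heach := (Finset.sum_eq_sum_iff_of_le
            (fun p _ => (memK_iff z).1 hzK p.1 p.2)).1 hsum
          have hpair : ∀ i ∈ Fp, ∀ j ∈ Fm, z i - z j = 2 := fun i hi j hj =>
            heach (i, j) (Finset.mem_product.2 ⟨hi, hj⟩)
          have hzK' := (memK_iff z).1 hzK
          refine ⟨fun i => z i - (z i₀ - 1), ⟨?_, ?_, ?_⟩, z i₀ - 1, ?_⟩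
          · intro i hi
            have := hpair i₀ hi₀ i hi
            dsimp only
            linarith
          · intro i hi
            have h3 := hpair i hi j₀ hj₀
            have h4 := hpair i₀ hi₀ j₀ hj₀
            dsimp only
            linarith
          · intro k hk
            have h3 := hpair i₀ hi₀ j₀ hj₀
            have h4 := hzK' k j₀
            have h5 := hzK' i₀ k
            constructor <;> [skip; skip] <;> dsimp only <;> linarith
          · funext i
            simp only [Pi.add_apply, Pi.smul_apply, Pi.one_apply, smul_eq_mul]
            ring
      have hne : F ≠ K := by
        intro h
        have h0K : (0 : Fin (d + 1) → ℝ) ∈ K := by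
          show tropDist _ 0 ≤ 2
          rw [memK_iff]
          intro i j
          norm_num
        rw [← h] at h0K
        obtain ⟨x, ⟨cm, cp, _⟩, t, ht⟩ := h0K
        have h1 := congrFun ht i₀
        have h2 := congrFun ht j₀
        simp only [Pi.zero_apply, Pi.add_apply, Pi.smul_apply, Pi.one_apply,
          smul_eq_mul, mul_one] at h1 h2
        rw [cp i₀ hi₀] at h1
        rw [cm j₀ hj₀] at h2
        linarith
      exact ⟨⟨x₀, hx₀F⟩, hexp, hne⟩
    · -- backward direction
      rintro ⟨hFne, hexp, hneq⟩
      by_contra hcon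
      rw [not_and_or] at hcon
      have h0F : (0 : Fin (d + 1) → ℝ) ∈ F := by
        rcases hcon with h | h
        · rw [Finset.not_nonempty_iff_eq_empty] at h
          refine ⟨fun _ => 1, ⟨by simp [h], fun i _ => rfl, fun i _ => by norm_num⟩, -1, ?_⟩
          funext i
          simp
        · rw [Finset.not_nonempty_iff_eq_empty] at h
          refine ⟨fun _ => -1, ⟨fun i _ => rfl, by simp [h], fun i _ => by norm_num⟩, 1, ?_⟩
          funext i
          simp
      obtain ⟨l, hl⟩ := hexp ⟨0, h0F⟩
      have hmax : ∀ y ∈ K, l y ≤ 0 := by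
        have := hl ▸ h0F
        have h2 := this.2
        simpa using h2
      have hle : ∀ v : Fin (d + 1) → ℝ, l v ≤ 0 := by
        intro v
        set S := Finset.univ.sup' Finset.univ_nonempty v with hS
        set I := Finset.univ.inf' Finset.univ_nonempty v with hI
        have hSv : ∀ i, v i ≤ S := fun i => Finset.le_sup' v (Finset.mem_univ i)
        have hIv : ∀ i, I ≤ v i := fun i => Finset.inf'_le v (Finset.mem_univ i)
        have hc : 0 ≤ S - I := by have := hSv 0; have := hIv 0; linarith
        set c := S - I with hcdef
        have hpos : (0 : ℝ) < c + 2 := by linarith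
        set ε := 2 / (c + 2) with hε
        have hεpos : 0 < ε := by positivity
        have hεv : ε • v ∈ K := by
          show tropDist _ 0 ≤ 2
          rw [memK_iff]
          intro i j
          have h1 : v i - v j ≤ c := by have := hSv i; have := hIv j; simp [hcdef]; linarith
          have h2 : ε * (v i - v j) ≤ ε * c :=
            mul_le_mul_of_nonneg_left h1 (le_of_lt hεpos)
          have h3 : ε * c ≤ 2 := by
            rw [hε, div_mul_eq_mul_div, div_le_iff₀ hpos]
            linarith
          simp only [Pi.smul_apply, smul_eq_mul]
          linarith
        have := hmax (ε • v) hεv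
        rw [map_smul, smul_eq_mul] at this
        nlinarith
      have hzero : ∀ v, l v = 0 := by
        intro v
        have h1 := hle v
        have h2 := hle (-v)
        rw [map_neg] at h2
        linarith
      apply hneq
      rw [hl]
      ext z
      simp only [Set.mem_setOf_eq, Set.mem_sep_iff]
      exact ⟨fun h => h.1, fun h => ⟨h, fun y _ => by rw [hzero y, hzero z]⟩⟩
  · -- dimension
    intro hm hp
    obtain ⟨j₀, hj₀⟩ := hm
    obtain ⟨i₀, hi₀⟩ := hp
    set x₀ : Fin (d + 1) → ℝ := fun i => if i ∈ Fm then -1 else if i ∈ Fp then 1 else 0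
      with hx₀def
    have cm₀ : ∀ i ∈ Fm, x₀ i = -1 := fun i hi => by simp [hx₀def, hi]
    have cp₀ : ∀ i ∈ Fp, x₀ i = 1 := fun i hi => by
      simp [hx₀def, hi]
      intro h; exact absurd hi (hmp' h)
    have cs₀ : ∀ i ∈ Fs, x₀ i ∈ Set.Icc (-1 : ℝ) 1 := fun i hi => by
      have h1 : i ∉ Fm := fun h => hms' h hi
      have h2 : i ∉ Fp := hsp' hi
      simp [hx₀def, h1, h2]
    have hx₀F : x₀ ∈ F := ⟨x₀, ⟨cm₀, cp₀, cs₀⟩, 0, by simp⟩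
    set b : Option {k // k ∈ Fs} → (Fin (d + 1) → ℝ) :=
      fun o => o.elim 1 (fun k => Pi.single (k : Fin (d + 1)) 1) with hbdef
    have hb_indep : LinearIndependent ℝ b := by
      rw [Fintype.linearIndependent_iff]
      intro g hg
      have key : ∀ j : Fin (d + 1),
          g none + ∑ k : {k // k ∈ Fs}, g (some k) * (if j = (k : Fin (d + 1)) then 1 else 0)
            = 0 := by
        intro j
        have h := congrFun hg j
        simpa [hbdef, Fintype.sum_option, Finset.sum_apply, Pi.single_apply] using h
      have hnone : g none = 0 := by
        have h := key j₀
        rw [Finset.sum_eq_zero (fun k _ => ?_)] at h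
        · linarith
        · rw [if_neg, mul_zero]
          intro hEq
          exact hms' hj₀ (hEq ▸ k.2)
      intro i
      match i with
      | none => exact hnone
      | some k₀ =>
        have h := key (k₀ : Fin (d + 1))
        rw [hnone, zero_add] at h
        rw [Finset.sum_eq_single k₀ ?_ ?_] at h
        · simpa using h
        · intro k _ hk
          rw [if_neg, mul_zero]
          intro hEq
          exact hk (Subtype.ext hEq.symm)
        · intro hmem
          exact absurd (Finset.mem_univ k₀) hmem
    have hspan : Submodule.span ℝ (Set.range b) = vectorSpan ℝ F := by
      apply le_antisymm
      · rw [Submodule.span_le]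
        rintro v ⟨o, rfl⟩
        match o with
        | none =>
          have mem1 : x₀ + (1 : ℝ) • (1 : Fin (d + 1) → ℝ) ∈ F :=
            ⟨x₀, ⟨cm₀, cp₀, cs₀⟩, 1, rfl⟩
          have := vsub_mem_vectorSpan ℝ mem1 hx₀F
          simpa [hbdef] using this
        | some k =>
          have hk := k.2
          have mem1 : x₀ + Pi.single (k : Fin (d + 1)) (1 : ℝ)
              + (0 : ℝ) • (1 : Fin (d + 1) → ℝ) ∈ F := by
            refine ⟨x₀ + Pi.single (k : Fin (d + 1)) 1, ⟨?_, ?_, ?_⟩, 0, rfl⟩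
            · intro i hi
              have hne : i ≠ (k : Fin (d + 1)) := fun h => hms' hi (h ▸ k.2)
              simp [Pi.single_eq_of_ne hne, cm₀ i hi]
            · intro i hi
              have hne : i ≠ (k : Fin (d + 1)) := fun h => hsp' (h ▸ k.2) hi
              simp [Pi.single_eq_of_ne hne, cp₀ i hi]
            · intro i hi
              have h1 : i ∉ Fm := fun h => hms' h hi
              have h2 : i ∉ Fp := hsp' hi
              by_cases hik : i = (k : Fin (d + 1))
              · subst hik
                simp [hx₀def, h1, h2]
              · simp [Pi.single_eq_of_ne hik, hx₀def, h1, h2]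
          have mem1' : x₀ + Pi.single (k : Fin (d + 1)) (1 : ℝ) ∈ F := by
            simpa using mem1
          have := vsub_mem_vectorSpan ℝ mem1' hx₀F
          simpa [hbdef] using this
      · rw [vectorSpan_def, Submodule.span_le]
        rintro v ⟨z, hz, z', hz', rfl⟩
        obtain ⟨x, ⟨cm, cp, _⟩, t, rfl⟩ := hz
        obtain ⟨x', ⟨cm', cp', _⟩, t', rfl⟩ := hz'
        have h1 : (1 : Fin (d + 1) → ℝ) ∈ Submodule.span ℝ (Set.range b) :=
          Submodule.subset_span ⟨none, rfl⟩
        have hsingle : ∀ k ∈ Fs, (Pi.single k 1 : Fin (d + 1) → ℝ) ∈ Submodule.span ℝ (Set.range b) :=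
          fun k hk => Submodule.subset_span ⟨some ⟨k, hk⟩, rfl⟩
        have hdiff : x - x' = ∑ k ∈ Fs, (x k - x' k) • (Pi.single k 1 : Fin (d + 1) → ℝ) := by
          funext j
          rw [Finset.sum_apply]
          simp only [Pi.smul_apply, Pi.single_apply, smul_eq_mul, mul_ite, mul_one, mul_zero]
          rw [Finset.sum_ite_eq Fs j (fun k => x k - x' k)]
          by_cases hj : j ∈ Fs
          · simp [hj]
          · rw [if_neg hj]
            rcases hcov j with h | h | h
            · simp [Pi.sub_apply, cm j h, cm' j h]
            · exact absurd h hj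
            · simp [Pi.sub_apply, cp j h, cp' j h]
        have hzz : (x + t • (1 : Fin (d + 1) → ℝ)) -ᵥ (x' + t' • (1 : Fin (d + 1) → ℝ))
            = (∑ k ∈ Fs, (x k - x' k) • (Pi.single k 1 : Fin (d + 1) → ℝ))
              + (t - t') • (1 : Fin (d + 1) → ℝ) := by
          rw [vsub_eq_sub, ← hdiff]
          funext j
          simp only [Pi.sub_apply, Pi.add_apply, Pi.smul_apply, Pi.one_apply, smul_eq_mul]
          ring
        dsimp only
        rw [hzz]
        exact Submodule.add_mem _
          (Submodule.sum_mem _ fun k hk => Submodule.smul_mem _ _ (hsingle k hk))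
          (Submodule.smul_mem _ _ h1)
    rw [← hspan, finrank_span_eq_card hb_indep]
    simp [Fintype.card_option, Fintype.card_coe]
end

section
/- The tropical unit ball in the tropical d-torus has exactly d(d+1) facets and exactly 2^{d+1} - 2 vertices. -/
open Finset Module

namespace TropAux

variable {d : ℕ}

def C (d : ℕ) : Set (Fin (d + 1) → ℝ) :=
  {x | (∀ i j, x i - x j ≤ 1) ∧ ∑ i, x i = 0}

lemma C_eq (d : ℕ) :
    {x : Fin (d + 1) → ℝ | tropDist x 0 ≤ 1 ∧ ∑ i, x i = 0} = C d := by
  ext x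
  simp only [Set.mem_setOf_eq, C, and_congr_left_iff]
  intro _
  unfold tropDist
  simp only [Pi.zero_apply, sub_zero]
  rw [sub_le_iff_le_add, Finset.sup'_le_iff]
  constructor
  · intro h i j
    have h1 := h i (mem_univ i)
    have h2 : Finset.univ.inf' Finset.univ_nonempty (fun i => x i) ≤ x j :=
      Finset.inf'_le _ (mem_univ j)
    linarith
  · intro h i _
    have : x i - 1 ≤ Finset.univ.inf' Finset.univ_nonempty (fun i => x i) :=
      Finset.le_inf' _ _ (fun j _ => by have := h i j; linarith)
    linarith

lemma convex_C : Convex ℝ (C d) := by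
  intro x hx y hy a b ha hb hab
  constructor
  · intro i j
    have h1 := hx.1 i j
    have h2 := hy.1 i j
    simp only [Pi.add_apply, Pi.smul_apply, smul_eq_mul]
    nlinarith
  · simp only [Pi.add_apply, Pi.smul_apply, smul_eq_mul, Finset.sum_add_distrib,
      ← Finset.mul_sum, hx.2, hy.2, mul_zero, add_zero]

lemma perturb {x u : Fin (d + 1) → ℝ} (hx : x ∈ C d) (hsum : ∑ i, u i = 0)
    (htight : ∀ i j, x i - x j = 1 → u i = u j) :
    ∃ ε : ℝ, 0 < ε ∧ x + ε • u ∈ C d ∧ x - ε • u ∈ C d := by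
  classical
  set K : ℝ := ∑ i, |u i| with hK
  have hK0 : 0 ≤ K := Finset.sum_nonneg fun i _ => abs_nonneg _
  have hbound : ∀ i, |u i| ≤ K := fun i =>
    Finset.single_le_sum (fun j _ => abs_nonneg (u j)) (mem_univ i)
  -- the minimal gap
  set g : Fin (d+1) × Fin (d+1) → ℝ := fun p =>
    if x p.1 - x p.2 = 1 then 1 else 1 - (x p.1 - x p.2) with hg
  have hne : (Finset.univ : Finset (Fin (d+1) × Fin (d+1))).Nonempty := univ_nonempty
  set δ : ℝ := Finset.univ.inf' hne g with hδ
  have hδpos : 0 < δ := by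
    rw [hδ, Finset.lt_inf'_iff]
    rintro ⟨i, j⟩ _
    simp only [hg]
    split_ifs with h
    · norm_num
    · have := hx.1 i j
      have : x i - x j < 1 := lt_of_le_of_ne this h
      linarith
  have hδle : ∀ i j, x i - x j ≠ 1 → x i - x j ≤ 1 - δ := by
    intro i j h
    have : δ ≤ g (i, j) := Finset.inf'_le _ (mem_univ _)
    simp only [hg, if_neg h] at this
    linarith
  refine ⟨δ / (2 * K + 1), by positivity, ?_, ?_⟩ <;>
  · constructor
    · intro i j
      simp only [Pi.add_apply, Pi.sub_apply, Pi.smul_apply, smul_eq_mul]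
      by_cases h : x i - x j = 1
      · rw [htight i j h]; linarith [hx.1 i j]
      · have h1 := hδle i j h
        have h2 : |u i| ≤ K := hbound i
        have h3 : |u j| ≤ K := hbound j
        have h4 : δ / (2 * K + 1) * (2 * K) ≤ δ := by
          rw [div_mul_eq_mul_div, div_le_iff₀ (by positivity)]
          nlinarith
        have h5 := abs_le.1 h2
        have h6 := abs_le.1 h3
        have h7 : 0 < δ / (2 * K + 1) := by positivity
        nlinarith
    · simp only [Pi.add_apply, Pi.sub_apply, Pi.smul_apply, smul_eq_mul,
        Finset.sum_add_distrib, Finset.sum_sub_distrib, ← Finset.mul_sum, hsum, hx.2]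
      ring

lemma not_extreme {x u : Fin (d + 1) → ℝ} (hx : x ∈ C d) (hsum : ∑ i, u i = 0)
    (hne : u ≠ 0) (htight : ∀ i j, x i - x j = 1 → u i = u j) :
    x ∉ Set.extremePoints ℝ (C d) := by
  obtain ⟨ε, hε, h1, h2⟩ := perturb hx hsum htight
  rw [mem_extremePoints]
  rintro ⟨-, h⟩
  have hmem : x ∈ openSegment ℝ (x - ε • u) (x + ε • u) := by
    refine ⟨1/2, 1/2, by norm_num, by norm_num, by norm_num, ?_⟩
    module
  obtain ⟨h3, -⟩ := h _ h2 _ h1 hmem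
  apply hne
  have : ε • u = 0 := by
    have := sub_eq_self.1 h3
    exact this
  simpa [hε.ne'] using this

noncomputable def vpt (d : ℕ) (S : Finset (Fin (d + 1))) : Fin (d + 1) → ℝ :=
  fun i => (if i ∈ S then 1 else 0) - (S.card : ℝ) / (d + 1)

lemma vpt_mem (S : Finset (Fin (d + 1))) : vpt d S ∈ C d := by
  constructor
  · intro i j
    simp only [vpt]
    split_ifs <;> linarith
  · have h0 : ∑ i, vpt d S i
        = ∑ i, ((if i ∈ S then (1:ℝ) else 0) - (S.card : ℝ) / (d + 1)) := rfl
    rw [h0, Finset.sum_sub_distrib, Finset.sum_boole, Finset.sum_const]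
    simp only [Finset.filter_mem_eq_inter, univ_inter, card_univ, Fintype.card_fin,
      nsmul_eq_mul]
    field_simp
    push_cast; ring

lemma comb_eq_one {a b p q : ℝ} (ha : 0 < a) (hb : 0 < b) (hab : a + b = 1)
    (hp : p ≤ 1) (hq : q ≤ 1) (h : a * p + b * q = 1) : p = 1 ∧ q = 1 := by
  constructor <;> nlinarith

lemma eq_vpt_of_step {y : Fin (d + 1) → ℝ} (hy : y ∈ C d) (S : Finset (Fin (d + 1)))
    (h : ∀ i ∈ S, ∀ j ∉ S, y i - y j = 1) (hS : S.Nonempty) (hS' : S ≠ univ) :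
    y = vpt d S := by
  obtain ⟨j0, hj0⟩ : ∃ j, j ∉ S := by
    by_contra hc
    push_neg at hc
    exact hS' (Finset.eq_univ_iff_forall.2 hc)
  have hval : ∀ i, y i = (if i ∈ S then 1 else 0) + y j0 := by
    intro i
    by_cases hi : i ∈ S
    · have := h i hi j0 hj0
      simp [hi]; linarith
    · -- y i = y j0 : pick i0 ∈ S
      obtain ⟨i0, hi0⟩ := hS
      have h1 := h i0 hi0 j0 hj0
      have h2 := h i0 hi0 i hi
      simp [hi]; linarith
  have hsum := hy.2
  have hsum2 : ∑ i, ((if i ∈ S then (1:ℝ) else 0) + y j0) = 0 := by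
    exact (Finset.sum_congr rfl fun i _ => (hval i).symm).trans hsum
  rw [Finset.sum_add_distrib, Finset.sum_boole, Finset.sum_const] at hsum2
  simp only [Finset.filter_mem_eq_inter, univ_inter, card_univ, Fintype.card_fin,
    nsmul_eq_mul] at hsum2
  have hj0val : y j0 = -(S.card : ℝ) / (d + 1) := by
    have hd1 : (0:ℝ) < (d:ℝ) + 1 := by positivity
    push_cast at hsum2
    field_simp
    linarith
  funext i
  rw [hval i, hj0val, vpt]
  ring

lemma vpt_extreme (S : Finset (Fin (d + 1))) (hS : S.Nonempty) (hS' : S ≠ univ) :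
    vpt d S ∈ Set.extremePoints ℝ (C d) := by
  rw [mem_extremePoints]
  refine ⟨vpt_mem S, ?_⟩
  rintro y hy z hz ⟨a, b, ha, hb, hab, hcomb⟩
  have key : ∀ i ∈ S, ∀ j ∉ S, y i - y j = 1 ∧ z i - z j = 1 := by
    intro i hi j hj
    have h1 : vpt d S i - vpt d S j = 1 := by simp [vpt, hi, hj]
    have h2 : a * (y i - y j) + b * (z i - z j) = 1 := by
      have hci := congrFun hcomb i
      have hcj := congrFun hcomb j
      simp only [Pi.add_apply, Pi.smul_apply, smul_eq_mul] at hci hcj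
      rw [← h1, ← hci, ← hcj]; ring
    have := comb_eq_one ha hb hab (hy.1 i j) (hz.1 i j) h2
    exact this
  constructor
  · rw [eq_vpt_of_step hy S (fun i hi j hj => (key i hi j hj).1) hS hS']
  · rw [eq_vpt_of_step hz S (fun i hi j hj => (key i hi j hj).2) hS hS']

lemma extreme_to_vpt (hd : 1 ≤ d) {x : Fin (d + 1) → ℝ}
    (hx : x ∈ Set.extremePoints ℝ (C d)) :
    ∃ S : Finset (Fin (d + 1)), S.Nonempty ∧ S ≠ univ ∧ x = vpt d S := by
  classical
  have hxC : x ∈ C d := hx.1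
  obtain ⟨i0, -, hi0⟩ := Finset.exists_max_image univ x univ_nonempty
  obtain ⟨j0, -, hj0⟩ := Finset.exists_min_image univ x univ_nonempty
  have hmax : ∀ k, x k ≤ x i0 := fun k => hi0 k (mem_univ k)
  have hmin : ∀ k, x j0 ≤ x k := fun k => hj0 k (mem_univ k)
  have h1 : x i0 - x j0 = 1 := by
    by_contra h1
    by_cases h0 : x = 0
    · -- perturb by e_0 - e_1
      have h01 : (0 : Fin (d + 1)) ≠ 1 := by
        have h2 : ((1 : Fin (d+1)) : ℕ) = 1 % (d+1) := Fin.val_one' (d+1)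
        simp only [Fin.ne_iff_vne, Fin.val_zero, h2]
        rw [Nat.mod_eq_of_lt (by omega)]
        exact zero_ne_one
      set u : Fin (d + 1) → ℝ := fun k => (if k = 0 then 1 else 0) - (if k = 1 then 1 else 0) with hu
      refine not_extreme (u := u) hxC ?_ ?_ ?_ hx
      · rw [Finset.sum_sub_distrib]
        simp
      · intro hc
        have := congrFun hc 0
        simp [hu, h01] at this
      · intro i j hij
        rw [h0] at hij
        simpa using hij
    · refine not_extreme hxC hxC.2 h0 ?_ hx
      intro i j hij
      exfalso
      have := hmax i
      have := hmin j
      have := hxC.1 i0 j0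
      have : x i0 - x j0 = 1 := by linarith
      exact h1 this
  set S : Finset (Fin (d + 1)) := univ.filter (fun i => x i = x i0) with hS
  have hi0entry : x j0 ≠ x i0 := by intro h; rw [h] at h1; linarith
  have hSne : S.Nonempty := ⟨i0, by simp [hS]⟩
  have hSuniv : S ≠ univ := by
    intro h
    have : j0 ∈ S := h ▸ mem_univ j0
    simp [hS] at this
    exact hi0entry this
  have hdich : ∀ k, x k = x i0 ∨ x k = x j0 := by
    by_contra hc
    push_neg at hc
    obtain ⟨k, hk1, hk2⟩ := hc
    set P : Fin (d + 1) → Prop := fun l => x l = x i0 ∨ x l = x j0 with hP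
    set A : ℕ := (univ.filter P).card with hA
    set B : ℕ := (univ.filter (fun l => ¬ P l)).card with hB
    set u : Fin (d + 1) → ℝ := fun l => if P l then (B : ℝ) else -(A : ℝ) with hu
    have hApos : 0 < A := Finset.card_pos.2 ⟨i0, by simp [hP]⟩
    have hBpos : 0 < B := Finset.card_pos.2 ⟨k, by simp [hP, hk1, hk2]⟩
    refine not_extreme (u := u) hxC ?_ ?_ ?_ hx
    · rw [show (fun l => if P l then (B : ℝ) else -(A : ℝ)) = u from rfl] at *
      rw [Finset.sum_ite, Finset.sum_const, Finset.sum_const]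
      simp only [nsmul_eq_mul, ← hA, ← hB]
      ring
    · intro hc0
      have := congrFun hc0 k
      simp only [hu, hP, Pi.zero_apply] at this
      rw [if_neg (by push_neg; exact ⟨hk1, hk2⟩)] at this
      have : (A : ℝ) = 0 := by linarith
      exact_mod_cast hApos.ne' (by exact_mod_cast this)
    · intro i j hij
      have hxi : x i = x i0 := by
        have := hmax i; have := hmin j; have h2 := hxC.1 i0 j; linarith
      have hxj : x j = x j0 := by
        have := hmax i; have := hmin j; have h2 := hxC.1 i j0; linarith
      simp only [hu]
      rw [if_pos (Or.inl hxi), if_pos (Or.inr hxj)]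
  refine ⟨S, hSne, hSuniv, ?_⟩
  -- x = vpt d S
  have hval : ∀ i, x i = (if i ∈ S then 1 else 0) + x j0 := by
    intro i
    by_cases hi : i ∈ S
    · simp only [hS, mem_filter, mem_univ, true_and] at hi
      rw [hi, if_pos]
      · linarith
      · simpa [hS] using hi
    · rcases hdich i with h | h
      · exact absurd (by simp [hS, h]) hi
      · rw [h, if_neg hi]; ring
  have hsum2 : (∑ i, ((if i ∈ S then (1:ℝ) else 0) + x j0)) = 0 :=
    (Finset.sum_congr rfl fun i _ => (hval i).symm).trans hxC.2
  rw [Finset.sum_add_distrib, Finset.sum_boole, Finset.sum_const] at hsum2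
  simp only [Finset.filter_mem_eq_inter, univ_inter, card_univ, Fintype.card_fin,
    nsmul_eq_mul] at hsum2
  have hj0val : x j0 = -(S.card : ℝ) / (d + 1) := by
    have hd1 : (0:ℝ) < (d:ℝ) + 1 := by positivity
    push_cast at hsum2
    field_simp
    linarith
  funext i
  rw [hval i, hj0val, vpt]
  ring

lemma extreme_card (hd : 1 ≤ d) :
    (Set.extremePoints ℝ (C d)).ncard = 2 ^ (d + 1) - 2 := by
  classical
  have hset : Set.extremePoints ℝ (C d)
      = vpt d '' {S : Finset (Fin (d + 1)) | S.Nonempty ∧ S ≠ univ} := by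
    ext x
    constructor
    · intro hx
      obtain ⟨S, h1, h2, h3⟩ := extreme_to_vpt hd hx
      exact ⟨S, ⟨h1, h2⟩, h3.symm⟩
    · rintro ⟨S, ⟨h1, h2⟩, rfl⟩
      exact vpt_extreme S h1 h2
  rw [hset]
  have hinj : Set.InjOn (vpt d) {S : Finset (Fin (d + 1)) | S.Nonempty ∧ S ≠ univ} := by
    rintro S ⟨hS1, hS2⟩ T ⟨hT1, hT2⟩ h
    have hpos : ∀ (U : Finset (Fin (d+1))), U.Nonempty → U ≠ univ →
        ∀ i, i ∈ U ↔ 0 < vpt d U i := by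
      intro U hU1 hU2 i
      have hcard1 : 1 ≤ U.card := Finset.card_pos.2 hU1
      have hcard2 : U.card < d + 1 := by
        have := Finset.card_lt_card (Finset.lt_iff_ssubset.1
          (lt_of_le_of_ne (Finset.le_iff_subset.2 (Finset.subset_univ U)) hU2))
        simpa using this
      have h1 : (U.card : ℝ) / (d + 1) < 1 := by
        rw [div_lt_one (by positivity)]
        exact_mod_cast hcard2
      have h2 : 0 < (U.card : ℝ) / (d + 1) := by positivity
      constructor
      · intro hi; simp only [vpt, if_pos hi]; linarith
      · intro hpos; by_contra hi
        simp only [vpt, if_neg hi] at hpos; linarith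
    ext i
    rw [hpos S hS1 hS2 i, hpos T hT1 hT2 i, h]
  rw [Set.ncard_image_of_injOn hinj]
  have : {S : Finset (Fin (d + 1)) | S.Nonempty ∧ S ≠ univ}
      = ↑((univ : Finset (Finset (Fin (d + 1)))).filter fun S => S.Nonempty ∧ S ≠ univ) := by
    ext S; simp
  rw [this, Set.ncard_coe_finset]
  have hcompl : (univ : Finset (Finset (Fin (d + 1)))).filter
      (fun S => ¬(S.Nonempty ∧ S ≠ univ)) = {∅, univ} := by
    ext S
    simp only [mem_filter, mem_univ, true_and, mem_insert, mem_singleton,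
      Finset.nonempty_iff_ne_empty]
    tauto
  have htotal := Finset.card_filter_add_card_filter_not
    (s := (univ : Finset (Finset (Fin (d + 1)))))
    (p := fun S => S.Nonempty ∧ S ≠ univ)
  rw [hcompl] at htotal
  have hcard2 : ({∅, univ} : Finset (Finset (Fin (d + 1)))).card = 2 := by
    rw [Finset.card_insert_of_notMem, Finset.card_singleton]
    simp only [mem_singleton]
    intro h
    exact (Finset.univ_nonempty (α := Fin (d+1))).ne_empty h.symm
  rw [hcard2, Finset.card_univ, Fintype.card_finset, Fintype.card_fin] at htotal
  omega

def Fface (d : ℕ) (i j : Fin (d + 1)) : Set (Fin (d + 1) → ℝ) :=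
  {x | x ∈ C d ∧ x i - x j = 1}

noncomputable def zpt (d : ℕ) (i j : Fin (d + 1)) : Fin (d + 1) → ℝ :=
  fun k => (if k = i then 1/2 else 0) - (if k = j then 1/2 else 0)

lemma zpt_mem {i j : Fin (d + 1)} (hij : i ≠ j) : zpt d i j ∈ Fface d i j := by
  refine ⟨⟨?_, ?_⟩, ?_⟩
  · intro k l
    simp only [zpt]
    split_ifs <;> norm_num
  · simp only [zpt, Finset.sum_sub_distrib]
    rw [Finset.sum_ite_eq' univ i (fun _ => (1:ℝ)/2),
      Finset.sum_ite_eq' univ j (fun _ => (1:ℝ)/2)]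
    simp
  · simp only [zpt, if_pos rfl, if_neg hij, if_neg (Ne.symm hij)]
    norm_num

noncomputable def phi (d : ℕ) (i j : Fin (d + 1)) :
    (Fin (d + 1) → ℝ) →ₗ[ℝ] ℝ × ℝ :=
  (∑ k, LinearMap.proj (R := ℝ) (φ := fun _ : Fin (d+1) => ℝ) k).prod
    (LinearMap.proj (R := ℝ) (φ := fun _ : Fin (d+1) => ℝ) i
      - LinearMap.proj (R := ℝ) (φ := fun _ : Fin (d+1) => ℝ) j)

lemma phi_apply (i j : Fin (d + 1)) (u : Fin (d + 1) → ℝ) :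
    phi d i j u = (∑ k, u k, u i - u j) := by
  simp [phi]

noncomputable def W (d : ℕ) (i j : Fin (d + 1)) : Submodule ℝ (Fin (d + 1) → ℝ) :=
  LinearMap.ker (phi d i j)

lemma mem_W {i j : Fin (d + 1)} {u : Fin (d + 1) → ℝ} :
    u ∈ W d i j ↔ (∑ k, u k = 0 ∧ u i = u j) := by
  simp only [W, LinearMap.mem_ker, phi_apply, Prod.mk_eq_zero, sub_eq_zero]

lemma finrank_W {i j : Fin (d + 1)} (hij : i ≠ j) :
    finrank ℝ (W d i j) = d - 1 := by
  have hsurj : Function.Surjective (phi d i j) := by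
    rintro ⟨a, b⟩
    refine ⟨(fun _ => a / (d+1) : Fin (d+1) → ℝ) + b • zpt d i j, ?_⟩
    have hz : zpt d i j ∈ Fface d i j := zpt_mem hij
    rw [phi_apply]
    have h1 : ∑ k, ((fun _ => a / (d+1) : Fin (d+1) → ℝ) + b • zpt d i j) k
        = a + b * ∑ k, zpt d i j k := by
      simp only [Pi.add_apply, Pi.smul_apply, smul_eq_mul, Finset.sum_add_distrib,
        ← Finset.mul_sum, Finset.sum_const, card_univ, Fintype.card_fin, nsmul_eq_mul]
      congr 1
      field_simp
      push_cast; ring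
    rw [h1, hz.1.2]
    have h2 : zpt d i j i - zpt d i j j = 1 := hz.2
    simp only [Pi.add_apply, Pi.smul_apply, smul_eq_mul]
    have : a / (↑d + 1) + b * zpt d i j i - (a / (↑d + 1) + b * zpt d i j j)
        = b * (zpt d i j i - zpt d i j j) := by ring
    rw [this, h2]
    norm_num
  have hrank := LinearMap.finrank_range_add_finrank_ker (phi d i j)
  rw [LinearMap.range_eq_top.2 hsurj] at hrank
  have h1 : finrank ℝ (⊤ : Submodule ℝ (ℝ × ℝ)) = 2 := by
    rw [finrank_top]; simp
  have h2 : finrank ℝ (Fin (d+1) → ℝ) = d + 1 := by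
    simp [Module.finrank_fin_fun]
  rw [h1, h2] at hrank
  have : finrank ℝ (W d i j) = d - 1 := by
    unfold W; omega
  exact this

noncomputable def wk (d : ℕ) (i j k : Fin (d + 1)) : Fin (d + 1) → ℝ :=
  fun l => (if l = k then 1 else 0) - (if l = i then 1/2 else 0) - (if l = j then 1/2 else 0)

noncomputable def ppt (d : ℕ) (i j k : Fin (d + 1)) : Fin (d + 1) → ℝ :=
  fun l => if l = i then 3/8 else if l = j then -(5/8) else if l = k then 1/4 else 0

lemma ppt_mem {i j k : Fin (d + 1)} (hij : i ≠ j) (hki : k ≠ i) (hkj : k ≠ j) :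
    ppt d i j k ∈ Fface d i j := by
  have hbound : ∀ l, -(5/8 : ℝ) ≤ ppt d i j k l ∧ ppt d i j k l ≤ 3/8 := by
    intro l
    simp only [ppt]
    split_ifs <;> norm_num
  refine ⟨⟨?_, ?_⟩, ?_⟩
  · intro l m
    have h1 := hbound l
    have h2 := hbound m
    linarith [h1.1, h1.2, h2.1, h2.2]
  · have hsplit : ppt d i j k = fun l =>
        (if l = i then (3/8 : ℝ) else 0) + (if l = j then -(5/8 : ℝ) else 0)
          + (if l = k then (1/4 : ℝ) else 0) := by
      funext l
      rcases eq_or_ne l i with rfl | hli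
      · simp [ppt, hij, Ne.symm hki]
      · rcases eq_or_ne l j with rfl | hlj
        · simp [ppt, hli, Ne.symm hkj]
        · rcases eq_or_ne l k with rfl | hlk
          · simp [ppt, hli, hlj]
          · simp [ppt, hli, hlj, hlk]
    rw [hsplit]
    rw [Finset.sum_add_distrib, Finset.sum_add_distrib,
      Finset.sum_ite_eq' univ i (fun _ => (3/8 : ℝ)),
      Finset.sum_ite_eq' univ j (fun _ => -(5/8 : ℝ)),
      Finset.sum_ite_eq' univ k (fun _ => (1/4 : ℝ))]
    simp only [mem_univ, if_pos]
    norm_num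
  · show ppt d i j k i - ppt d i j k j = 1
    simp only [ppt, if_pos rfl, if_neg (Ne.symm hij)]
    norm_num

lemma wk_eq {i j k : Fin (d + 1)} (hij : i ≠ j) (hki : k ≠ i) (hkj : k ≠ j) :
    wk d i j k = (4 : ℝ) • (ppt d i j k - zpt d i j) := by
  funext l
  simp only [wk, ppt, zpt, Pi.smul_apply, Pi.sub_apply, smul_eq_mul]
  rcases eq_or_ne l i with rfl | hli
  · simp [Ne.symm hki, hij]
    try norm_num
  · rcases eq_or_ne l j with rfl | hlj
    · simp [Ne.symm hkj, hli]
      try norm_num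
    · rcases eq_or_ne l k with rfl | hlk
      · simp [hli, hlj]
        try norm_num
      · simp [hli, hlj, hlk]

lemma wk_mem_vectorSpan {i j k : Fin (d + 1)} (hij : i ≠ j) (hki : k ≠ i) (hkj : k ≠ j) :
    wk d i j k ∈ vectorSpan ℝ (Fface d i j) := by
  rw [wk_eq hij hki hkj]
  exact Submodule.smul_mem _ _ (vsub_mem_vectorSpan ℝ (ppt_mem hij hki hkj) (zpt_mem hij))

lemma decomp {i j : Fin (d + 1)} (hij : i ≠ j) {u : Fin (d + 1) → ℝ}
    (hu : u ∈ W d i j) :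
    u = ∑ k ∈ univ \ {i, j}, u k • wk d i j k := by
  classical
  obtain ⟨hsum, huij⟩ := mem_W.1 hu
  have hT : ∑ k ∈ univ \ {i, j}, u k = -(u i) - u j := by
    have hsub : ({i, j} : Finset (Fin (d+1))) ⊆ univ := subset_univ _
    have := Finset.sum_sdiff (f := u) hsub
    rw [Finset.sum_pair hij] at this
    linarith [this.symm ▸ hsum, hsum]
  funext l
  have happ : (∑ k ∈ univ \ {i, j}, u k • wk d i j k) l
      = ∑ k ∈ univ \ {i, j}, u k * wk d i j k l := by
    rw [Finset.sum_apply]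
    simp
  rw [happ]
  have hterm : ∀ k, u k * wk d i j k l
      = (if l = k then u k else 0) - (if l = i then u k * (1/2) else 0)
        - (if l = j then u k * (1/2) else 0) := by
    intro k
    simp only [wk]
    split_ifs <;> ring
  rw [Finset.sum_congr rfl fun k _ => hterm k]
  rw [Finset.sum_sub_distrib, Finset.sum_sub_distrib]
  rcases eq_or_ne l i with rfl | hli
  · have h1 : ∑ k ∈ univ \ {l, j}, (if l = k then u k else 0) = 0 := by
      apply Finset.sum_eq_zero
      intro k hk
      simp only [mem_sdiff, mem_insert, mem_singleton] at hk
      rw [if_neg]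
      intro h; exact hk.2 (Or.inl h.symm)
    rw [h1]
    simp only [eq_self_iff_true, if_true, if_neg hij, Finset.sum_const_zero,
      ← Finset.sum_mul, hT]
    linarith [huij]
  · rcases eq_or_ne l j with rfl | hlj
    · have h1 : ∑ k ∈ univ \ {i, l}, (if l = k then u k else 0) = 0 := by
        apply Finset.sum_eq_zero
        intro k hk
        simp only [mem_sdiff, mem_insert, mem_singleton] at hk
        rw [if_neg]
        intro h; exact hk.2 (Or.inr h.symm)
      rw [h1]
      simp only [if_neg hli, eq_self_iff_true, if_true, Finset.sum_const_zero,
        ← Finset.sum_mul, hT]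
      linarith [huij]
    · have hl : l ∈ univ \ ({i, j} : Finset (Fin (d+1))) := by
        simp [hli, hlj]
      rw [Finset.sum_ite_eq (univ \ {i, j}) l u, if_pos hl]
      simp only [if_neg hli, if_neg hlj, Finset.sum_const_zero]
      ring

lemma vectorSpan_Fface {i j : Fin (d + 1)} (hij : i ≠ j) :
    vectorSpan ℝ (Fface d i j) = W d i j := by
  apply le_antisymm
  · rw [vectorSpan_def, Submodule.span_le]
    rintro v hv
    rw [Set.mem_vsub] at hv
    obtain ⟨a, ha, b, hb, rfl⟩ := hv
    rw [SetLike.mem_coe, mem_W]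
    constructor
    · have : ∑ k, (a - b) k = ∑ k, a k - ∑ k, b k := by
        simp [Finset.sum_sub_distrib]
      rw [show a -ᵥ b = a - b from rfl, this, ha.1.2, hb.1.2]
      ring
    · have h1 := ha.2
      have h2 := hb.2
      show (a - b) i = (a - b) j
      simp only [Pi.sub_apply]
      linarith
  · intro u hu
    rw [decomp hij hu]
    apply Submodule.sum_mem
    intro k hk
    simp only [mem_sdiff, mem_insert, mem_singleton, not_or] at hk
    exact Submodule.smul_mem _ _ (wk_mem_vectorSpan hij hk.2.1 hk.2.2)

lemma Fface_exposed {i j : Fin (d + 1)} (hij : i ≠ j) :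
    IsExposed ℝ (C d) (Fface d i j) := by
  intro _
  refine ⟨ContinuousLinearMap.proj (R := ℝ) (φ := fun _ : Fin (d+1) => ℝ) i
    - ContinuousLinearMap.proj (R := ℝ) (φ := fun _ : Fin (d+1) => ℝ) j, ?_⟩
  ext x
  simp only [Fface, Set.mem_setOf_eq, ContinuousLinearMap.sub_apply,
    ContinuousLinearMap.proj_apply]
  constructor
  · rintro ⟨hx, hx1⟩
    exact ⟨hx, fun y hy => by rw [hx1]; exact hy.1 i j⟩
  · rintro ⟨hx, hmax⟩
    refine ⟨hx, ?_⟩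
    have h1 := hmax _ (zpt_mem hij).1
    have h2 : zpt d i j i - zpt d i j j = 1 := (zpt_mem hij).2
    have h3 := hx.1 i j
    linarith

lemma facet_eq (hd : 1 ≤ d) {F : Set (Fin (d+1) → ℝ)} (hne : F.Nonempty)
    (hneq : F ≠ C d) (hexp : IsExposed ℝ (C d) F)
    (hrank : finrank ℝ ↥(vectorSpan ℝ F) = d - 1) :
    ∃ i j, i ≠ j ∧ F = Fface d i j := by
  classical
  obtain ⟨l, hl⟩ := hexp hne
  have hFC : F ⊆ C d := by rw [hl]; exact fun x hx => hx.1
  have hFmax : ∀ x ∈ F, ∀ y ∈ C d, l y ≤ l x := by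
    intro x hx
    rw [hl] at hx
    exact hx.2
  have hstep1 : ∀ x ∈ F, ∃ i j, x i - x j = 1 := by
    intro x hxF
    by_contra hc
    push_neg at hc
    apply hneq
    refine Set.Subset.antisymm hFC ?_
    intro c hcC
    have hx : x ∈ C d := hFC hxF
    have hsum : ∑ k, (c - x) k = 0 := by
      rw [show (fun k => (c - x) k) = fun k => c k - x k from rfl]
      rw [Finset.sum_sub_distrib, hcC.2, hx.2]
      ring
    obtain ⟨ε, hε, hp, hm⟩ := perturb hx hsum (fun i j h => absurd h (hc i j))
    have h1 := hFmax x hxF _ hp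
    have h2 := hFmax x hxF _ hm
    have e1 : l (x + ε • (c - x)) = l x + ε * l (c - x) := by
      rw [map_add, map_smul]; rfl
    have e2 : l (x - ε • (c - x)) = l x - ε * l (c - x) := by
      rw [map_sub, map_smul]; rfl
    rw [e1] at h1
    rw [e2] at h2
    have hlcx : l (c - x) = 0 := by nlinarith
    have hlc : l c = l x := by
      rw [map_sub] at hlcx; linarith
    rw [hl]
    exact ⟨hcC, fun y hy => by rw [hlc]; exact hFmax x hxF y hy⟩
  have hFconvex : Convex ℝ F := hexp.convex convex_C
  have hstep2 : ∃ i j, i ≠ j ∧ ∀ x ∈ F, x i - x j = 1 := by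
    by_contra hc
    push_neg at hc
    have hw : ∀ p : {p : Fin (d+1) × Fin (d+1) // p.1 ≠ p.2},
        ∃ x ∈ F, x p.1.1 - x p.1.2 ≠ 1 := fun p => hc p.1.1 p.1.2 p.2
    choose w hw1 hw2 using hw
    have hTne : Nonempty {p : Fin (d+1) × Fin (d+1) // p.1 ≠ p.2} := by
      refine ⟨⟨(0, 1), ?_⟩⟩
      have h2 : ((1 : Fin (d+1)) : ℕ) = 1 % (d+1) := Fin.val_one' (d+1)
      simp only [Ne, Fin.ext_iff, h2, Fin.val_zero]
      rw [Nat.mod_eq_of_lt (by omega)]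
      exact zero_ne_one
    set N : ℕ := Fintype.card {p : Fin (d+1) × Fin (d+1) // p.1 ≠ p.2} with hN
    have hNpos : 0 < N := Fintype.card_pos
    set y : Fin (d+1) → ℝ := ∑ p : {p : Fin (d+1) × Fin (d+1) // p.1 ≠ p.2}, ((N : ℝ)⁻¹) • w p with hy
    have hyF : y ∈ F := by
      apply hFconvex.sum_mem (fun _ _ => by positivity)
      · rw [Finset.sum_const, card_univ, ← hN, nsmul_eq_mul]
        field_simp
      · exact fun p _ => hw1 p
    obtain ⟨i, j, hij1⟩ := hstep1 y hyF
    have hijne : i ≠ j := by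
      intro h
      rw [h] at hij1
      simp at hij1
    have hyval : ∀ k, y k = ∑ p : {p : Fin (d+1) × Fin (d+1) // p.1 ≠ p.2}, (N : ℝ)⁻¹ * w p k := by
      intro k
      rw [hy, Finset.sum_apply]
      simp
    have hlt : y i - y j < 1 := by
      rw [hyval i, hyval j, ← Finset.sum_sub_distrib]
      have hbig : ∑ p : {p : Fin (d+1) × Fin (d+1) // p.1 ≠ p.2}, ((N : ℝ)⁻¹ * w p i - (N : ℝ)⁻¹ * w p j)
          < ∑ _p : {p : Fin (d+1) × Fin (d+1) // p.1 ≠ p.2}, ((N : ℝ)⁻¹ * 1) := by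
        apply Finset.sum_lt_sum
        · intro p _
          have h0 := (hFC (hw1 p)).1 i j
          have hNinv : (0:ℝ) < (N : ℝ)⁻¹ := by positivity
          nlinarith [mul_le_mul_of_nonneg_left h0 hNinv.le]
        · refine ⟨⟨(i, j), hijne⟩, mem_univ _, ?_⟩
          have h1 := hw2 ⟨(i, j), hijne⟩
          have h2 := (hFC (hw1 ⟨(i, j), hijne⟩)).1 i j
          have h3 : w ⟨(i, j), hijne⟩ i - w ⟨(i, j), hijne⟩ j < 1 :=
            lt_of_le_of_ne h2 h1
          have hNinv : (0:ℝ) < (N : ℝ)⁻¹ := by positivity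
          nlinarith [mul_lt_mul_of_pos_left h3 hNinv]
      have hsumone : ∑ _p : {p : Fin (d+1) × Fin (d+1) // p.1 ≠ p.2}, ((N : ℝ)⁻¹ * 1) = 1 := by
        rw [Finset.sum_const, card_univ, ← hN, nsmul_eq_mul]
        field_simp
      linarith [hbig.trans_eq hsumone]
    linarith [hij1, hlt]
  obtain ⟨i, j, hij, hFij⟩ := hstep2
  refine ⟨i, j, hij, ?_⟩
  have hsubset : F ⊆ Fface d i j := fun x hx => ⟨hFC hx, hFij x hx⟩
  have hWF : vectorSpan ℝ F = W d i j := by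
    apply Submodule.eq_of_le_of_finrank_eq
    · calc vectorSpan ℝ F ≤ vectorSpan ℝ (Fface d i j) := vectorSpan_mono ℝ hsubset
        _ = W d i j := vectorSpan_Fface hij
    · rw [hrank, finrank_W hij]
  have hker : vectorSpan ℝ F ≤ LinearMap.ker (l : (Fin (d+1) → ℝ) →ₗ[ℝ] ℝ) := by
    rw [vectorSpan_def, Submodule.span_le]
    rintro v hv
    rw [Set.mem_vsub] at hv
    obtain ⟨a, ha, b, hb, rfl⟩ := hv
    rw [SetLike.mem_coe, LinearMap.mem_ker]
    have h1 := hFmax a ha b (hFC hb)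
    have h2 := hFmax b hb a (hFC ha)
    have : l a = l b := le_antisymm h2 h1
    show l (a - b) = 0
    rw [map_sub, this]
    ring
  obtain ⟨q, hq⟩ := hne
  refine Set.Subset.antisymm hsubset ?_
  intro p hp
  have hpq : p - q ∈ vectorSpan ℝ F := by
    rw [hWF, mem_W]
    have hqf : q ∈ Fface d i j := hsubset hq
    constructor
    · rw [show (fun k => (p - q) k) = fun k => p k - q k from rfl]
      rw [Finset.sum_sub_distrib, hp.1.2, hqf.1.2]
      ring
    · have h1 := hp.2
      have h2 := hqf.2
      show p i - q i = p j - q j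
      linarith
  have hlpq : l (p - q) = 0 := hker hpq
  have hlp : l p = l q := by
    rw [map_sub] at hlpq; linarith
  rw [hl]
  exact ⟨hp.1, fun y hy => by rw [hlp]; exact hFmax q hq y hy⟩

lemma zpt_pair {i j k l : Fin (d+1)} (hij : i ≠ j)
    (h : zpt d i j k - zpt d i j l = 1) : k = i ∧ l = j := by
  have hb : ∀ m, -(1/2 : ℝ) ≤ zpt d i j m ∧ zpt d i j m ≤ 1/2 := by
    intro m
    simp only [zpt]
    split_ifs <;> norm_num
  constructor
  · by_contra hki
    have h1 : zpt d i j k ≤ 0 := by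
      simp only [zpt, if_neg hki]
      split_ifs <;> norm_num
    have h2 := (hb l).1
    linarith
  · by_contra hlj
    have h1 : 0 ≤ zpt d i j l := by
      simp only [zpt, if_neg hlj]
      split_ifs <;> norm_num
    have h2 := (hb k).2
    linarith

lemma facet_card (hd : 1 ≤ d) :
    {F : Set (Fin (d+1) → ℝ) | F.Nonempty ∧ F ≠ C d ∧ IsExposed ℝ (C d) F ∧
      finrank ℝ ↥(vectorSpan ℝ F) = d - 1}.ncard = d * (d + 1) := by
  classical
  have hset : {F : Set (Fin (d+1) → ℝ) | F.Nonempty ∧ F ≠ C d ∧ IsExposed ℝ (C d) F ∧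
      finrank ℝ ↥(vectorSpan ℝ F) = d - 1}
      = (fun p : Fin (d+1) × Fin (d+1) => Fface d p.1 p.2) '' {p | p.1 ≠ p.2} := by
    ext F
    constructor
    · rintro ⟨h1, h2, h3, h4⟩
      obtain ⟨i, j, hij, rfl⟩ := facet_eq hd h1 h2 h3 h4
      exact ⟨(i, j), hij, rfl⟩
    · rintro ⟨⟨i, j⟩, hij, rfl⟩
      have hij' : i ≠ j := hij
      refine ⟨⟨zpt d i j, zpt_mem hij'⟩, ?_, Fface_exposed hij', ?_⟩
      · intro h
        have h0 : (0 : Fin (d+1) → ℝ) ∈ C d := ⟨fun i j => by norm_num, by simp⟩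
        have h' : Fface d i j = C d := h
        have h0' : (0 : Fin (d+1) → ℝ) ∈ Fface d i j := h' ▸ h0
        have := h0'.2
        norm_num at this
      · rw [vectorSpan_Fface hij', finrank_W hij']
  rw [hset]
  have hinj : Set.InjOn (fun p : Fin (d+1) × Fin (d+1) => Fface d p.1 p.2)
      {p | p.1 ≠ p.2} := by
    rintro ⟨i, j⟩ hij ⟨k, l⟩ hkl h
    have hij' : i ≠ j := hij
    have h' : Fface d i j = Fface d k l := h
    have hz : zpt d i j ∈ Fface d k l := h' ▸ zpt_mem hij'
    obtain ⟨hk, hl⟩ := zpt_pair hij' hz.2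
    simp only [Prod.mk.injEq]
    exact ⟨hk.symm, hl.symm⟩
  rw [Set.ncard_image_of_injOn hinj]
  have hcoe : {p : Fin (d+1) × Fin (d+1) | p.1 ≠ p.2}
      = ↑(univ.filter fun p : Fin (d+1) × Fin (d+1) => p.1 ≠ p.2) := by
    ext p; simp
  rw [hcoe, Set.ncard_coe_finset]
  have htotal := Finset.card_filter_add_card_filter_not
    (s := (univ : Finset (Fin (d+1) × Fin (d+1))))
    (p := fun p => p.1 ≠ p.2)
  have hdiag : (univ : Finset (Fin (d+1) × Fin (d+1))).filter (fun p => ¬ p.1 ≠ p.2)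
      = Finset.diag univ := by
    ext p
    simp [Finset.mem_diag, not_not]
  rw [hdiag, Finset.diag_card, Finset.card_univ, Finset.card_univ, Fintype.card_prod,
    Fintype.card_fin] at htotal
  have harith : (d+1) * (d+1) = d * (d+1) + (d+1) := by ring
  omega

end TropAux

/-- The tropical unit ball (realized in the hyperplane `∑ xᵢ = 0` of `ℝ^{d+1}`,
a model of the tropical torus) has exactly `2^{d+1} - 2` vertices (extreme
points) and exactly `d(d+1)` facets, i.e. nonempty proper exposed faces of
dimension `d - 1`. -/
theorem tropBall_facets_vertices_count {d : ℕ} (hd : 1 ≤ d) :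
    (Set.extremePoints ℝ
        {x : Fin (d + 1) → ℝ | tropDist x 0 ≤ 1 ∧ ∑ i, x i = 0}).ncard =
      2 ^ (d + 1) - 2 ∧
    {F : Set (Fin (d + 1) → ℝ) | F.Nonempty ∧
        F ≠ {x : Fin (d + 1) → ℝ | tropDist x 0 ≤ 1 ∧ ∑ i, x i = 0} ∧
        IsExposed ℝ {x : Fin (d + 1) → ℝ | tropDist x 0 ≤ 1 ∧ ∑ i, x i = 0} F ∧
        Module.finrank ℝ ↥(vectorSpan ℝ F) = d - 1}.ncard = d * (d + 1) := by
  rw [TropAux.C_eq d]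
  exact ⟨TropAux.extreme_card hd, TropAux.facet_card hd⟩
end

section
/- Let K be a polytope in R^d containing the origin in its interior, with associated Minkowski norm dist. Two points a, b in R^d are in weak general position (no facet of K is parallel to b-a) if and only if the bisector bis(a,b) = {x : dist(a,x) = dist(b,x)} contains no subset that is open in R^d (i.e., bis(a,b) has empty interior). -/
open Filter Topology Finset

section Aux

lemma coneCara {α : Type*} {E : Type*} [AddCommGroup E] [Module ℝ E]
    (s : Finset α) (v : α → E) :
    ∀ (lam : α → ℝ), (∀ p ∈ s, 0 ≤ lam p) →
    ∃ mu : α → ℝ, (∀ p ∈ s, 0 ≤ mu p) ∧ (∑ p ∈ s, mu p • v p = ∑ p ∈ s, lam p • v p) ∧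
      ∀ g : α → ℝ, (∀ p ∈ s, mu p = 0 → g p = 0) → (∑ p ∈ s, g p • v p) = 0 →
        ∀ p ∈ s, g p = 0 := by
  classical
  suffices H : ∀ (n : ℕ) (lam : α → ℝ), (s.filter fun p => lam p ≠ 0).card ≤ n →
      (∀ p ∈ s, 0 ≤ lam p) →
      ∃ mu : α → ℝ, (∀ p ∈ s, 0 ≤ mu p) ∧ (∑ p ∈ s, mu p • v p = ∑ p ∈ s, lam p • v p) ∧
      ∀ g : α → ℝ, (∀ p ∈ s, mu p = 0 → g p = 0) → (∑ p ∈ s, g p • v p) = 0 →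
        ∀ p ∈ s, g p = 0 by
    intro lam hlam
    exact H _ lam le_rfl hlam
  intro n
  induction n with
  | zero =>
    intro lam hcard hlam
    refine ⟨lam, hlam, rfl, fun g hg _ p hp => hg p hp ?_⟩
    by_contra hne
    have : p ∈ s.filter fun p => lam p ≠ 0 := mem_filter.2 ⟨hp, hne⟩
    have := card_pos.2 ⟨p, this⟩
    omega
  | succ n ih =>
    intro lam hcard hlam
    by_cases hind : ∀ g : α → ℝ, (∀ p ∈ s, lam p = 0 → g p = 0) → (∑ p ∈ s, g p • v p) = 0 →
        ∀ p ∈ s, g p = 0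
    · exact ⟨lam, hlam, rfl, hind⟩
    · push_neg at hind
      obtain ⟨g, hgsupp, hgsum, p0, hp0s, hgp0⟩ := hind
      -- wlog: get g with a positive value
      obtain ⟨g, hgsupp, hgsum, p0, hp0s, hgp0⟩ :
          ∃ g : α → ℝ, (∀ p ∈ s, lam p = 0 → g p = 0) ∧ (∑ p ∈ s, g p • v p) = 0 ∧
            ∃ p0 ∈ s, 0 < g p0 := by
        rcases lt_or_gt_of_ne hgp0 with hneg | hpos
        · refine ⟨-g, fun p hp h0 => by simp [hgsupp p hp h0], ?_, p0, hp0s, by simpa using hneg⟩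
          simp only [Pi.neg_apply, neg_smul, Finset.sum_neg_distrib, hgsum, neg_zero]
        · exact ⟨g, hgsupp, hgsum, p0, hp0s, hpos⟩
      set F := s.filter fun p => 0 < g p with hF
      have hFne : F.Nonempty := ⟨p0, mem_filter.2 ⟨hp0s, hgp0⟩⟩
      obtain ⟨p1, hp1F, hp1⟩ := F.exists_mem_eq_inf' hFne (fun p => lam p / g p)
      set r := F.inf' hFne (fun p => lam p / g p) with hrdef
      have hp1s : p1 ∈ s := (mem_filter.1 hp1F).1
      have hgp1 : 0 < g p1 := (mem_filter.1 hp1F).2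
      have hr0 : 0 ≤ r := hp1 ▸ div_nonneg (hlam p1 hp1s) hgp1.le
      set lam' := fun p => lam p - r * g p with hlam'def
      have h1 : ∀ p ∈ s, 0 ≤ lam' p := by
        intro p hp
        rcases le_or_gt (g p) 0 with hg0 | hg0
        · have : r * g p ≤ 0 := mul_nonpos_of_nonneg_of_nonpos hr0 hg0
          simp only [hlam'def]; linarith [hlam p hp]
        · have hpF : p ∈ F := mem_filter.2 ⟨hp, hg0⟩
          have := F.inf'_le (fun p => lam p / g p) hpF
          rw [← hrdef] at this
          have := (le_div_iff₀ hg0).1 this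
          simp only [hlam'def]; linarith
      have h2 : ∑ p ∈ s, lam' p • v p = ∑ p ∈ s, lam p • v p := by
        simp only [hlam'def, sub_smul, Finset.sum_sub_distrib, mul_smul]
        rw [← Finset.smul_sum, hgsum, smul_zero, sub_zero]
      have hlam'p1 : lam' p1 = 0 := by
        simp only [hlam'def]
        rw [hp1, div_mul_cancel₀ _ hgp1.ne']
        ring
      have h3 : (s.filter fun p => lam' p ≠ 0) ⊆ (s.filter fun p => lam p ≠ 0).erase p1 := by
        intro p hp
        obtain ⟨hps, hpne⟩ := mem_filter.1 hp
        refine mem_erase.2 ⟨?_, mem_filter.2 ⟨hps, ?_⟩⟩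
        · rintro rfl; exact hpne hlam'p1
        · intro h0
          exact hpne (by simp [hlam'def, h0, hgsupp p hps h0])
      have hp1mem : p1 ∈ s.filter fun p => lam p ≠ 0 := by
        refine mem_filter.2 ⟨hp1s, fun h0 => ?_⟩
        exact hgp1.ne' (hgsupp p1 hp1s h0)
      have hcard' : (s.filter fun p => lam' p ≠ 0).card ≤ n := by
        have := card_le_card h3
        rw [card_erase_of_mem hp1mem] at this
        have hpos := card_pos.2 ⟨p1, hp1mem⟩
        omega
      obtain ⟨mu, hmu1, hmu2, hmu3⟩ := ih lam' hcard' h1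
      exact ⟨mu, hmu1, hmu2.trans h2, hmu3⟩

lemma simplexBound {α : Type*} {E : Type*} [NormedAddCommGroup E] [NormedSpace ℝ E]
    (S : Finset α) (v : α → E) :
    ∃ C : ℝ, 0 ≤ C ∧
      ((∀ g : α → ℝ, (∀ p ∉ S, g p = 0) → (∑ p ∈ S, g p • v p) = 0 → ∀ p ∈ S, g p = 0) →
        ∀ mu : α → ℝ, (∀ p ∈ S, 0 ≤ mu p) →
          ∑ p ∈ S, mu p ≤ C * ‖∑ p ∈ S, mu p • v p‖) := by
  classical
  rcases S.eq_empty_or_nonempty with rfl | hSne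
  · exact ⟨0, le_rfl, fun _ mu _ => by simp⟩
  by_cases hindep : ∀ g : α → ℝ, (∀ p ∉ S, g p = 0) → (∑ p ∈ S, g p • v p) = 0 → ∀ p ∈ S, g p = 0
  swap
  · exact ⟨0, le_rfl, fun h => absurd h hindep⟩
  -- the compact simplex in (↥S → ℝ)
  set Δ : Set (↥S → ℝ) := {w | (∀ j, 0 ≤ w j) ∧ ∑ j, w j = 1} with hΔdef
  have hΔne : Δ.Nonempty := by
    refine ⟨fun _ => (S.card : ℝ)⁻¹, fun j => by positivity, ?_⟩
    rw [Finset.sum_const, Finset.card_univ, Fintype.card_coe, nsmul_eq_mul,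
      mul_inv_cancel₀ (by exact_mod_cast Finset.card_pos.2 hSne |>.ne')]
  have hΔclosed : IsClosed Δ := by
    have h1 : IsClosed {w : ↥S → ℝ | ∀ j, 0 ≤ w j} := by
      have he : {w : ↥S → ℝ | ∀ j, 0 ≤ w j} = ⋂ j, {w | 0 ≤ w j} := by
        ext w; simp [Set.mem_iInter]
      rw [he]
      exact isClosed_iInter fun j => isClosed_le continuous_const (continuous_apply j)
    have h2 : IsClosed {w : ↥S → ℝ | ∑ j, w j = 1} := by
      have hc : Continuous fun w : ↥S → ℝ => ∑ j, w j :=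
        continuous_finset_sum _ fun j _ => continuous_apply j
      exact isClosed_eq hc continuous_const
    exact h1.inter h2
  have hΔbdd : Δ ⊆ Metric.closedBall 0 1 := by
    intro w hw
    rw [Metric.mem_closedBall, dist_zero_right]
    refine (pi_norm_le_iff_of_nonneg zero_le_one).2 fun j => ?_
    rw [Real.norm_eq_abs, abs_of_nonneg (hw.1 j)]
    calc w j ≤ ∑ i, w i := Finset.single_le_sum (fun i _ => hw.1 i) (Finset.mem_univ j)
    _ = 1 := hw.2
  have hΔcomp : IsCompact Δ :=
    (Metric.isCompact_of_isClosed_isBounded hΔclosed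
      ((Metric.isBounded_closedBall).subset hΔbdd))
  set Φ : (↥S → ℝ) → ℝ := fun w => ‖∑ j, w j • v (j : α)‖ with hΦdef
  have hΦcont : Continuous Φ := by
    apply Continuous.norm
    exact continuous_finset_sum _ fun j _ => (continuous_apply j).smul continuous_const
  obtain ⟨w0, hw0Δ, hw0min⟩ := hΔcomp.exists_isMinOn hΔne hΦcont.continuousOn
  have hc : 0 < Φ w0 := by
    rcases (norm_nonneg (∑ j, w0 j • v (j : α))).lt_or_eq with h | h
    · exact h
    exfalso
    have hsum0 : ∑ j, w0 j • v (j : α) = 0 := norm_eq_zero.1 h.symm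
    set g : α → ℝ := fun p => if h : p ∈ S then w0 ⟨p, h⟩ else 0 with hgdef
    have hgS : ∑ p ∈ S, g p • v p = ∑ j, w0 j • v (j : α) := by
      rw [← Finset.sum_coe_sort S (fun p => g p • v p)]
      exact Finset.sum_congr rfl fun j _ => by simp [hgdef, j.2]
    have := hindep g (fun p hp => by simp [hgdef, hp]) (by rw [hgS, hsum0])
    have hz : ∀ j : ↥S, w0 j = 0 := fun j => by
      have := this j j.2
      simp only [hgdef, dif_pos j.2] at this; exact this
    have := hw0Δ.2
    rw [Finset.sum_congr rfl fun j _ => hz j] at this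
    simpa using this
  refine ⟨(Φ w0)⁻¹, by positivity, fun _ mu hmu => ?_⟩
  set Λ := ∑ p ∈ S, mu p with hΛdef
  have hΛ0 : 0 ≤ Λ := Finset.sum_nonneg hmu
  rcases hΛ0.lt_or_eq with hΛpos | hΛ0'
  · set w : ↥S → ℝ := fun j => mu (j : α) / Λ with hwdef
    have hwΔ : w ∈ Δ := by
      constructor
      · exact fun j => div_nonneg (hmu _ j.2) hΛ0
      · rw [← Finset.sum_div]
        rw [Finset.sum_coe_sort S mu, ← hΛdef, div_self hΛpos.ne']
    have hmin := hw0min hwΔ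
    have hΦw : Φ w = Λ⁻¹ * ‖∑ p ∈ S, mu p • v p‖ := by
      simp only [hΦdef, hwdef, div_eq_inv_mul, mul_smul, ← Finset.smul_sum]
      rw [norm_smul, Real.norm_eq_abs, abs_of_nonneg (inv_nonneg.2 hΛ0)]
      congr 2
      exact Finset.sum_coe_sort S (fun p => mu p • v p)
    have h1 : Φ w0 ≤ Λ⁻¹ * ‖∑ p ∈ S, mu p • v p‖ := by rw [← hΦw]; exact hmin
    calc Λ = Φ w0 * Λ * (Φ w0)⁻¹ := by field_simp
    _ ≤ (Λ⁻¹ * ‖∑ p ∈ S, mu p • v p‖) * Λ * (Φ w0)⁻¹ := by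
        have : Φ w0 * Λ ≤ (Λ⁻¹ * ‖∑ p ∈ S, mu p • v p‖) * Λ :=
          mul_le_mul_of_nonneg_right h1 hΛ0
        exact mul_le_mul_of_nonneg_right this (by positivity)
    _ = (Φ w0)⁻¹ * ‖∑ p ∈ S, mu p • v p‖ := by field_simp
  · rw [← hΛ0']
    positivity

lemma coneSmall {α : Type*} {E : Type*} [NormedAddCommGroup E] [NormedSpace ℝ E]
    (s : Finset α) (v : α → E) :
    ∃ ε : ℝ, 0 < ε ∧ ∀ lam : α → ℝ, (∀ p ∈ s, 0 ≤ lam p) →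
      ‖∑ p ∈ s, lam p • v p‖ ≤ ε →
      ∃ mu : α → ℝ, (∀ p ∈ s, 0 ≤ mu p) ∧ ∑ p ∈ s, mu p ≤ 1 ∧
        ∑ p ∈ s, mu p • v p = ∑ p ∈ s, lam p • v p := by
  classical
  choose C hC0 hC using fun S : Finset α => simplexBound S v
  set Ct := ∑ S ∈ s.powerset, C S with hCt
  have hCt0 : 0 ≤ Ct := Finset.sum_nonneg fun S _ => hC0 S
  refine ⟨(Ct + 1)⁻¹, by positivity, fun lam hlam hsmall => ?_⟩
  obtain ⟨mu, hmu0, hmusum, hmuind⟩ := coneCara s v lam hlam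
  set S := s.filter fun p => mu p ≠ 0 with hSdef
  have hSsub : S ⊆ s := Finset.filter_subset _ _
  have hind : ∀ g : α → ℝ, (∀ p ∉ S, g p = 0) → (∑ p ∈ S, g p • v p) = 0 →
      ∀ p ∈ S, g p = 0 := by
    intro g hg hsum p hp
    have hsum' : ∑ p ∈ s, g p • v p = 0 := by
      rw [← Finset.sum_subset hSsub (fun q _ hqS => by rw [hg q hqS, zero_smul])]
      exact hsum
    exact hmuind g (fun q hq h0 =>
      hg q (fun hqS => (Finset.mem_filter.1 hqS).2 h0)) hsum' p (hSsub hp)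
  have hb := hC S hind mu (fun p hp => hmu0 p (hSsub hp))
  have hsum_eq : ∑ p ∈ S, mu p • v p = ∑ p ∈ s, mu p • v p :=
    Finset.sum_subset hSsub (fun q hq hqS => by
      have h0 : mu q = 0 := by
        by_contra h; exact hqS (Finset.mem_filter.2 ⟨hq, h⟩)
      rw [h0, zero_smul])
  have hsum_eq2 : ∑ p ∈ S, mu p = ∑ p ∈ s, mu p :=
    Finset.sum_subset hSsub (fun q hq hqS => by
      by_contra h; exact hqS (Finset.mem_filter.2 ⟨hq, h⟩))
  refine ⟨mu, hmu0, ?_, hmusum⟩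
  have hCS : C S ≤ Ct := Finset.single_le_sum (fun T _ => hC0 T) (Finset.mem_powerset.2 hSsub)
  have hfin : Ct * (Ct + 1)⁻¹ ≤ 1 := by
    rw [← div_eq_mul_inv]
    exact (div_le_one (by positivity)).2 (by linarith)
  calc ∑ p ∈ s, mu p = ∑ p ∈ S, mu p := hsum_eq2.symm
  _ ≤ C S * ‖∑ p ∈ S, mu p • v p‖ := hb
  _ = C S * ‖∑ p ∈ s, lam p • v p‖ := by rw [hsum_eq, hmusum]
  _ ≤ Ct * (Ct + 1)⁻¹ := mul_le_mul hCS hsmall (norm_nonneg _) hCt0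
  _ ≤ 1 := hfin

lemma polytopeLocalCone {E : Type*} [NormedAddCommGroup E] [NormedSpace ℝ E]
    (s : Finset E) {m : E} (hm : m ∈ convexHull ℝ (s : Set E)) :
    ∃ ε : ℝ, 0 < ε ∧ ∀ u : E, (∃ θ : ℝ, 0 < θ ∧ m + θ • u ∈ convexHull ℝ (s : Set E)) →
      ‖u‖ ≤ ε → m + u ∈ convexHull ℝ (s : Set E) := by
  classical
  obtain ⟨ε, hε, hcone⟩ := coneSmall s (fun p => p - m)
  refine ⟨ε, hε, fun u ⟨θ, hθ, hu⟩ hnorm => ?_⟩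
  rw [Finset.convexHull_eq] at hm hu ⊢
  obtain ⟨w0, hw00, hw01, hw0m⟩ := hm
  obtain ⟨w, hw0', hw1, hwm⟩ := hu
  rw [Finset.centerMass_eq_of_sum_1 _ _ hw1] at hwm
  rw [Finset.centerMass_eq_of_sum_1 _ _ hw01] at hw0m
  simp only [id] at hwm hw0m
  have key : ∑ p ∈ s, w p • (p - m) = θ • u := by
    have : ∑ p ∈ s, w p • (p - m) = (∑ p ∈ s, w p • p) - (∑ p ∈ s, w p) • m := by
      simp only [smul_sub, Finset.sum_sub_distrib, Finset.sum_smul]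
    rw [this, hw1, hwm, one_smul]
    abel
  set lam : E → ℝ := fun p => θ⁻¹ * w p with hlam
  have hlam0 : ∀ p ∈ s, 0 ≤ lam p := fun p hp =>
    mul_nonneg (inv_nonneg.2 hθ.le) (hw0' p hp)
  have hlamsum : ∑ p ∈ s, lam p • (p - m) = u := by
    calc ∑ p ∈ s, lam p • (p - m) = θ⁻¹ • ∑ p ∈ s, w p • (p - m) := by
          rw [Finset.smul_sum]
          exact Finset.sum_congr rfl fun p _ => mul_smul _ _ _
    _ = θ⁻¹ • (θ • u) := by rw [key]
    _ = u := by rw [smul_smul, inv_mul_cancel₀ hθ.ne', one_smul]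
  have := hcone lam hlam0 (by rw [hlamsum]; exact hnorm)
  obtain ⟨mu, hmu0, hmuΛ, hmueq⟩ := this
  rw [hlamsum] at hmueq
  set Λ := ∑ p ∈ s, mu p with hΛ
  have hΛ0 : 0 ≤ Λ := Finset.sum_nonneg hmu0
  refine ⟨fun q => mu q + (1 - Λ) * w0 q, fun q hq =>
    add_nonneg (hmu0 q hq) (mul_nonneg (by linarith) (hw00 q hq)), ?_, ?_⟩
  · rw [Finset.sum_add_distrib, ← Finset.mul_sum, hw01, mul_one, ← hΛ]
    ring
  · have hsum1 : ∑ q ∈ s, (mu q + (1 - Λ) * w0 q) = 1 := by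
      rw [Finset.sum_add_distrib, ← Finset.mul_sum, hw01, mul_one, ← hΛ]; ring
    rw [Finset.centerMass_eq_of_sum_1 _ _ hsum1]
    simp only [id]
    have e1 : ∑ q ∈ s, (mu q + (1 - Λ) * w0 q) • q
        = (∑ q ∈ s, mu q • q) + (1 - Λ) • (∑ q ∈ s, w0 q • q) := by
      simp only [add_smul, Finset.sum_add_distrib, mul_smul, ← Finset.smul_sum]
    have e2 : ∑ q ∈ s, mu q • q = u + Λ • m := by
      have : ∑ q ∈ s, mu q • (q - m) = (∑ q ∈ s, mu q • q) - (∑ q ∈ s, mu q) • m := by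
        simp only [smul_sub, Finset.sum_sub_distrib, Finset.sum_smul]
      rw [this, ← hΛ] at hmueq
      have := hmueq
      abel_nf at this ⊢
      linear_combination (norm := module) this
    rw [e1, e2, hw0m]
    have : u + Λ • m + (1 - Λ) • m = m + u := by
      rw [sub_smul, one_smul]; abel
    exact this

end Aux

/-- Two points `a`, `b` are in weak general position with respect to `K` when
`v = b - a` is not parallel to any facet of `K`; equivalently (for a polytope
with nonempty interior), the boundary of `K` contains no nondegenerate segment
parallel to `v`. -/
def WeakGenPos {d : ℕ} (K : Set (Fin d → ℝ)) (v : Fin d → ℝ) : Prop :=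
  ¬ ∃ x y : Fin d → ℝ, x ≠ y ∧ segment ℝ x y ⊆ frontier K ∧ ∃ t : ℝ, y - x = t • v

private theorem bisector_fwd {d : ℕ} (K : Set (Fin d → ℝ))
    (hK : ∃ s : Finset (Fin d → ℝ), K = convexHull ℝ (s : Set (Fin d → ℝ)))
    (h0 : 0 ∈ interior K) (a b : Fin d → ℝ) (hab : a ≠ b) :
    WeakGenPos K (b - a) →
      interior {x : Fin d → ℝ | gauge K (x - a) = gauge K (x - b)} = ∅ := by
  obtain ⟨s, rfl⟩ := hK
  set K := convexHull ℝ (s : Set (Fin d → ℝ)) with hKdef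
  have hKconv : Convex ℝ K := convex_convexHull ℝ _
  have hKcomp : IsCompact K := s.finite_toSet.isCompact_convexHull (𝕜 := ℝ)
  have hnhds : K ∈ 𝓝 (0 : Fin d → ℝ) := mem_interior_iff_mem_nhds.mp h0
  have habs : Absorbent ℝ K := absorbent_nhds_zero hnhds
  have hbdd : Bornology.IsVonNBounded ℝ K :=
    NormedSpace.isVonNBounded_of_isBounded _ hKcomp.isBounded
  have hfr : ∀ z, gauge K z = 1 ↔ z ∈ frontier K := fun z =>
    gauge_eq_one_iff_mem_frontier hKconv hnhds
  have hgz : ∀ z : Fin d → ℝ, gauge K z = 0 ↔ z = 0 := fun z => gauge_eq_zero habs hbdd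
  have hpos : ∀ r : ℝ, 0 ≤ r → ∀ z, gauge K (r • z) = r * gauge K z := fun r hr z => by
    rw [gauge_smul_of_nonneg hr, smul_eq_mul]
  set v := b - a with hv
  have hvne : v ≠ 0 := sub_ne_zero.2 (Ne.symm hab)
  intro hw
  by_contra hne
  obtain ⟨x0', hx0'⟩ := Set.nonempty_iff_ne_empty.2 hne
  obtain ⟨ε0, hε0, hball⟩ := Metric.isOpen_iff.1 isOpen_interior x0' hx0'
  have hSmem : ∃ x0 : Fin d → ℝ, x0 ≠ a ∧ ∃ ε1 : ℝ, 0 < ε1 ∧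
      Metric.ball x0 ε1 ⊆ {x : Fin d → ℝ | gauge K (x - a) = gauge K (x - b)} := by
    by_cases h : x0' = a
    · set δ := ε0 / (2 * (‖v‖ + 1)) with hδ
      have hδpos : 0 < δ := by positivity
      have hδv : ‖δ • v‖ < ε0 / 2 := by
        rw [norm_smul, Real.norm_eq_abs, abs_of_pos hδpos]
        calc δ * ‖v‖ < δ * (‖v‖ + 1) := by nlinarith
        _ = ε0 / 2 := by rw [hδ]; field_simp
      refine ⟨x0' + δ • v, ?_, ε0 / 2, by positivity, ?_⟩
      · rw [h]
        intro hcon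
        have : δ • v = 0 := by
          have := congrArg (fun z => z - a) hcon
          simpa using this
        exact hvne ((smul_eq_zero.1 this).resolve_left hδpos.ne')
      · intro z hz
        have : z ∈ Metric.ball x0' ε0 := by
          rw [Metric.mem_ball] at hz ⊢
          calc dist z x0' ≤ dist z (x0' + δ • v) + dist (x0' + δ • v) x0' :=
              dist_triangle _ _ _
          _ < ε0 / 2 + ε0 / 2 := by
              apply add_lt_add hz
              rw [dist_eq_norm]
              simpa using hδv
          _ = ε0 := by ring
        exact interior_subset (hball this)
    · exact ⟨x0', h, ε0, hε0, fun z hz => interior_subset (hball hz)⟩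
  obtain ⟨x0, hx0a, ε1, hε1, hS⟩ := hSmem
  set ε' : ℝ := min (ε1 / (2 * (‖v‖ + 1))) (1/2) with hε'def
  have hε'pos : 0 < ε' := lt_min (by positivity) (by norm_num)
  have hε'half : ε' ≤ 1/2 := min_le_right _ _
  have hmem : ∀ t : ℝ, |t| ≤ ε' → x0 + t • v ∈
      {x : Fin d → ℝ | gauge K (x - a) = gauge K (x - b)} := by
    intro t ht
    apply hS
    rw [Metric.mem_ball, dist_eq_norm]
    have h1 : ‖x0 + t • v - x0‖ = |t| * ‖v‖ := by
      simp [norm_smul]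
    rw [show x0 + t • v - x0 = t • v by abel, norm_smul, Real.norm_eq_abs]
    have h2 : ε' ≤ ε1 / (2 * (‖v‖ + 1)) := min_le_left _ _
    calc |t| * ‖v‖ ≤ ε' * ‖v‖ := mul_le_mul_of_nonneg_right ht (norm_nonneg _)
    _ ≤ (ε1 / (2 * (‖v‖ + 1))) * ‖v‖ := mul_le_mul_of_nonneg_right h2 (norm_nonneg _)
    _ < ε1 := by
        rw [div_mul_eq_mul_div, div_lt_iff₀ (by positivity)]
        nlinarith [norm_nonneg v]
  set ψ : ℝ → ℝ := fun t => gauge K (x0 - a + t • v) with hψdef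
  have hψeq : ∀ t : ℝ, |t| ≤ ε' → ψ t = ψ (t - 1) := by
    intro t ht
    have := hmem t ht
    rw [Set.mem_setOf_eq] at this
    have e1 : x0 + t • v - a = x0 - a + t • v := by abel
    have e2 : x0 + t • v - b = x0 - a + (t - 1) • v := by
      have hb : b = a + v := by rw [hv]; abel
      rw [hb, sub_smul, one_smul]; abel
    rw [e1, e2] at this
    exact this
  have hψconv : ∀ t1 t2 θ : ℝ, 0 ≤ θ → θ ≤ 1 →
      ψ (θ * t1 + (1 - θ) * t2) ≤ θ * ψ t1 + (1 - θ) * ψ t2 := by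
    intro t1 t2 θ hθ0 hθ1
    have harg : x0 - a + (θ * t1 + (1 - θ) * t2) • v =
        θ • (x0 - a + t1 • v) + (1 - θ) • (x0 - a + t2 • v) := by
      module
    show gauge K _ ≤ _
    rw [harg]
    calc gauge K (θ • (x0 - a + t1 • v) + (1 - θ) • (x0 - a + t2 • v))
        ≤ gauge K (θ • (x0 - a + t1 • v)) + gauge K ((1 - θ) • (x0 - a + t2 • v)) :=
          gauge_add_le hKconv habs _ _
    _ = θ * ψ t1 + (1 - θ) * ψ t2 := by
        rw [hpos θ hθ0, hpos (1 - θ) (by linarith)]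
  set c : ℝ := ψ 0 with hcdef
  have hc : c = gauge K (x0 - a) := by
    simp only [hψdef, hcdef, zero_smul, add_zero]
  have hcpos : 0 < c := by
    rcases (gauge_nonneg (x0 - a)).lt_or_eq with h | h
    · rw [hc]; exact h
    · exfalso; exact hx0a (sub_eq_zero.1 ((hgz _).1 h.symm))
  have hc1 : ψ (-1) = c := by
    have := hψeq 0 (by simp [hε'pos.le])
    rw [show (0:ℝ) - 1 = -1 by ring] at this
    exact this.symm
  have hupper : ∀ u : ℝ, -1 ≤ u → u ≤ 0 → ψ u ≤ c := by
    intro u hu1 hu0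
    have := hψconv (-1) 0 (-u) (by linarith) (by linarith)
    rw [show -u * -1 + (1 - -u) * 0 = u by ring, hc1] at this
    calc ψ u ≤ -u * c + (1 - -u) * ψ 0 := this
    _ = c := by rw [← hcdef]; ring
  have hkey : ∀ u : ℝ, -1 ≤ u → u ≤ 0 → ψ u = c := by
    intro u hu1 hu0
    refine le_antisymm (hupper u hu1 hu0) ?_
    by_contra hlt
    push_neg at hlt
    rcases eq_or_lt_of_le hu0 with rfl | hu0'
    · exact absurd rfl (by rw [← hcdef] at hlt; exact hlt.ne')
    have hden : 0 < ε' - u := by linarith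
    set θ : ℝ := ε' / (ε' - u) with hθdef
    have hθpos : 0 < θ := by positivity
    have hθlt : θ < 1 := by
      rw [hθdef, div_lt_one hden]; linarith
    have hzero : θ * u + (1 - θ) * ε' = 0 := by
      rw [hθdef]; field_simp; ring
    have hconv := hψconv u ε' θ hθpos.le hθlt.le
    rw [hzero] at hconv
    have hε'seg : ψ ε' ≤ c := by
      rw [hψeq ε' (by rw [abs_of_pos hε'pos])]
      exact hupper (ε' - 1) (by linarith) (by linarith)
    rw [← hcdef] at hconv
    have h1 : θ * ψ u < θ * c := mul_lt_mul_of_pos_left hlt hθpos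
    have h2 : (1 - θ) * ψ ε' ≤ (1 - θ) * c :=
      mul_le_mul_of_nonneg_left hε'seg (by linarith)
    linarith
  -- construct the forbidden segment
  set p : Fin d → ℝ := c⁻¹ • (x0 - a - v) with hpdef
  set q : Fin d → ℝ := c⁻¹ • (x0 - a) with hqdef
  have hqp : q - p = c⁻¹ • v := by rw [hpdef, hqdef]; module
  have hpq : p ≠ q := by
    intro h
    have : q - p = 0 := by rw [h]; abel
    rw [hqp] at this
    exact hvne ((smul_eq_zero.1 this).resolve_left (inv_ne_zero hcpos.ne'))
  refine hw ⟨p, q, hpq, ?_, c⁻¹, hqp⟩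
  intro z hz
  obtain ⟨θ1, θ2, hθ1, hθ2, hθsum, hzeq⟩ := hz
  have hθ2' : θ2 = 1 - θ1 := by linarith
  have hz' : z = c⁻¹ • (x0 - a + (-θ1) • v) := by
    rw [← hzeq, hpdef, hqdef, hθ2']
    module
  rw [← hfr]
  rw [hz', hpos c⁻¹ (by positivity) _]
  have : gauge K (x0 - a + (-θ1) • v) = c := hkey (-θ1) (by linarith) (by linarith)
  rw [this]
  field_simp

private theorem bisector_bwd {d : ℕ} (K : Set (Fin d → ℝ))
    (hK : ∃ s : Finset (Fin d → ℝ), K = convexHull ℝ (s : Set (Fin d → ℝ)))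
    (h0 : 0 ∈ interior K) (a b : Fin d → ℝ) (hab : a ≠ b)
    (hint : interior {x : Fin d → ℝ | gauge K (x - a) = gauge K (x - b)} = ∅) :
    WeakGenPos K (b - a) := by
  obtain ⟨s, rfl⟩ := hK
  set K := convexHull ℝ (s : Set (Fin d → ℝ)) with hKdef
  have hKconv : Convex ℝ K := convex_convexHull ℝ _
  have hKcomp : IsCompact K := s.finite_toSet.isCompact_convexHull (𝕜 := ℝ)
  have hnhds : K ∈ 𝓝 (0 : Fin d → ℝ) := mem_interior_iff_mem_nhds.mp h0
  have habs : Absorbent ℝ K := absorbent_nhds_zero hnhds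
  have hfr : ∀ z, gauge K z = 1 ↔ z ∈ frontier K := fun z =>
    gauge_eq_one_iff_mem_frontier hKconv hnhds
  have hpos : ∀ r : ℝ, 0 ≤ r → ∀ z, gauge K (r • z) = r * gauge K z := fun r hr z => by
    rw [gauge_smul_of_nonneg hr, smul_eq_mul]
  set v := b - a with hv
  have hvne : v ≠ 0 := sub_ne_zero.2 (Ne.symm hab)
  rintro ⟨x, y, hxy, hseg, t, ht⟩
  have htne : t ≠ 0 := by
    rintro rfl
    rw [zero_smul, sub_eq_zero] at ht
    exact hxy ht.symm
  set m : Fin d → ℝ := (1/2 : ℝ) • (x + y) with hm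
  have hmseg : m ∈ segment ℝ x y := by
    refine ⟨(1:ℝ)/2, (1:ℝ)/2, by norm_num, by norm_num, by norm_num, ?_⟩
    rw [hm]; module
  have hfrK : frontier K ⊆ K := hKcomp.isClosed.frontier_subset
  have hmfr : m ∈ frontier K := hseg hmseg
  have hmK : m ∈ K := hfrK hmfr
  have hxK : x ∈ K := hfrK (hseg (left_mem_segment ℝ x y))
  have hyK : y ∈ K := hfrK (hseg (right_mem_segment ℝ x y))
  have hyv : y = m + (t/2) • v := by
    rw [hm]; linear_combination (norm := module) (1/2 : ℝ) • ht
  have hxv : x = m + (-(t/2)) • v := by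
    rw [hm]; linear_combination (norm := module) (-(1/2) : ℝ) • ht
  set T : Set (Fin d → ℝ) := {u | ∃ θ : ℝ, 0 < θ ∧ m + θ • u ∈ K} with hT
  obtain ⟨ε, hε, hTmem'⟩ := polytopeLocalCone s hmK
  have hTmem : ∀ u ∈ T, ‖u‖ ≤ ε → m + u ∈ K := fun u hu hn => hTmem' u hu hn
  have hTK : ∀ z ∈ K, z - m ∈ T := fun z hz => ⟨1, one_pos, by simpa⟩
  have hTadd : ∀ u1 ∈ T, ∀ u2 ∈ T, u1 + u2 ∈ T := by
    rintro u1 ⟨θ1, hθ1, hm1⟩ u2 ⟨θ2, hθ2, hm2⟩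
    have hσ : 0 < θ1 + θ2 := by linarith
    refine ⟨θ1 * θ2 / (θ1 + θ2), by positivity, ?_⟩
    have hab' : θ2 / (θ1 + θ2) + θ1 / (θ1 + θ2) = 1 := by field_simp; ring
    have hcomb := hKconv hm1 hm2 (by positivity : (0:ℝ) ≤ θ2 / (θ1 + θ2))
      (by positivity : (0:ℝ) ≤ θ1 / (θ1 + θ2)) hab'
    have heq : (θ2 / (θ1 + θ2)) • (m + θ1 • u1) + (θ1 / (θ1 + θ2)) • (m + θ2 • u2)
        = m + (θ1 * θ2 / (θ1 + θ2)) • (u1 + u2) := by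
      match_scalars <;> field_simp <;> ring
    rwa [heq] at hcomb
  have hTv : ∀ (μ : ℝ), ∀ u ∈ T, u + μ • v ∈ T := by
    intro μ u hu
    rcases eq_or_ne μ 0 with rfl | hμ
    · simpa using hu
    have hvT : μ • v ∈ T := by
      rcases le_or_gt 0 (t / (2 * μ)) with hcase | hcase
      · have hne : t / (2 * μ) ≠ 0 := div_ne_zero htne (by simpa using hμ)
        refine ⟨t / (2 * μ), lt_of_le_of_ne hcase (Ne.symm hne), ?_⟩
        have he : (t / (2 * μ)) • (μ • v) = (t/2) • v := by
          rw [smul_smul]; congr 1; field_simp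
        rw [he, ← hyv]; exact hyK
      · refine ⟨-(t / (2 * μ)), by linarith, ?_⟩
        have he : (-(t / (2 * μ))) • (μ • v) = (-(t/2)) • v := by
          rw [smul_smul]; congr 1; field_simp
        rw [he, ← hxv]; exact hxK
    exact hTadd u hu (μ • v) hvT
  -- K is invariant under small v-translations near m
  have hA : ∀ (w : Fin d → ℝ) (μ : ℝ), ‖w - m‖ < ε/2 → |μ| * ‖v‖ < ε/2 →
      (w ∈ K ↔ w + μ • v ∈ K) := by
    intro w μ hw hμ
    constructor
    · intro hwK
      have h1 : (w - m) + μ • v ∈ T := hTv μ _ (hTK w hwK)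
      have h2 : ‖(w - m) + μ • v‖ ≤ ε := by
        calc ‖(w - m) + μ • v‖ ≤ ‖w - m‖ + ‖μ • v‖ := norm_add_le _ _
        _ = ‖w - m‖ + |μ| * ‖v‖ := by rw [norm_smul, Real.norm_eq_abs]
        _ ≤ ε := by linarith
      have := hTmem _ h1 h2
      have he : m + ((w - m) + μ • v) = w + μ • v := by abel
      rwa [he] at this
    · intro hwK
      have h1 : ((w + μ • v) - m) + (-μ) • v ∈ T := hTv (-μ) _ (hTK _ hwK)
      have he : ((w + μ • v) - m) + (-μ) • v = w - m := by module
      rw [he] at h1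
      have h2 : ‖w - m‖ ≤ ε := by linarith
      have := hTmem _ h1 h2
      have he2 : m + (w - m) = w := by abel
      rwa [he2] at this
  have hBdir : ∀ (w : Fin d → ℝ) (μ : ℝ), ‖w - m‖ < 3*ε/8 → |μ| * ‖v‖ < ε/8 →
      w ∈ interior K → w + μ • v ∈ interior K := by
    intro w μ hw hμ hwint
    obtain ⟨ρ, hρ, hballK⟩ := Metric.mem_nhds_iff.1 (mem_interior_iff_mem_nhds.1 hwint)
    set ρ' := min ρ (ε/16) with hρ'
    have hρ'pos : 0 < ρ' := lt_min hρ (by positivity)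
    have : Metric.ball (w + μ • v) ρ' ⊆ K := by
      intro w' hw'
      have hw'' : w' - μ • v ∈ Metric.ball w ρ' := by
        rw [Metric.mem_ball, dist_eq_norm] at hw' ⊢
        have he : w' - μ • v - w = w' - (w + μ • v) := by abel
        rwa [he]
      have hw''K : w' - μ • v ∈ K := hballK (Metric.ball_subset_ball (min_le_left _ _) hw'')
      have hdist : ‖(w' - μ • v) - m‖ < ε/2 := by
        rw [Metric.mem_ball, dist_eq_norm] at hw''
        calc ‖(w' - μ • v) - m‖ = ‖(w' - μ • v - w) + (w - m)‖ := by congr 1; abel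
        _ ≤ ‖w' - μ • v - w‖ + ‖w - m‖ := norm_add_le _ _
        _ < ρ' + 3*ε/8 := add_lt_add hw'' hw
        _ ≤ ε/16 + 3*ε/8 := by have := min_le_right ρ (ε/16); linarith
        _ < ε/2 := by linarith
      have := (hA _ μ hdist (by linarith)).1 hw''K
      have he : (w' - μ • v) + μ • v = w' := by abel
      rwa [he] at this
    exact mem_interior.2 ⟨_, this, Metric.isOpen_ball, Metric.mem_ball_self hρ'pos⟩
  have hB : ∀ (w : Fin d → ℝ) (μ : ℝ), ‖w - m‖ < ε/4 → |μ| * ‖v‖ < ε/8 →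
      (w ∈ interior K ↔ w + μ • v ∈ interior K) := by
    intro w μ hw hμ
    constructor
    · exact hBdir w μ (by linarith) hμ
    · intro h
      have hdist : ‖(w + μ • v) - m‖ < 3*ε/8 := by
        calc ‖(w + μ • v) - m‖ = ‖(w - m) + μ • v‖ := by congr 1; abel
        _ ≤ ‖w - m‖ + |μ| * ‖v‖ := by
            rw [← Real.norm_eq_abs, ← norm_smul]; exact norm_add_le _ _
        _ < ε/4 + ε/8 := add_lt_add hw hμ
        _ = 3*ε/8 := by ring
      have := hBdir (w + μ • v) (-μ) hdist (by rwa [abs_neg]) h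
      have he : (w + μ • v) + (-μ) • v = w := by module
      rwa [he] at this
  have hFr : ∀ (w : Fin d → ℝ) (μ : ℝ), ‖w - m‖ < ε/4 → |μ| * ‖v‖ < ε/8 →
      (w ∈ frontier K ↔ w + μ • v ∈ frontier K) := by
    intro w μ hw hμ
    rw [hKcomp.isClosed.frontier_eq]
    constructor
    · rintro ⟨h1, h2⟩
      exact ⟨(hA w μ (by linarith) (by linarith)).1 h1,
        fun hc => h2 ((hB w μ hw hμ).2 hc)⟩
    · rintro ⟨h1, h2⟩
      exact ⟨(hA w μ (by linarith) (by linarith)).2 h1,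
        fun hc => h2 ((hB w μ hw hμ).1 hc)⟩
  -- continuity near m
  have hgm : gauge K m = 1 := (hfr m).2 hmfr
  have hcont1 : ContinuousAt (gauge K) m := continuousAt_gauge hKconv hnhds
  have htend : Tendsto (gauge K) (𝓝 m) (𝓝 1) := hgm ▸ hcont1
  have hΦcont : Tendsto (fun z => (gauge K z)⁻¹ • z) (𝓝 m) (𝓝 m) := by
    have h1 : Tendsto (fun z => (gauge K z)⁻¹) (𝓝 m) (𝓝 1) := by
      have := htend.inv₀ (by norm_num : (1:ℝ) ≠ 0)
      simpa using this
    have h2 := h1.smul tendsto_id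
    simpa using h2
  have hev1 : ∀ᶠ z in 𝓝 m, 1/2 < gauge K z :=
    htend.eventually (eventually_gt_nhds (by norm_num))
  have hev2 : ∀ᶠ z in 𝓝 m, dist ((gauge K z)⁻¹ • z) m < ε/4 :=
    hΦcont (Metric.ball_mem_nhds m (by positivity))
  obtain ⟨ρ0, hρ0, hprop⟩ := Metric.eventually_nhds_iff.1 (hev1.and hev2)
  -- gauge equality near m
  have hGE : ∀ (z : Fin d → ℝ) (μ : ℝ), dist z m < ρ0 → |μ| * ‖v‖ < ε/32 →
      gauge K (z + μ • v) = gauge K z := by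
    intro z μ hz hμ
    obtain ⟨hg, hΦ⟩ := hprop hz
    set g := gauge K z with hgdef
    have hgpos : 0 < g := by linarith
    have hΦfr : g⁻¹ • z ∈ frontier K := by
      rw [← hfr, hpos g⁻¹ (by positivity), ← hgdef, inv_mul_cancel₀ hgpos.ne']
    have hμ' : |g⁻¹ * μ| * ‖v‖ < ε/8 := by
      rw [abs_mul, abs_of_pos (by positivity : (0:ℝ) < g⁻¹)]
      have hginv : g⁻¹ < 2 := by
        rw [inv_lt_comm₀ hgpos (by norm_num)]
        linarith
      calc g⁻¹ * |μ| * ‖v‖ ≤ 2 * (|μ| * ‖v‖) := by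
            rw [mul_assoc]
            exact mul_le_mul_of_nonneg_right hginv.le (by positivity)
      _ < 2 * (ε/32) := by
            have := mul_lt_mul_of_pos_left hμ (by norm_num : (0:ℝ) < 2)
            exact this
      _ < ε/8 := by linarith
    have hdist : ‖g⁻¹ • z - m‖ < ε/4 := by
      rw [← dist_eq_norm]; exact hΦ
    have hshift := (hFr (g⁻¹ • z) (g⁻¹ * μ) hdist hμ').1 hΦfr
    have he : g⁻¹ • z + (g⁻¹ * μ) • v = g⁻¹ • (z + μ • v) := by module
    rw [he, ← hfr, hpos g⁻¹ (by positivity)] at hshift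
    field_simp at hshift
    rw [hshift]
  -- construct an interior point of the bisector
  exfalso
  set σ : ℝ := 32 * (‖v‖ + 1) / ε with hσdef
  have hσpos : 0 < σ := by positivity
  have hσv : σ⁻¹ * ‖v‖ < ε/32 := by
    rw [hσdef]
    rw [inv_div]
    rw [div_mul_eq_mul_div, div_lt_iff₀ (by positivity)]
    nlinarith [norm_nonneg v, hε]
  have hsub : Metric.ball (a + σ • m) (σ * ρ0) ⊆
      {x : Fin d → ℝ | gauge K (x - a) = gauge K (x - b)} := by
    intro x' hx'
    set zz : Fin d → ℝ := σ⁻¹ • (x' - a) with hzz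
    have hzzdist : dist zz m < ρ0 := by
      rw [dist_eq_norm, hzz]
      have he : σ⁻¹ • (x' - a) - m = σ⁻¹ • (x' - (a + σ • m)) := by
        match_scalars <;> field_simp
      rw [he, norm_smul, Real.norm_eq_abs, abs_of_pos (by positivity : (0:ℝ) < σ⁻¹)]
      rw [Metric.mem_ball, dist_eq_norm] at hx'
      calc σ⁻¹ * ‖x' - (a + σ • m)‖ < σ⁻¹ * (σ * ρ0) :=
          mul_lt_mul_of_pos_left hx' (by positivity)
      _ = ρ0 := by field_simp
    have hxa : x' - a = σ • zz := by
      rw [hzz, smul_smul, mul_inv_cancel₀ hσpos.ne', one_smul]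
    have hxb : x' - b = σ • (zz + (-σ⁻¹) • v) := by
      rw [hzz, hv]
      match_scalars <;> field_simp <;> ring
    rw [Set.mem_setOf_eq, hxa, hxb, hpos σ hσpos.le, hpos σ hσpos.le]
    congr 1
    exact (hGE zz (-σ⁻¹) hzzdist (by rwa [abs_neg, abs_of_pos (by positivity)])).symm
  have hintmem : a + σ • m ∈ interior {x : Fin d → ℝ | gauge K (x - a) = gauge K (x - b)} :=
    mem_interior.2 ⟨_, hsub, Metric.isOpen_ball, Metric.mem_ball_self (by positivity)⟩
  rw [hint] at hintmem
  exact hintmem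

/-- For a polytope `K` with `0` in its interior and the associated Minkowski
norm (gauge), two distinct points `a`, `b` are in weak general position iff
their bisector `{x : dist(a,x) = dist(b,x)}` has empty interior. -/
theorem weakGenPos_iff_bisector_empty_interior {d : ℕ} (K : Set (Fin d → ℝ))
    (hK : ∃ s : Finset (Fin d → ℝ), K = convexHull ℝ (s : Set (Fin d → ℝ)))
    (h0 : 0 ∈ interior K) (a b : Fin d → ℝ) (hab : a ≠ b) :
    WeakGenPos K (b - a) ↔
      interior {x : Fin d → ℝ | gauge K (x - a) = gauge K (x - b)} = ∅ :=
  ⟨bisector_fwd K hK h0 a b hab, bisector_bwd K hK h0 a b hab⟩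
end

section
/- Let K be a polytope with 0 in its interior and let a, b in R^d be in weak general position with respect to K. Then the central projection from a induces a homeomorphism between bis(a,b) and a + H(b-a), where H(b-a) is the open halfsphere of ∂K in direction b-a; in particular bis(a,b) is homeomorphic to R^{d-1}. -/
/-- The open halfsphere of `∂K` in direction `v`: the points of the boundary
whose exterior normal cone is contained in `{l : l(v) > 0}`. -/
def Halfsphere {d : ℕ} (K : Set (Fin d → ℝ)) (v : Fin d → ℝ) : Set (Fin d → ℝ) :=
  {x | x ∈ frontier K ∧
    ∀ l : (Fin d → ℝ) →L[ℝ] ℝ, l ≠ 0 → (∀ y ∈ K, l y ≤ l x) → 0 < l v}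

open Set Bornology Filter Metric Module Topology

section Aux

variable {d : ℕ} {K : Set (Fin d → ℝ)} {v u z : Fin d → ℝ}

private lemma gauge_combo (hc : Convex ℝ K) (hn : K ∈ 𝓝 0) (p q : Fin d → ℝ) {lam mu : ℝ}
    (hl : 0 ≤ lam) (hm : 0 ≤ mu) :
    gauge K (lam • p + mu • q) ≤ lam * gauge K p + mu * gauge K q := by
  calc gauge K (lam • p + mu • q) ≤ gauge K (lam • p) + gauge K (mu • q) :=
        gauge_add_le hc (absorbent_nhds_zero hn) _ _
    _ = _ := by
        rw [gauge_smul_of_nonneg hl, gauge_smul_of_nonneg hm, smul_eq_mul, smul_eq_mul]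

private lemma f_mono (hc : Convex ℝ K) (hn : K ∈ 𝓝 0) (hu : gauge K u = 1)
    {t₁ t₂ : ℝ} (h : t₁ ≤ t₂) :
    t₁ - gauge K (t₁ • u - v) ≤ t₂ - gauge K (t₂ • u - v) := by
  have h2 : t₂ • u - v = (t₁ • u - v) + (t₂ - t₁) • u := by module
  have key : gauge K (t₂ • u - v) ≤ gauge K (t₁ • u - v) + (t₂ - t₁) := by
    calc gauge K (t₂ • u - v) ≤ gauge K (t₁ • u - v) + gauge K ((t₂ - t₁) • u) := by
          rw [h2]; exact gauge_add_le hc (absorbent_nhds_zero hn) _ _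
      _ = gauge K (t₁ • u - v) + (t₂ - t₁) := by
          rw [gauge_smul_of_nonneg (by linarith), smul_eq_mul, hu, mul_one]
  linarith

private lemma exists_strict_beyond (hc : Convex ℝ K) (hn : K ∈ 𝓝 0)
    (hwgp : WeakGenPos K v) (hv : v ≠ 0) (hu : gauge K u = 1)
    {t : ℝ} (ht : 0 < t) (heq : gauge K (t • u - v) = t) :
    ∃ T, t < T ∧ gauge K (T • u - v) < T := by
  by_contra hcon
  push_neg at hcon
  have hall : ∀ T, t ≤ T → gauge K (T • u - v) = T := by
    intro T hT
    rcases eq_or_lt_of_le hT with rfl | hT'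
    · exact heq
    · have h1 := hcon T hT'
      have h2 := f_mono (v := v) hc hn hu hT
      rw [heq] at h2
      linarith
  refine hwgp ⟨u - t⁻¹ • v, u, ?_, ?_, t⁻¹, by module⟩
  · intro hxy
    exact (smul_ne_zero (inv_ne_zero ht.ne') hv) (sub_eq_self.1 hxy)
  · intro p hp
    rw [segment_eq_image] at hp
    obtain ⟨s, hs, rfl⟩ := hp
    show (1 - s) • (u - t⁻¹ • v) + s • u ∈ frontier K
    have hform : (1 - s) • (u - t⁻¹ • v) + s • u = u - ((1 - s) * t⁻¹) • v := by module
    rw [hform]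
    set r := (1 - s) * t⁻¹ with hr
    have hr0 : 0 ≤ r := mul_nonneg (by linarith [hs.2]) (inv_nonneg.2 ht.le)
    rcases eq_or_lt_of_le hr0 with hr' | hr'
    · rw [← hr', zero_smul, sub_zero]
      exact (gauge_eq_one_iff_mem_frontier hc hn).1 hu
    · have hrle : r ≤ t⁻¹ := by
        rw [hr]
        nlinarith [hs.1, hs.2, inv_nonneg.2 ht.le]
      have hTt : t ≤ r⁻¹ := by
        rw [← inv_inv t]
        exact inv_anti₀ hr' hrle
      have hG := hall r⁻¹ hTt
      have hform2 : u - r • v = r • (r⁻¹ • u - v) := by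
        rw [smul_sub, smul_smul, mul_inv_cancel₀ hr'.ne', one_smul]
      rw [hform2]
      apply (gauge_eq_one_iff_mem_frontier hc hn).1
      rw [gauge_smul_of_nonneg hr0, smul_eq_mul, hG, mul_inv_cancel₀ hr'.ne']

private lemma zero_uniq (hc : Convex ℝ K) (hn : K ∈ 𝓝 0)
    (hwgp : WeakGenPos K v) (hv : v ≠ 0) (hu : gauge K u = 1)
    {t₀ t₁ : ℝ} (h₀ : 0 < t₀) (h₁ : 0 < t₁)
    (e₀ : gauge K (t₀ • u - v) = t₀) (e₁ : gauge K (t₁ • u - v) = t₁) : t₀ = t₁ := by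
  have key : ∀ s₀ s₁ : ℝ, 0 < s₀ → 0 < s₁ → gauge K (s₀ • u - v) = s₀ →
      gauge K (s₁ • u - v) = s₁ → s₀ < s₁ → False := by
    intro s₀ s₁ hs₀ hs₁ f₀ f₁ hlt
    obtain ⟨T, hT, hTlt⟩ := exists_strict_beyond hc hn hwgp hv hu hs₁ f₁
    have hden : (0:ℝ) < T - s₀ := by linarith
    set lam := (T - s₁) / (T - s₀) with hlam
    set mu := (s₁ - s₀) / (T - s₀) with hmu
    have hlam0 : 0 ≤ lam := div_nonneg (by linarith) hden.le
    have hmu0 : 0 < mu := div_pos (by linarith) hden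
    have hsc : lam * s₀ + mu * T = s₁ := by rw [hlam, hmu]; field_simp; ring
    have hsum : lam + mu = 1 := by rw [hlam, hmu]; field_simp; ring
    have hvec : lam • (s₀ • u - v) + mu • (T • u - v) = s₁ • u - v := by
      have : lam • (s₀ • u - v) + mu • (T • u - v)
          = (lam * s₀ + mu * T) • u - (lam + mu) • v := by module
      rw [this, hsc, hsum, one_smul]
    have := gauge_combo hc hn (s₀ • u - v) (T • u - v) hlam0 hmu0.le
    rw [hvec, f₁, f₀] at this
    nlinarith
  rcases lt_trichotomy t₀ t₁ with h | h | h
  · exact absurd (key t₀ t₁ h₀ h₁ e₀ e₁ h) (fun x => x)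
  · exact h
  · exact absurd (key t₁ t₀ h₁ h₀ e₁ e₀ h) (fun x => x)

private lemma zero_exists (hc : Convex ℝ K) (hn : K ∈ 𝓝 0)
    (hb : IsVonNBounded ℝ K) (hv : v ≠ 0) {T : ℝ} (hT : 0 < T)
    (hlt : gauge K (T • u - v) < T) : ∃ t, 0 < t ∧ gauge K (t • u - v) = t := by
  set f : ℝ → ℝ := fun t => gauge K (t • u - v) - t with hf
  have hcont : Continuous f :=
    ((continuous_gauge hc hn).comp ((continuous_id.smul continuous_const).sub
      continuous_const)).sub continuous_id
  have hf0 : 0 < f 0 := by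
    have : gauge K (-v) > 0 := (gauge_pos (absorbent_nhds_zero hn) hb).2 (neg_ne_zero.2 hv)
    simpa [hf] using this
  have hfT : f T < 0 := by simp [hf]; linarith
  have h0mem : (0:ℝ) ∈ Ioo (f T) (f 0) := ⟨hfT, hf0⟩
  obtain ⟨t, htIoo, hteq⟩ := intermediate_value_Ioo' hT.le hcont.continuousOn h0mem
  exact ⟨t, htIoo.1, by simpa [hf, sub_eq_zero] using hteq⟩

private lemma support_strict (l : (Fin d → ℝ) →L[ℝ] ℝ) (hl : l ≠ 0) {x : Fin d → ℝ}
    (hsupp : ∀ y ∈ K, l y ≤ l x) (hz : z ∈ interior K) : l z < l x := by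
  obtain ⟨w, hw⟩ : ∃ w, 0 < l w := by
    by_contra hcon
    push_neg at hcon
    refine hl (ContinuousLinearMap.ext fun w => ?_)
    have h1 := hcon w
    have h2 := hcon (-w)
    rw [map_neg] at h2
    simp only [ContinuousLinearMap.zero_apply]
    linarith
  obtain ⟨ε, hε, hball⟩ := Metric.isOpen_iff.1 isOpen_interior z hz
  set δ := ε / (2 * (‖w‖ + 1)) with hδ
  have hδpos : 0 < δ := by positivity
  have hmem : z + δ • w ∈ K := by
    apply interior_subset
    apply hball
    rw [mem_ball_iff_norm, add_sub_cancel_left, norm_smul, Real.norm_eq_abs, abs_of_pos hδpos]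
    have h1 : δ * ‖w‖ ≤ δ * (‖w‖ + 1) := by nlinarith [norm_nonneg w]
    have h2 : δ * (‖w‖ + 1) = ε / 2 := by
      rw [hδ]; field_simp
    linarith
  have hle := hsupp _ hmem
  rw [map_add, map_smul, smul_eq_mul] at hle
  nlinarith

private lemma dir_mem_halfsphere (hc : Convex ℝ K) (hn : K ∈ 𝓝 0)
    (hwgp : WeakGenPos K v) (hv : v ≠ 0) (hu : gauge K u = 1)
    {t : ℝ} (ht : 0 < t) (heq : gauge K (t • u - v) = t) : u ∈ Halfsphere K v := by
  refine ⟨(gauge_eq_one_iff_mem_frontier hc hn).1 hu, fun l hl hsupp => ?_⟩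
  obtain ⟨T, hT, hTlt⟩ := exists_strict_beyond hc hn hwgp hv hu ht heq
  have hTpos : 0 < T := ht.trans hT
  have hz : u - T⁻¹ • v ∈ interior K := by
    rw [← gauge_lt_one_iff_mem_interior hc hn]
    have hform : u - T⁻¹ • v = T⁻¹ • (T • u - v) := by
      rw [smul_sub, smul_smul, inv_mul_cancel₀ hTpos.ne', one_smul]
    rw [hform, gauge_smul_of_nonneg (inv_nonneg.2 hTpos.le), smul_eq_mul]
    rw [inv_mul_lt_iff₀ hTpos, mul_one]
    exact hTlt
  have hlt := support_strict l hl hsupp hz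
  rw [map_sub, map_smul, smul_eq_mul] at hlt
  nlinarith [inv_pos.2 hTpos]

private lemma surj_exists (hc : Convex ℝ K) (h0 : (0:Fin d → ℝ) ∈ interior K)
    (hH : u ∈ Halfsphere K v) :
    ∃ T, 0 < T ∧ gauge K (T • u - v) < T := by
  have hn : K ∈ 𝓝 0 := mem_interior_iff_mem_nhds.1 h0
  by_contra hcon
  push_neg at hcon
  set R : Set (Fin d → ℝ) := (fun ε : ℝ => u - ε • v) '' Ioi 0 with hR
  have hRconv : Convex ℝ R := by
    rintro x ⟨ε₁, hε₁, rfl⟩ y ⟨ε₂, hε₂, rfl⟩ p q hp hq hpq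
    rw [mem_Ioi] at hε₁ hε₂
    refine ⟨p * ε₁ + q * ε₂, ?_, ?_⟩
    · rw [mem_Ioi]
      rcases eq_or_lt_of_le hp with rfl | hp'
      · have hq1 : q = 1 := by linarith
        rw [hq1]; simpa using hε₂
      · nlinarith [mul_nonneg hq hε₂.le, mul_pos hp' hε₁]
    · have : p • (u - ε₁ • v) + q • (u - ε₂ • v)
          = (p + q) • u - (p * ε₁ + q * ε₂) • v := by module
      rw [this, hpq, one_smul]
  have hdisj : Disjoint (interior K) R := by
    rw [Set.disjoint_left]
    rintro zz hzz ⟨ε, hε, rfl⟩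
    have hεinv : 0 < ε⁻¹ := inv_pos.2 hε
    have h1 := hcon ε⁻¹ hεinv
    have hform : ε⁻¹ • (u - ε • v) = ε⁻¹ • u - v := by
      rw [smul_sub, smul_smul, inv_mul_cancel₀ hε.ne', one_smul]
    have h2 : gauge K (ε⁻¹ • (u - ε • v)) < ε⁻¹ := by
      rw [gauge_smul_of_nonneg hεinv.le, smul_eq_mul]
      have := (gauge_lt_one_iff_mem_interior hc hn).2 hzz
      calc ε⁻¹ * gauge K (u - ε • v) < ε⁻¹ * 1 := by
            exact mul_lt_mul_of_pos_left this hεinv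
        _ = ε⁻¹ := mul_one _
    rw [hform] at h2
    exact absurd h1 (not_le.2 h2)
  obtain ⟨f, c, h1, h2⟩ := geometric_hahn_banach_open hc.interior isOpen_interior hRconv hdisj
  have hc0 : (0:ℝ) < c := by
    have := h1 0 h0
    simpa using this
  have hray : ∀ ε : ℝ, 0 < ε → c ≤ f u - ε * f v := by
    intro ε hε
    have := h2 _ ⟨ε, hε, rfl⟩
    rwa [map_sub, map_smul, smul_eq_mul] at this
  have hfv : f v ≤ 0 := by
    by_contra hfv
    push_neg at hfv
    set ε := max 1 ((f u - c) / f v + 1) with hε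
    have hεpos : 0 < ε := lt_of_lt_of_le zero_lt_one (le_max_left _ _)
    have hεge : (f u - c) / f v + 1 ≤ ε := le_max_right _ _
    have := hray ε hεpos
    have hmul : ((f u - c) / f v + 1) * f v ≤ ε * f v :=
      mul_le_mul_of_nonneg_right hεge hfv.le
    have hid : ((f u - c) / f v + 1) * f v = f u - c + f v := by field_simp
    nlinarith
  have hfu : c ≤ f u := by
    by_contra hfu
    push_neg at hfu
    rcases le_or_gt 0 (f v) with hfv' | hfv'
    · have := hray 1 zero_lt_one
      nlinarith
    · have hεpos : 0 < (c - f u) / (-2 * f v) := by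
        apply div_pos (by linarith) (by linarith)
      have := hray _ hεpos
      have hid : (c - f u) / (-2 * f v) * f v = -(c - f u) / 2 := by
        rw [div_mul_eq_mul_div, div_eq_div_iff (by linarith) (by norm_num)]
        ring
      nlinarith
  have hKle : ∀ y ∈ K, f y ≤ c := by
    intro y hy
    have hθ : ∀ θ : ℝ, 0 ≤ θ → θ < 1 → θ * f y < c := by
      intro θ hθ0 hθ1
      have hmem : (1 - θ) • (0:Fin d → ℝ) + θ • y ∈ interior K :=
        hc.combo_interior_self_mem_interior h0 hy (by linarith) hθ0 (by ring)
      rw [smul_zero, zero_add] at hmem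
      have := h1 _ hmem
      rwa [map_smul, smul_eq_mul] at this
    by_contra hcon2
    push_neg at hcon2
    have hfy : 0 < f y := hc0.trans hcon2
    have h01 : (0:ℝ) ≤ (c / f y + 1) / 2 := by positivity
    have h02 : (c / f y + 1) / 2 < 1 := by
      have : c / f y < 1 := (div_lt_one hfy).2 hcon2
      linarith
    have := hθ _ h01 h02
    have hid : (c / f y + 1) / 2 * f y = (c + f y) / 2 := by field_simp
    nlinarith
  have hfne : f ≠ 0 := by
    intro hf0
    have := hray 1 zero_lt_one
    rw [hf0] at this
    simpa using lt_of_lt_of_le hc0 this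
  have := hH.2 f hfne (fun y hy => (hKle y hy).trans hfu)
  linarith


private lemma gauge_line_3pt (hc : Convex ℝ K) (hn : K ∈ 𝓝 0) (w : Fin d → ℝ)
    {x y zz : ℝ} (hxy : x < y) (hyz : y < zz) :
    (zz - x) * gauge K (w + y • v) ≤
      (zz - y) * gauge K (w + x • v) + (y - x) * gauge K (w + zz • v) := by
  have hden : (0:ℝ) < zz - x := by linarith
  set lam := (zz - y) / (zz - x) with hlam
  set mu := (y - x) / (zz - x) with hmu
  have hlam0 : 0 ≤ lam := div_nonneg (by linarith) hden.le
  have hmu0 : 0 ≤ mu := div_nonneg (by linarith) hden.le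
  have hsum : lam + mu = 1 := by rw [hlam, hmu]; field_simp; ring
  have hsc : lam * x + mu * zz = y := by rw [hlam, hmu]; field_simp; try ring
  have hvec : lam • (w + x • v) + mu • (w + zz • v) = w + y • v := by
    have h' : lam • (w + x • v) + mu • (w + zz • v)
        = (lam + mu) • w + (lam * x + mu * zz) • v := by module
    rw [h', hsum, hsc, one_smul]
  have h := gauge_combo hc hn (w + x • v) (w + zz • v) hlam0 hmu0
  rw [hvec] at h
  have h2 := mul_le_mul_of_nonneg_left h hden.le
  have e : (zz - x) * (lam * gauge K (w + x • v) + mu * gauge K (w + zz • v))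
      = (zz - y) * gauge K (w + x • v) + (y - x) * gauge K (w + zz • v) := by
    rw [hlam, hmu]; field_simp; try ring
  linarith

private lemma hfun_mono (hc : Convex ℝ K) (hn : K ∈ 𝓝 0) (w : Fin d → ℝ)
    {t₁ t₂ : ℝ} (h : t₁ ≤ t₂) :
    gauge K (w + t₁ • v) - gauge K (w + (t₁ - 1) • v) ≤
      gauge K (w + t₂ • v) - gauge K (w + (t₂ - 1) • v) := by
  rcases eq_or_lt_of_le h with rfl | hlt
  · exact le_rfl
  set L := t₂ - t₁ + 1 with hL
  have hL1 : (1:ℝ) ≤ L := by rw [hL]; linarith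
  have hLpos : (0:ℝ) < L := by linarith
  have hcoef0 : 0 ≤ 1/L := by positivity
  have hcoef1 : 0 ≤ 1 - 1/L := by
    have : 1/L ≤ 1 := by
      rw [div_le_one hLpos]; linarith
    linarith
  have hs1 : (1 - 1/L) * (t₁ - 1) + (1/L) * t₂ = t₁ := by
    field_simp; ring
  have hs2 : (1/L) * (t₁ - 1) + (1 - 1/L) * t₂ = t₂ - 1 := by
    field_simp; ring
  have i1 : gauge K (w + t₁ • v) ≤
      (1 - 1/L) * gauge K (w + (t₁-1) • v) + (1/L) * gauge K (w + t₂ • v) := by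
    have h' := gauge_combo hc hn (w + (t₁-1) • v) (w + t₂ • v) hcoef1 hcoef0
    have hvec : (1 - 1/L) • (w + (t₁-1) • v) + (1/L) • (w + t₂ • v) = w + t₁ • v := by
      have h'' : (1 - 1/L) • (w + (t₁-1) • v) + (1/L) • (w + t₂ • v)
          = ((1 - 1/L) + 1/L) • w + ((1 - 1/L) * (t₁ - 1) + (1/L) * t₂) • v := by module
      rw [h'', hs1]
      norm_num
    rwa [hvec] at h'
  have i2 : gauge K (w + (t₂-1) • v) ≤
      (1/L) * gauge K (w + (t₁-1) • v) + (1 - 1/L) * gauge K (w + t₂ • v) := by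
    have h' := gauge_combo hc hn (w + (t₁-1) • v) (w + t₂ • v) hcoef0 hcoef1
    have hvec : (1/L) • (w + (t₁-1) • v) + (1 - 1/L) • (w + t₂ • v) = w + (t₂-1) • v := by
      have h'' : (1/L) • (w + (t₁-1) • v) + (1 - 1/L) • (w + t₂ • v)
          = ((1/L) + (1 - 1/L)) • w + ((1/L) * (t₁ - 1) + (1 - 1/L) * t₂) • v := by module
      rw [h'', hs2]
      norm_num
    rwa [hvec] at h'
  linarith

private lemma tau_exists (hc : Convex ℝ K) (hn : K ∈ 𝓝 0) (hb : IsVonNBounded ℝ K)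
    (hv : v ≠ 0) (w : Fin d → ℝ) :
    ∃ t : ℝ, gauge K (w + t • v) = gauge K (w + (t - 1) • v) := by
  have habs : Absorbent ℝ K := absorbent_nhds_zero hn
  have hgv : 0 < gauge K v := (gauge_pos habs hb).2 hv
  have hgnv : 0 < gauge K (-v) := (gauge_pos habs hb).2 (neg_ne_zero.2 hv)
  set A := gauge K (-w) with hA
  set B := gauge K w with hB
  set C := gauge K (w + v) with hC
  have hA0 : 0 ≤ A := gauge_nonneg _
  have hB0 : 0 ≤ B := gauge_nonneg _
  have hC0 : 0 ≤ C := gauge_nonneg _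
  set tp := (A + B + 1) / gauge K v + 2 with htp
  have htp2 : (2:ℝ) < tp := by
    rw [htp]
    have : 0 < (A + B + 1) / gauge K v := by positivity
    linarith
  have hGlow : tp * gauge K v ≤ gauge K (w + tp • v) + A := by
    have h1 := gauge_add_le hc habs (w + tp • v) (-w)
    rw [show (w + tp • v) + (-w) = tp • v by module,
      gauge_smul_of_nonneg (by linarith : (0:ℝ) ≤ tp), smul_eq_mul] at h1
    exact h1
  have h3pt := gauge_line_3pt (v := v) hc hn w
    (show (0:ℝ) < tp - 1 by linarith) (show tp - 1 < tp by linarith)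
  rw [zero_smul, add_zero] at h3pt
  -- (tp - 0) * G (tp-1) ≤ (tp - (tp-1)) * B + (tp-1-0) * G tp
  have hpos1 : 0 < gauge K (w + tp • v) - gauge K (w + (tp - 1) • v) := by
    have htpgv : tp * gauge K v = A + B + 1 + 2 * gauge K v := by
      rw [htp]; field_simp
    nlinarith [gauge_nonneg (s := K) (w + tp • v)]
  -- negative side
  set tm := min 0 (1 - (C + A + 1) / gauge K (-v)) with htm
  have htm0 : tm ≤ 0 := min_le_left _ _
  have htmle : (C + A + 1) / gauge K (-v) ≤ 1 - tm := by
    have h := min_le_right 0 (1 - (C + A + 1) / gauge K (-v))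
    rw [← htm] at h
    linarith
  have hGlow2 : (1 - tm) * gauge K (-v) ≤ gauge K (w + (tm - 1) • v) + A := by
    have h1 := gauge_add_le hc habs (w + (tm - 1) • v) (-w)
    rw [show (w + (tm - 1) • v) + (-w) = (1 - tm) • (-v) by module,
      gauge_smul_of_nonneg (by linarith : (0:ℝ) ≤ 1 - tm), smul_eq_mul] at h1
    exact h1
  have h3pt2 := gauge_line_3pt (v := v) hc hn w
    (show tm - 1 < tm by linarith) (show tm < 1 by linarith)
  rw [one_smul] at h3pt2
  -- (1 - (tm-1)) * G tm ≤ (1 - tm) * G (tm-1) + (tm - (tm-1)) * C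
  have hneg1 : gauge K (w + tm • v) - gauge K (w + (tm - 1) • v) < 0 := by
    have hprod : (C + A + 1) ≤ (1 - tm) * gauge K (-v) := by
      rw [div_le_iff₀ hgnv] at htmle
      linarith
    nlinarith
  -- IVT
  set f : ℝ → ℝ := fun t => gauge K (w + t • v) - gauge K (w + (t - 1) • v) with hf
  have hin1 : Continuous fun t : ℝ => w + t • v :=
    continuous_const.add ((continuous_id : Continuous (id : ℝ → ℝ)).smul continuous_const)
  have hin2 : Continuous fun t : ℝ => w + (t - 1) • v :=
    continuous_const.add (((continuous_id : Continuous (id : ℝ → ℝ)).sub continuous_const).smul continuous_const)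
  have hcont : Continuous f :=
    ((continuous_gauge hc hn).comp hin1).sub ((continuous_gauge hc hn).comp hin2)
  have hlt : tm ≤ tp := by linarith
  have h0mem : (0:ℝ) ∈ Ioo (f tm) (f tp) := ⟨hneg1, hpos1⟩
  obtain ⟨t, _, hteq⟩ := intermediate_value_Ioo hlt hcont.continuousOn h0mem
  exact ⟨t, by rw [← sub_eq_zero]; exact hteq⟩

private lemma tau_uniq (hc : Convex ℝ K) (hn : K ∈ 𝓝 0) (hb : IsVonNBounded ℝ K)
    (hwgp : WeakGenPos K v) (hv : v ≠ 0) (w : Fin d → ℝ)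
    {τ τ' : ℝ} (h1 : gauge K (w + τ • v) = gauge K (w + (τ - 1) • v))
    (h2 : gauge K (w + τ' • v) = gauge K (w + (τ' - 1) • v)) : τ = τ' := by
  have habs : Absorbent ℝ K := absorbent_nhds_zero hn
  have key : ∀ σ σ' : ℝ, gauge K (w + σ • v) = gauge K (w + (σ - 1) • v) →
      gauge K (w + σ' • v) = gauge K (w + (σ' - 1) • v) → σ < σ' → False := by
    intro σ σ' g1 g2 hlt
    set c₀ := gauge K (w + (σ - 1) • v) with hc₀
    set c₁ := gauge K (w + (σ' - 1) • v) with hc₁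
    have hgσ : gauge K (w + σ • v) = c₀ := g1
    have hgσ' : gauge K (w + σ' • v) = c₁ := g2
    have e01 : c₀ ≤ c₁ := by
      have h3 := gauge_line_3pt (v := v) hc hn w
        (show σ - 1 < σ by linarith) (show σ < σ' from hlt)
      rw [hgσ, hgσ'] at h3
      nlinarith
    have e10 : c₁ ≤ c₀ := by
      rcases lt_trichotomy σ (σ' - 1) with hcase | hcase | hcase
      · have h3 := gauge_line_3pt (v := v) hc hn w hcase (show σ' - 1 < σ' by linarith)
        rw [hgσ, hgσ'] at h3
        nlinarith
      · rw [hc₁, ← hcase, hgσ]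
      · have h3 := gauge_line_3pt (v := v) hc hn w
          (show σ - 1 < σ' - 1 by linarith) (show σ' - 1 < σ from hcase)
        rw [hgσ] at h3
        nlinarith
    have hceq : c₁ = c₀ := le_antisymm e10 e01
    have hconst : ∀ t, σ - 1 ≤ t → t ≤ σ' → gauge K (w + t • v) = c₀ := by
      intro t ht1 ht2
      rcases eq_or_lt_of_le ht1 with rfl | ht1'
      · rfl
      rcases eq_or_lt_of_le ht2 with rfl | ht2'
      · rw [hgσ', hceq]
      have hupper : gauge K (w + t • v) ≤ c₀ := by
        have h3 := gauge_line_3pt (v := v) hc hn w ht1' ht2'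
        rw [hgσ'] at h3
        rw [hceq] at h3
        nlinarith
      have hlower : c₀ ≤ gauge K (w + t • v) := by
        rcases lt_trichotomy t σ with hcase | hcase | hcase
        · have h3 := gauge_line_3pt (v := v) hc hn w hcase (by linarith : σ < σ')
          rw [hgσ, hgσ', hceq] at h3
          nlinarith
        · rw [hcase, hgσ]
        · have h3 := gauge_line_3pt (v := v) hc hn w
            (show σ - 1 < σ by linarith) hcase
          rw [hgσ] at h3
          nlinarith
      linarith
    have hcpos : 0 < c₀ := by
      rcases eq_or_lt_of_le (gauge_nonneg (w + (σ - 1) • v) : (0:ℝ) ≤ c₀) with hz | hz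
      · exfalso
        have hz1 : w + σ • v = 0 := by
          rw [← gauge_eq_zero habs hb, hgσ]; exact hz.symm
        have hz2 : w + (σ - 1) • v = 0 := by
          rw [← gauge_eq_zero habs hb, ← hc₀]; exact hz.symm
        have : v = (w + σ • v) - (w + (σ - 1) • v) := by module
        rw [hz1, hz2, sub_zero] at this
        exact hv this
      · exact hz
    set X := c₀⁻¹ • (w + (σ - 1) • v) with hX
    set Y := c₀⁻¹ • (w + σ' • v) with hY
    have hYX : Y - X = (c₀⁻¹ * (σ' - σ + 1)) • v := by
      rw [hX, hY]; module
    refine hwgp ⟨X, Y, ?_, ?_, c₀⁻¹ * (σ' - σ + 1), hYX⟩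
    · intro hXY
      have : (c₀⁻¹ * (σ' - σ + 1)) • v = 0 := by rw [← hYX, hXY, sub_self]
      have hcoef : c₀⁻¹ * (σ' - σ + 1) ≠ 0 :=
        mul_ne_zero (inv_ne_zero hcpos.ne') (by linarith)
      exact (smul_ne_zero hcoef hv) this
    · intro p hp
      rw [segment_eq_image] at hp
      obtain ⟨s, hs, rfl⟩ := hp
      show (1 - s) • X + s • Y ∈ frontier K
      set ts := (1 - s) * (σ - 1) + s * σ' with hts
      have hvec : (1 - s) • X + s • Y = c₀⁻¹ • (w + ts • v) := by
        rw [hX, hY, hts]; module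
      rw [hvec]
      have hts1 : σ - 1 ≤ ts := by rw [hts]; nlinarith [hs.1, hs.2]
      have hts2 : ts ≤ σ' := by rw [hts]; nlinarith [hs.1, hs.2]
      apply (gauge_eq_one_iff_mem_frontier hc hn).1
      rw [gauge_smul_of_nonneg (inv_nonneg.2 hcpos.le), smul_eq_mul,
        hconst ts hts1 hts2, inv_mul_cancel₀ hcpos.ne']
  rcases lt_trichotomy τ τ' with h | h | h
  · exact absurd (key τ τ' h1 h2 h) (fun x => x)
  · exact h
  · exact absurd (key τ' τ h2 h1 h) (fun x => x)


end Aux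

/-- For a polytope `K` with `0` in its interior and `a, b` in weak general
position, the central projection from `a` (i.e. `x ↦ a + (x-a)/dist(a,x)`,
with `dist` the gauge of `K`) is a homeomorphism from the bisector
`bis(a,b)` onto `a + H(b-a)`; in particular `bis(a,b)` is homeomorphic
to `ℝ^{d-1}`. -/
theorem bisector_homeo_halfsphere {d : ℕ} (K : Set (Fin d → ℝ))
    (hK : ∃ s : Finset (Fin d → ℝ), K = convexHull ℝ (s : Set (Fin d → ℝ)))
    (h0 : 0 ∈ interior K) (a b : Fin d → ℝ) (hab : a ≠ b)
    (hwgp : WeakGenPos K (b - a)) :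
    (∃ φ : {x : Fin d → ℝ | gauge K (x - a) = gauge K (x - b)} ≃ₜ
        ((fun h => a + h) '' Halfsphere K (b - a)),
      ∀ x : {x : Fin d → ℝ | gauge K (x - a) = gauge K (x - b)},
        (φ x : Fin d → ℝ) =
          a + (gauge K ((x : Fin d → ℝ) - a))⁻¹ • ((x : Fin d → ℝ) - a)) ∧
    Nonempty ({x : Fin d → ℝ | gauge K (x - a) = gauge K (x - b)} ≃ₜ
      (Fin (d - 1) → ℝ)) := by
  obtain ⟨P, hKP⟩ := hK
  have hc : Convex ℝ K := hKP ▸ convex_convexHull ℝ _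
  have hcomp : IsCompact K := hKP ▸ P.finite_toSet.isCompact_convexHull ℝ
  have hbd : IsVonNBounded ℝ K := NormedSpace.isVonNBounded_of_isBounded _ hcomp.isBounded
  have hn : K ∈ 𝓝 0 := mem_interior_iff_mem_nhds.1 h0
  have habs : Absorbent ℝ K := absorbent_nhds_zero hn
  set v := b - a with hvdef
  have hv : v ≠ 0 := by rw [hvdef]; exact sub_ne_zero_of_ne (Ne.symm hab)
  have hsub : ∀ x : Fin d → ℝ, x - b = (x - a) - v := by
    intro x; rw [hvdef, sub_sub_sub_cancel_right]
  -- points of the bisector are distinct from `a`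
  have hBpos : ∀ x : Fin d → ℝ, gauge K (x - a) = gauge K (x - b) →
      0 < gauge K (x - a) := by
    intro x hx
    rcases eq_or_lt_of_le (gauge_nonneg (s := K) (x - a)) with hz | hz
    · exfalso
      have hxa : x - a = 0 := by rw [← gauge_eq_zero habs hbd, ← hz]
      have hxb : x - b = -v := by rw [hsub, hxa, zero_sub]
      have hpos := (gauge_pos habs hbd).2 (neg_ne_zero.2 hv)
      rw [hxb] at hx
      rw [← hx, ← hz] at hpos
      exact lt_irrefl _ hpos
    · exact hz
  -- the direction of a bisector point and its properties
  have hudir : ∀ x : Fin d → ℝ, gauge K (x - a) = gauge K (x - b) →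
      gauge K ((gauge K (x - a))⁻¹ • (x - a)) = 1 ∧
      gauge K (gauge K (x - a) • ((gauge K (x - a))⁻¹ • (x - a)) - v) = gauge K (x - a) := by
    intro x hx
    have ht := hBpos x hx
    constructor
    · rw [gauge_smul_of_nonneg (inv_nonneg.2 ht.le), smul_eq_mul, inv_mul_cancel₀ ht.ne']
    · rw [smul_smul, mul_inv_cancel₀ ht.ne', one_smul, ← hsub, ← hx]
  have hmemH : ∀ x : Fin d → ℝ, (hx : gauge K (x - a) = gauge K (x - b)) →
      (gauge K (x - a))⁻¹ • (x - a) ∈ Halfsphere K v := by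
    intro x hx
    exact dir_mem_halfsphere hc hn hwgp hv (hudir x hx).1 (hBpos x hx) (hudir x hx).2
  -- the target set
  have hya : ∀ y : ↥((fun h => a + h) '' Halfsphere K v),
      ((y : Fin d → ℝ) - a) ∈ Halfsphere K v := by
    rintro ⟨y, u, hu, rfl⟩
    simpa [add_sub_cancel_left] using hu
  have hufr : ∀ y : ↥((fun h => a + h) '' Halfsphere K v),
      gauge K ((y : Fin d → ℝ) - a) = 1 := by
    intro y
    exact (gauge_eq_one_iff_mem_frontier hc hn).2 (hya y).1
  have hex : ∀ y : ↥((fun h => a + h) '' Halfsphere K v),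
      ∃ t, 0 < t ∧ gauge K (t • ((y : Fin d → ℝ) - a) - v) = t := by
    intro y
    obtain ⟨T, hT, hTlt⟩ := surj_exists hc h0 (hya y)
    exact zero_exists hc hn hbd hv hT hTlt
  set sfun : ↥((fun h => a + h) '' Halfsphere K v) → ℝ := fun y => (hex y).choose with hsfun
  have hspos : ∀ y, 0 < sfun y := fun y => (hex y).choose_spec.1
  have hsspec : ∀ y, gauge K (sfun y • ((y : Fin d → ℝ) - a) - v) = sfun y :=
    fun y => (hex y).choose_spec.2
  -- the equivalence
  let Φ : {x : Fin d → ℝ | gauge K (x - a) = gauge K (x - b)} ≃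
      ((fun h => a + h) '' Halfsphere K v) :=
    { toFun := fun x =>
        ⟨a + (gauge K ((x : Fin d → ℝ) - a))⁻¹ • ((x : Fin d → ℝ) - a),
          ⟨(gauge K ((x : Fin d → ℝ) - a))⁻¹ • ((x : Fin d → ℝ) - a), hmemH _ x.2, rfl⟩⟩
      invFun := fun y =>
        ⟨a + sfun y • ((y : Fin d → ℝ) - a), by
          have h1 : a + sfun y • ((y : Fin d → ℝ) - a) - a
              = sfun y • ((y : Fin d → ℝ) - a) := by abel
          have h2 : a + sfun y • ((y : Fin d → ℝ) - a) - b
              = sfun y • ((y : Fin d → ℝ) - a) - v := by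
            rw [hsub (a + sfun y • ((y : Fin d → ℝ) - a)), h1]
          show gauge K _ = gauge K _
          rw [h1, h2, hsspec y, gauge_smul_of_nonneg (hspos y).le, smul_eq_mul, hufr y,
            mul_one]⟩
      left_inv := by
        rintro ⟨x, hx⟩
        apply Subtype.ext
        show a + _ • _ = x
        set t := gauge K (x - a) with htdef
        have ht := hBpos x hx
        set Y : ↥((fun h => a + h) '' Halfsphere K v) :=
          ⟨a + t⁻¹ • (x - a), ⟨t⁻¹ • (x - a), hmemH x hx, rfl⟩⟩ with hY
        have hYa : (Y : Fin d → ℝ) - a = t⁻¹ • (x - a) := by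
          rw [hY]; exact add_sub_cancel_left a _
        have hsY := hsspec Y
        rw [hYa] at hsY
        have huY : gauge K (t⁻¹ • (x - a)) = 1 := (hudir x hx).1
        have hteq : gauge K (t • (t⁻¹ • (x - a)) - v) = t := (hudir x hx).2
        have hs_eq : sfun Y = t :=
          zero_uniq hc hn hwgp hv huY (hspos Y) ht hsY hteq
        rw [hYa, hs_eq, smul_smul, mul_inv_cancel₀ ht.ne', one_smul]
        abel
      right_inv := by
        rintro ⟨y, hy⟩
        apply Subtype.ext
        set Y : ↥((fun h => a + h) '' Halfsphere K v) := ⟨y, hy⟩ with hYdef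
        show a + (gauge K (a + sfun Y • ((Y : Fin d → ℝ) - a) - a))⁻¹ •
            (a + sfun Y • ((Y : Fin d → ℝ) - a) - a) = y
        have h1 : a + sfun Y • ((Y : Fin d → ℝ) - a) - a
            = sfun Y • ((Y : Fin d → ℝ) - a) := by abel
        rw [h1, gauge_smul_of_nonneg (hspos Y).le, smul_eq_mul, hufr Y, mul_one,
          smul_smul, inv_mul_cancel₀ (hspos Y).ne', one_smul]
        show a + ((Y : Fin d → ℝ) - a) = y
        rw [hYdef]
        abel }
  -- continuity of the forward map
  have hgc : Continuous fun x : {x : Fin d → ℝ | gauge K (x - a) = gauge K (x - b)} =>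
      gauge K ((x : Fin d → ℝ) - a) :=
    (continuous_gauge hc hn).comp (continuous_subtype_val.sub continuous_const)
  have hcont_to : Continuous fun x : {x : Fin d → ℝ | gauge K (x - a) = gauge K (x - b)} =>
      a + (gauge K ((x : Fin d → ℝ) - a))⁻¹ • ((x : Fin d → ℝ) - a) :=
    continuous_const.add ((hgc.inv₀ (fun x => (hBpos _ x.2).ne')).smul
      (continuous_subtype_val.sub continuous_const))
  -- continuity of sfun
  have hscont : Continuous sfun := by
    rw [continuous_iff_continuousAt]
    intro y₀
    have hu₀ := hufr y₀
    have hclt : ∀ t : ℝ, t < sfun y₀ → t < gauge K (t • ((y₀ : Fin d → ℝ) - a) - v) := by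
      intro t htlt
      have hm := f_mono (v := v) hc hn hu₀ htlt.le
      rw [hsspec y₀] at hm
      have hle : t ≤ gauge K (t • ((y₀ : Fin d → ℝ) - a) - v) := by linarith
      rcases eq_or_lt_of_le hle with heq' | hlt'
      · exfalso
        rcases eq_or_lt_of_le (gauge_nonneg (s := K) (t • ((y₀ : Fin d → ℝ) - a) - v))
          with hz | hz
        · have ht0 : t = 0 := heq'.trans hz.symm
          subst ht0
          have hid : (0:ℝ) • ((y₀ : Fin d → ℝ) - a) - v = -v := by module
          rw [hid] at heq'
          exact hv (neg_eq_zero.1 ((gauge_eq_zero habs hbd).1 heq'.symm))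
        · have htpos : 0 < t := by rw [heq']; exact hz
          exact absurd (zero_uniq hc hn hwgp hv hu₀ htpos (hspos y₀) heq'.symm (hsspec y₀))
            htlt.ne
      · exact hlt'
    have hcgt : ∀ t : ℝ, sfun y₀ < t → gauge K (t • ((y₀ : Fin d → ℝ) - a) - v) < t := by
      intro t htgt
      have hm := f_mono (v := v) hc hn hu₀ htgt.le
      rw [hsspec y₀] at hm
      have hle : gauge K (t • ((y₀ : Fin d → ℝ) - a) - v) ≤ t := by linarith
      rcases eq_or_lt_of_le hle with heq' | hlt'
      · exfalso
        have htpos : 0 < t := (hspos y₀).trans htgt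
        exact absurd (zero_uniq hc hn hwgp hv hu₀ htpos (hspos y₀) heq' (hsspec y₀))
          htgt.ne'
      · exact hlt'
    rw [ContinuousAt, Metric.tendsto_nhds]
    intro ε hε
    have hA : sfun y₀ - ε < gauge K ((sfun y₀ - ε) • ((y₀ : Fin d → ℝ) - a) - v) :=
      hclt _ (by linarith)
    have hB : gauge K ((sfun y₀ + ε) • ((y₀ : Fin d → ℝ) - a) - v) < sfun y₀ + ε :=
      hcgt _ (by linarith)
    have hc1 : Continuous fun y : ↥((fun h => a + h) '' Halfsphere K v) =>
        gauge K ((sfun y₀ - ε) • ((y : Fin d → ℝ) - a) - v) :=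
      (continuous_gauge hc hn).comp
        (by fun_prop)
    have hc2 : Continuous fun y : ↥((fun h => a + h) '' Halfsphere K v) =>
        gauge K ((sfun y₀ + ε) • ((y : Fin d → ℝ) - a) - v) :=
      (continuous_gauge hc hn).comp
        (by fun_prop)
    have e1 : ∀ᶠ y : ↥((fun h => a + h) '' Halfsphere K v) in 𝓝 y₀,
        sfun y₀ - ε < gauge K ((sfun y₀ - ε) • ((y : Fin d → ℝ) - a) - v) :=
      hc1.continuousAt.eventually_mem (Ioi_mem_nhds hA)
    have e2 : ∀ᶠ y : ↥((fun h => a + h) '' Halfsphere K v) in 𝓝 y₀,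
        gauge K ((sfun y₀ + ε) • ((y : Fin d → ℝ) - a) - v) < sfun y₀ + ε :=
      hc2.continuousAt.eventually_mem (Iio_mem_nhds hB)
    filter_upwards [e1, e2] with y h1 h2
    rw [Real.dist_eq, abs_lt]
    constructor
    · by_contra hcon
      push_neg at hcon
      have hyle : sfun y ≤ sfun y₀ - ε := by linarith
      have hm := f_mono (v := v) hc hn (hufr y) hyle
      rw [hsspec y] at hm
      linarith
    · by_contra hcon
      push_neg at hcon
      have hyge : sfun y₀ + ε ≤ sfun y := by linarith
      have hm := f_mono (v := v) hc hn (hufr y) hyge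
      rw [hsspec y] at hm
      linarith
  have hcont_inv : Continuous fun y : ↥((fun h => a + h) '' Halfsphere K v) =>
      a + sfun y • ((y : Fin d → ℝ) - a) :=
    continuous_const.add (hscont.smul (continuous_subtype_val.sub continuous_const))
  constructor
  · exact ⟨{ toEquiv := Φ
             continuous_toFun := hcont_to.subtype_mk _
             continuous_invFun := hcont_inv.subtype_mk _ }, fun x => rfl⟩
  · -- Part 2: the bisector is homeomorphic to ℝ^(d-1)
    obtain ⟨i, hi⟩ : ∃ i, v i ≠ 0 := by
      by_contra hcon
      push_neg at hcon
      exact hv (funext hcon)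
    set l : (Fin d → ℝ) →L[ℝ] ℝ := (v i)⁻¹ • ContinuousLinearMap.proj i with hldef
    have hlv : l v = 1 := by
      rw [hldef]
      simp only [ContinuousLinearMap.smul_apply, ContinuousLinearMap.proj_apply, smul_eq_mul]
      exact inv_mul_cancel₀ hi
    set tau : (Fin d → ℝ) → ℝ := fun w => (tau_exists hc hn hbd hv w).choose with htaudef
    have htspec : ∀ w, gauge K (w + tau w • v) = gauge K (w + (tau w - 1) • v) :=
      fun w => (tau_exists hc hn hbd hv w).choose_spec
    have htuniq : ∀ w t, gauge K (w + t • v) = gauge K (w + (t - 1) • v) → t = tau w :=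
      fun w t h => tau_uniq hc hn hbd hwgp hv w h (htspec w)
    have htaucont : Continuous tau := by
      rw [continuous_iff_continuousAt]
      intro w₀
      have hsign : ∀ t : ℝ, t ≠ tau w₀ →
          gauge K (w₀ + t • v) ≠ gauge K (w₀ + (t - 1) • v) :=
        fun t ht h => ht (htuniq w₀ t h)
      rw [ContinuousAt, Metric.tendsto_nhds]
      intro ε hε
      have hlt1 : gauge K (w₀ + (tau w₀ - ε) • v) <
          gauge K (w₀ + (tau w₀ - ε - 1) • v) := by
        have hm := hfun_mono (v := v) hc hn w₀ (show tau w₀ - ε ≤ tau w₀ by linarith)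
        rw [htspec w₀] at hm
        rcases eq_or_lt_of_le (show gauge K (w₀ + (tau w₀ - ε) • v) ≤
            gauge K (w₀ + (tau w₀ - ε - 1) • v) by linarith) with h | h
        · exact absurd h (hsign _ (by linarith))
        · exact h
      have hgt1 : gauge K (w₀ + (tau w₀ + ε - 1) • v) <
          gauge K (w₀ + (tau w₀ + ε) • v) := by
        have hm := hfun_mono (v := v) hc hn w₀ (show tau w₀ ≤ tau w₀ + ε by linarith)
        rw [htspec w₀] at hm
        rcases eq_or_lt_of_le (show gauge K (w₀ + (tau w₀ + ε - 1) • v) ≤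
            gauge K (w₀ + (tau w₀ + ε) • v) by linarith) with h | h
        · exact absurd h.symm (hsign _ (by linarith))
        · exact h
      have hc1 : Continuous fun w : Fin d → ℝ =>
          gauge K (w + (tau w₀ - ε - 1) • v) - gauge K (w + (tau w₀ - ε) • v) :=
        ((continuous_gauge hc hn).comp (continuous_id.add continuous_const)).sub
          ((continuous_gauge hc hn).comp (continuous_id.add continuous_const))
      have hc2 : Continuous fun w : Fin d → ℝ =>
          gauge K (w + (tau w₀ + ε) • v) - gauge K (w + (tau w₀ + ε - 1) • v) :=
        ((continuous_gauge hc hn).comp (continuous_id.add continuous_const)).sub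
          ((continuous_gauge hc hn).comp (continuous_id.add continuous_const))
      have e1 : ∀ᶠ w : Fin d → ℝ in 𝓝 w₀,
          0 < gauge K (w + (tau w₀ - ε - 1) • v) - gauge K (w + (tau w₀ - ε) • v) :=
        hc1.continuousAt.eventually_mem (Ioi_mem_nhds (by simpa using sub_pos.2 hlt1))
      have e2 : ∀ᶠ w : Fin d → ℝ in 𝓝 w₀,
          0 < gauge K (w + (tau w₀ + ε) • v) - gauge K (w + (tau w₀ + ε - 1) • v) :=
        hc2.continuousAt.eventually_mem (Ioi_mem_nhds (by simpa using sub_pos.2 hgt1))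
      filter_upwards [e1, e2] with w h1 h2
      rw [Real.dist_eq, abs_lt]
      constructor
      · by_contra hcon
        push_neg at hcon
        have hle : tau w ≤ tau w₀ - ε := by linarith
        have hm := hfun_mono (v := v) hc hn w hle
        rw [htspec w] at hm
        linarith
      · by_contra hcon
        push_neg at hcon
        have hle : tau w₀ + ε ≤ tau w := by linarith
        have hm := hfun_mono (v := v) hc hn w hle
        rw [htspec w] at hm
        linarith
    -- The equivalence between the bisector and the kernel of l
    let Ψ : {x : Fin d → ℝ | gauge K (x - a) = gauge K (x - b)} ≃ ↥(LinearMap.ker l) :=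
      { toFun := fun x =>
          ⟨(x : Fin d → ℝ) - a - l ((x : Fin d → ℝ) - a) • v, by
            show l _ = 0
            rw [map_sub, map_smul, hlv, smul_eq_mul, mul_one, sub_self]⟩
        invFun := fun w =>
          ⟨a + ((w : Fin d → ℝ) + tau (w : Fin d → ℝ) • v), by
            have e1 : a + ((w : Fin d → ℝ) + tau (w : Fin d → ℝ) • v) - a
                = (w : Fin d → ℝ) + tau (w : Fin d → ℝ) • v := by abel
            have e2 : a + ((w : Fin d → ℝ) + tau (w : Fin d → ℝ) • v) - b
                = (w : Fin d → ℝ) + (tau (w : Fin d → ℝ) - 1) • v := by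
              rw [hsub]; module
            show gauge K _ = gauge K _
            rw [e1, e2]
            exact htspec _⟩
        left_inv := by
          rintro ⟨x, hx⟩
          apply Subtype.ext
          show a + ((x - a - l (x - a) • v) + tau (x - a - l (x - a) • v) • v) = x
          have hw1 : (x - a - l (x - a) • v) + l (x - a) • v = x - a := by module
          have hw2 : (x - a - l (x - a) • v) + (l (x - a) - 1) • v = x - b := by
            rw [hsub]; module
          have hz : gauge K ((x - a - l (x - a) • v) + l (x - a) • v)
              = gauge K ((x - a - l (x - a) • v) + (l (x - a) - 1) • v) := by
            rw [hw1, hw2]; exact hx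
          rw [← htuniq _ _ hz, hw1]
          abel
        right_inv := by
          rintro ⟨w, hw⟩
          apply Subtype.ext
          show (a + (w + tau w • v)) - a - l ((a + (w + tau w • v)) - a) • v = w
          have e1 : (a + (w + tau w • v)) - a = w + tau w • v := by abel
          rw [e1]
          have hlw : l w = 0 := LinearMap.mem_ker.1 hw
          have e2 : l (w + tau w • v) = tau w := by
            rw [map_add, map_smul, hlw, hlv, smul_eq_mul, mul_one, zero_add]
          rw [e2]
          module }
    have hcontΨto : Continuous fun x : {x : Fin d → ℝ | gauge K (x - a) = gauge K (x - b)} =>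
        (x : Fin d → ℝ) - a - l ((x : Fin d → ℝ) - a) • v := by
      have hbase : Continuous fun x : {x : Fin d → ℝ | gauge K (x - a) = gauge K (x - b)} =>
          (x : Fin d → ℝ) - a := continuous_subtype_val.sub continuous_const
      exact hbase.sub ((l.continuous.comp hbase).smul continuous_const)
    have hcontΨinv : Continuous fun w : ↥(LinearMap.ker (l : (Fin d → ℝ) →ₗ[ℝ] ℝ)) =>
        a + ((w : Fin d → ℝ) + tau (w : Fin d → ℝ) • v) :=
      continuous_const.add (continuous_subtype_val.add
        ((htaucont.comp continuous_subtype_val).smul continuous_const))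
    -- the kernel has dimension d - 1
    have hsurj : Function.Surjective ((l : (Fin d → ℝ) →ₗ[ℝ] ℝ)) := by
      intro c
      refine ⟨c • v, ?_⟩
      show l (c • v) = c
      rw [map_smul, hlv, smul_eq_mul, mul_one]
    have hrank := LinearMap.finrank_range_add_finrank_ker ((l : (Fin d → ℝ) →ₗ[ℝ] ℝ))
    rw [LinearMap.range_eq_top_of_surjective _ hsurj, finrank_top, Module.finrank_self,
      Module.finrank_fintype_fun_eq_card, Fintype.card_fin] at hrank
    have hkk : LinearMap.ker ((l : (Fin d → ℝ) →ₗ[ℝ] ℝ)) = LinearMap.ker (l : (Fin d → ℝ) →ₗ[ℝ] ℝ) := rfl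
    rw [hkk] at hrank
    have hker : finrank ℝ ↥(LinearMap.ker (l : (Fin d → ℝ) →ₗ[ℝ] ℝ)) = d - 1 := by omega
    have hfin2 : finrank ℝ (Fin (d - 1) → ℝ) = d - 1 := by
      rw [Module.finrank_fintype_fun_eq_card, Fintype.card_fin]
    obtain ⟨e⟩ := FiniteDimensional.nonempty_linearEquiv_of_finrank_eq
      (hker.trans hfin2.symm)
    exact ⟨(Homeomorph.mk Ψ (hcontΨto.subtype_mk _) (hcontΨinv.subtype_mk _)).trans
      e.toContinuousLinearEquiv.toHomeomorph⟩
end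

section
/- Let S be a finite set of sites in weak general position with respect to a polytope K with 0 in its interior. If some sector H_S(a) is empty, then the bisector of S (the set of points equidistant from all sites in S) is empty. -/
open Topology Filter

/-- Points where a nonzero linear functional attains its max over `K` are not interior. -/
lemma not_interior_of_max {d : ℕ} {K : Set (Fin d → ℝ)} {l : (Fin d → ℝ) →L[ℝ] ℝ}
    (hl0 : l ≠ 0) {p : Fin d → ℝ} (hmax : ∀ y ∈ K, l y ≤ l p) :
    p ∉ interior K := by
  intro hpint
  obtain ⟨w0, hw0⟩ : ∃ w0, l w0 ≠ 0 := by
    by_contra h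
    push_neg at h
    exact hl0 (by ext v; simpa using h v)
  set w : Fin d → ℝ := (l w0)⁻¹ • w0 with hw
  have hlw : l w = 1 := by simp [hw, map_smul, inv_mul_cancel₀ hw0]
  have hcont : ContinuousAt (fun ε : ℝ => p + ε • w) 0 := by fun_prop
  have hev : ∀ᶠ ε in 𝓝 (0 : ℝ), p + ε • w ∈ interior K := by
    apply hcont.eventually_mem
    simpa using isOpen_interior.mem_nhds hpint
  obtain ⟨ε, hεmem, hεpos⟩ :=
    ((hev.filter_mono nhdsWithin_le_nhds).and (eventually_mem_nhdsWithin (s := Set.Ioi (0:ℝ)))).exists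
  have hK : p + ε • w ∈ K := interior_subset hεmem
  have := hmax _ hK
  rw [map_add, map_smul, hlw, smul_eq_mul, mul_one] at this
  linarith [Set.mem_Ioi.1 hεpos]

/-- If a finite set of sites `S` is in weak general position with respect to a
polytope `K` (with `0` in its interior) and the sector
`H_S(a) = ⋂_{b ∈ S, b ≠ a} H(b-a)` of some site `a ∈ S` is empty, then the
bisector of `S` (the points equidistant, in the gauge of `K`, from all sites)
is empty. -/
theorem bisector_empty_of_empty_sector {d : ℕ} (K : Set (Fin d → ℝ))
    (hK : ∃ s : Finset (Fin d → ℝ), K = convexHull ℝ (s : Set (Fin d → ℝ)))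
    (h0 : 0 ∈ interior K) (S : Finset (Fin d → ℝ))
    (hwgp : ∀ a ∈ S, ∀ b ∈ S, a ≠ b → WeakGenPos K (b - a))
    (a : Fin d → ℝ) (ha : a ∈ S)
    (hsec : (⋂ b ∈ {b ∈ S | b ≠ a}, Halfsphere K (b - a)) = ∅) :
    {x : Fin d → ℝ | ∀ p ∈ S, ∀ q ∈ S, gauge K (x - p) = gauge K (x - q)} = ∅ := by
  obtain ⟨s, rfl⟩ := hK
  set K := convexHull ℝ (s : Set (Fin d → ℝ)) with hKdef
  have hconv : Convex ℝ K := convex_convexHull ℝ _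
  have hcomp : IsCompact K := s.finite_toSet.isCompact_convexHull ℝ
  have hclosed : IsClosed K := hcomp.isClosed
  have hnhds : K ∈ 𝓝 (0 : Fin d → ℝ) := mem_interior_iff_mem_nhds.1 h0
  have habs : Absorbent ℝ K := absorbent_nhds_zero hnhds
  have hbdd : Bornology.IsVonNBounded ℝ K := hcomp.totallyBounded.isVonNBounded ℝ
  rw [Set.eq_empty_iff_forall_notMem]
  intro x hx
  set r := gauge K (x - a) with hr
  rcases eq_or_lt_of_le (gauge_nonneg (x - a)) with hr0 | hrpos
  · -- r = 0 : all sites equal a, so the filtered set is empty and the sector is univ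
    have hall : ∀ b ∈ S, b = a := by
      intro b hb
      have hgb : gauge K (x - b) = 0 := by rw [hx b hb a ha]; exact hr0.symm
      have hxb : x = b := sub_eq_zero.1 ((gauge_eq_zero habs hbdd).1 hgb)
      have hxa : x = a := sub_eq_zero.1 ((gauge_eq_zero habs hbdd).1 hr0.symm)
      rw [← hxb, hxa]
    have : (0 : Fin d → ℝ) ∈ ⋂ b ∈ {b ∈ S | b ≠ a}, Halfsphere K (b - a) := by
      apply Set.mem_iInter₂.2
      intro b hb
      rcases Finset.mem_filter.1 hb with ⟨hbS, hba⟩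
      exact absurd (hall b hbS) hba
    rw [hsec] at this
    exact this
  · -- r > 0 : the normalized point (x - a)/r lies in every halfsphere
    set y : Fin d → ℝ := r⁻¹ • (x - a) with hy
    have hgy : gauge K y = 1 := by
      rw [hy, gauge_smul_of_nonneg (inv_nonneg.2 hrpos.le), smul_eq_mul, ← hr,
        inv_mul_cancel₀ hrpos.ne']
    have hyfr : y ∈ frontier K := (gauge_eq_one_iff_mem_frontier hconv hnhds).1 hgy
    have hmem : y ∈ ⋂ b ∈ {b ∈ S | b ≠ a}, Halfsphere K (b - a) := by
      apply Set.mem_iInter₂.2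
      intro b hb
      rcases Finset.mem_filter.1 hb with ⟨hbS, hba⟩
      refine ⟨hyfr, ?_⟩
      intro l hl0 hmax
      set zb : Fin d → ℝ := r⁻¹ • (x - b) with hzb
      have hgzb : gauge K zb = 1 := by
        rw [hzb, gauge_smul_of_nonneg (inv_nonneg.2 hrpos.le), smul_eq_mul,
          hx b hbS a ha, ← hr, inv_mul_cancel₀ hrpos.ne']
      have hzbK : zb ∈ K := by
        have := (gauge_le_one_iff_mem_closure hconv hnhds).1 hgzb.le
        rwa [hclosed.closure_eq] at this
      have hyK : y ∈ K := by
        have := (gauge_le_one_iff_mem_closure hconv hnhds).1 hgy.le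
        rwa [hclosed.closure_eq] at this
      have hle : l zb ≤ l y := hmax zb hzbK
      clear_value y zb
      have hkey : l zb = r⁻¹ * (l x - l b) := by
        rw [hzb, map_smul, map_sub, smul_eq_mul]
      have hkey' : l y = r⁻¹ * (l x - l a) := by
        rw [hy, map_smul, map_sub, smul_eq_mul]
      have hge : 0 ≤ l (b - a) := by
        rw [map_sub]
        rw [hkey, hkey'] at hle
        nlinarith [inv_pos.2 hrpos]
      rcases hge.lt_or_eq with h | h
      · exact h
      · -- l (b - a) = 0 : segment [zb, y] lies in the frontier, contradicting WGP
        exfalso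
        have hlab : l b = l a := by
          have := h.symm
          rw [map_sub, sub_eq_zero] at this
          exact this
        have hlzy : l zb = l y := by rw [hkey, hkey', hlab]
        have hne : zb ≠ y := by
          intro hE
          apply Ne.symm hba
          have h2 : x - b = x - a := by
            have := hE
            rw [hzb, hy] at this
            exact smul_right_injective _ (inv_ne_zero hrpos.ne') this
          rw [sub_right_inj] at h2; exact h2.symm
        apply hwgp a ha b hbS (Ne.symm hba)
        refine ⟨zb, y, hne, ?_, ⟨r⁻¹, ?_⟩⟩
        · intro p hp
          obtain ⟨u, v, hu, hv, huv, rfl⟩ := hp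
          have hpK : u • zb + v • y ∈ K := hconv hzbK hyK hu hv huv
          have hpmax : ∀ z ∈ K, l z ≤ l (u • zb + v • y) := by
            intro z hz
            have heq : l (u • zb + v • y) = l y := by
              rw [map_add, map_smul, map_smul, hlzy, smul_eq_mul, smul_eq_mul, ← add_mul, huv, one_mul]
            rw [heq]; exact hmax z hz
          exact ⟨subset_closure hpK, not_interior_of_max hl0 hpmax⟩
        · rw [hy, hzb, ← smul_sub]
          congr 1
          abel
    rw [hsec] at hmem
    exact hmem
end

section
/- Given faces F, G of the tropical unit ball with types (F_-, F_*, F_+) and (G_-, G_*, G_+), and points a, b in the tropical torus, the cell bis_{(F,G)}(a,b) (points x in bis(a,b) with a - x in cone(F) and b - x in cone(G)) is non-empty if and only if there exist γ in R and δ ≥ 0 such that: (b-a)_i = γ for i in (F_-∩G_-)∪(F_+∩G_+); (b-a)_i ∈ [γ, γ+δ] for i in (F_+∩G_*)∪(F_*∩G_-); (b-a)_i ∈ [γ-δ, γ] for i in (F_-∩G_*)∪(F_*∩G_+); (b-a)_i = γ-δ for i in F_-∩G_+; (b-a)_i = γ+δ for i in F_+∩G_-; and (b-a)_i ∈ [γ-δ,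 γ+δ] for i in F_*∩G_*. -/
def faceCone {d : ℕ} (Fm Fs Fp : Finset (Fin (d + 1))) : Set (Fin (d + 1) → ℝ) :=
  {v | ∃ γ δ : ℝ, 0 ≤ δ ∧ (∀ i ∈ Fm, v i = γ + δ) ∧ (∀ i ∈ Fp, v i = γ) ∧
    ∀ i ∈ Fs, v i ∈ Set.Icc γ (γ + δ)}

lemma tropDist_eq_of_cone {d : ℕ} (Fm Fs Fp : Finset (Fin (d + 1)))
    (hcover : Fm ∪ Fs ∪ Fp = Finset.univ) (hFm : Fm.Nonempty) (hFp : Fp.Nonempty)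
    (x a : Fin (d + 1) → ℝ) (γ δ : ℝ) (hδ : 0 ≤ δ)
    (h1 : ∀ i ∈ Fm, a i - x i = γ + δ) (h2 : ∀ i ∈ Fp, a i - x i = γ)
    (h3 : ∀ i ∈ Fs, a i - x i ∈ Set.Icc γ (γ + δ)) :
    tropDist x a = δ := by
  have hmem : ∀ i, γ ≤ a i - x i ∧ a i - x i ≤ γ + δ := by
    intro i
    have hi : i ∈ Fm ∪ Fs ∪ Fp := hcover ▸ Finset.mem_univ i
    rcases Finset.mem_union.1 hi with h | h
    · rcases Finset.mem_union.1 h with h | h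
      · rw [h1 i h]; exact ⟨by linarith, le_refl _⟩
      · exact ⟨(h3 i h).1, (h3 i h).2⟩
    · rw [h2 i h]; exact ⟨le_refl _, by linarith⟩
  have hsup : (Finset.univ.sup' Finset.univ_nonempty fun i => x i - a i) = -γ := by
    apply le_antisymm
    · apply Finset.sup'_le; intro i _; linarith [(hmem i).1]
    · obtain ⟨j, hj⟩ := hFp
      have h := h2 j hj
      have : -γ = x j - a j := by linarith
      rw [this]; exact Finset.le_sup' (fun i => x i - a i) (Finset.mem_univ j)
  have hinf : (Finset.univ.inf' Finset.univ_nonempty fun i => x i - a i) = -(γ + δ) := by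
    apply le_antisymm
    · obtain ⟨j, hj⟩ := hFm
      have h := h1 j hj
      have h' : x j - a j = -(γ + δ) := by linarith
      exact h' ▸ Finset.inf'_le (fun i => x i - a i) (Finset.mem_univ j)
    · apply Finset.le_inf'; intro i _; linarith [(hmem i).2]
  rw [tropDist, hsup, hinf]; ring
/-- For faces `F`, `G` of the tropical unit ball of types `(F₋,F₀,F₊)` and
`(G₋,G₀,G₊)`, the cell `bis_{(F,G)}(a,b)` (points `x` equidistant from `a`
and `b` with `a - x ∈ cone F` and `b - x ∈ cone G`) is nonempty iff there are
`γ ∈ ℝ`, `δ ≥ 0` satisfying the system (5) of conditions on `b - a`. -/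
theorem bisFG_nonempty_iff {d : ℕ} (Fm Fs Fp Gm Gs Gp : Finset (Fin (d + 1)))
    (hFms : Disjoint Fm Fs) (hFmp : Disjoint Fm Fp) (hFsp : Disjoint Fs Fp)
    (hFcover : Fm ∪ Fs ∪ Fp = Finset.univ)
    (hGms : Disjoint Gm Gs) (hGmp : Disjoint Gm Gp) (hGsp : Disjoint Gs Gp)
    (hGcover : Gm ∪ Gs ∪ Gp = Finset.univ)
    (hFm : Fm.Nonempty) (hFp : Fp.Nonempty) (hGm : Gm.Nonempty) (hGp : Gp.Nonempty)
    (a b : Fin (d + 1) → ℝ) :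
    {x : Fin (d + 1) → ℝ | tropDist x a = tropDist x b ∧
        a - x ∈ faceCone Fm Fs Fp ∧ b - x ∈ faceCone Gm Gs Gp}.Nonempty ↔
      ∃ γ δ : ℝ, 0 ≤ δ ∧
        (∀ i ∈ Fm ∩ Gm, b i - a i = γ) ∧
        (∀ i ∈ Fp ∩ Gp, b i - a i = γ) ∧
        (∀ i ∈ Fp ∩ Gs, b i - a i ∈ Set.Icc γ (γ + δ)) ∧
        (∀ i ∈ Fs ∩ Gm, b i - a i ∈ Set.Icc γ (γ + δ)) ∧
        (∀ i ∈ Fm ∩ Gs, b i - a i ∈ Set.Icc (γ - δ) γ) ∧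
        (∀ i ∈ Fs ∩ Gp, b i - a i ∈ Set.Icc (γ - δ) γ) ∧
        (∀ i ∈ Fm ∩ Gp, b i - a i = γ - δ) ∧
        (∀ i ∈ Fp ∩ Gm, b i - a i = γ + δ) ∧
        (∀ i ∈ Fs ∩ Gs, b i - a i ∈ Set.Icc (γ - δ) (γ + δ)) := by
  constructor
  · rintro ⟨x, heq, ⟨γ₁, δ₁, hδ₁, hF1, hF2, hF3⟩, ⟨γ₂, δ₂, hδ₂, hG1, hG2, hG3⟩⟩
    simp only [Pi.sub_apply, Set.mem_Icc] at hF1 hF2 hF3 hG1 hG2 hG3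
    have hda : tropDist x a = δ₁ :=
      tropDist_eq_of_cone Fm Fs Fp hFcover hFm hFp x a γ₁ δ₁ hδ₁ hF1 hF2
        (fun i hi => Set.mem_Icc.2 (hF3 i hi))
    have hdb : tropDist x b = δ₂ :=
      tropDist_eq_of_cone Gm Gs Gp hGcover hGm hGp x b γ₂ δ₂ hδ₂ hG1 hG2
        (fun i hi => Set.mem_Icc.2 (hG3 i hi))
    have hδ : δ₁ = δ₂ := by rw [← hda, ← hdb, heq]
    subst hδ
    refine ⟨γ₂ - γ₁, δ₁, hδ₁, ?_, ?_, ?_, ?_, ?_, ?_, ?_, ?_, ?_⟩ <;>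
      intro i hi <;> rw [Finset.mem_inter] at hi <;>
      [ (have h1 := hF1 i hi.1; have h2 := hG1 i hi.2);
        (have h1 := hF2 i hi.1; have h2 := hG2 i hi.2);
        (have h1 := hF2 i hi.1; have h2 := hG3 i hi.2);
        (have h1 := hF3 i hi.1; have h2 := hG1 i hi.2);
        (have h1 := hF1 i hi.1; have h2 := hG3 i hi.2);
        (have h1 := hF3 i hi.1; have h2 := hG2 i hi.2);
        (have h1 := hF1 i hi.1; have h2 := hG2 i hi.2);
        (have h1 := hF2 i hi.1; have h2 := hG1 i hi.2);
        (have h1 := hF3 i hi.1; have h2 := hG3 i hi.2)] <;>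
      first
        | linarith
        | exact Set.mem_Icc.2 ⟨by linarith, by linarith⟩
  · rintro ⟨γ, δ, hδ, h1, h2, h3, h4, h5, h6, h7, h8, h9⟩
    simp only [Finset.mem_inter, and_imp, Set.mem_Icc] at h1 h2 h3 h4 h5 h6 h7 h8 h9
    classical
    set x : Fin (d + 1) → ℝ := fun i =>
      if i ∈ Fm then a i - δ else if i ∈ Fp then a i
      else if i ∈ Gm then b i - γ - δ else if i ∈ Gp then b i - γ
      else max (a i - δ) (b i - γ - δ) with hx
    have hcase : ∀ i, i ∈ Fm ∨ i ∈ Fs ∨ i ∈ Fp := by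
      intro i
      have hi : i ∈ Fm ∪ Fs ∪ Fp := hFcover ▸ Finset.mem_univ i
      simpa [Finset.mem_union, or_assoc] using hi
    have hcaseG : ∀ i, i ∈ Gm ∨ i ∈ Gs ∨ i ∈ Gp := by
      intro i
      have hi : i ∈ Gm ∪ Gs ∪ Gp := hGcover ▸ Finset.mem_univ i
      simpa [Finset.mem_union, or_assoc] using hi
    have pF1 : ∀ i ∈ Fm, a i - x i = 0 + δ := by
      intro i hi; simp [hx, hi]
    have pF2 : ∀ i ∈ Fp, a i - x i = 0 := by
      intro i hi
      have him : i ∉ Fm := Finset.disjoint_right.1 hFmp hi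
      simp [hx, hi, him]
    have pF3 : ∀ i ∈ Fs, a i - x i ∈ Set.Icc 0 (0 + δ) := by
      intro i hi
      have him : i ∉ Fm := Finset.disjoint_right.1 hFms hi
      have hip : i ∉ Fp := Finset.disjoint_left.1 hFsp hi
      simp only [hx, him, hip, if_false, Set.mem_Icc, zero_add]
      rcases hcaseG i with hg | hg | hg
      · have hb := h4 i hi hg
        simp only [hg, if_true]
        constructor <;> linarith [hb.1, hb.2]
      · have hgm : i ∉ Gm := Finset.disjoint_right.1 hGms hg
        have hgp : i ∉ Gp := Finset.disjoint_left.1 hGsp hg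
        have hb := h9 i hi hg
        simp only [hgm, hgp, if_false]
        constructor
        · have hm : max (a i - δ) (b i - γ - δ) ≤ a i :=
            max_le (by linarith) (by linarith [hb.2])
          linarith
        · have hm : a i - δ ≤ max (a i - δ) (b i - γ - δ) := le_max_left _ _
          linarith
      · have hgm : i ∉ Gm := Finset.disjoint_right.1 hGmp hg
        have hb := h6 i hi hg
        simp only [hgm, hg, if_false, if_true]
        constructor <;> linarith [hb.1, hb.2]
    have pG1 : ∀ i ∈ Gm, b i - x i = γ + δ := by
      intro i hi
      simp only [hx]
      rcases hcase i with hf | hf | hf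
      · have hb := h1 i hf hi; simp only [hf, if_true]; linarith
      · have him : i ∉ Fm := Finset.disjoint_right.1 hFms hf
        have hip : i ∉ Fp := Finset.disjoint_left.1 hFsp hf
        simp only [him, hip, hi, if_false, if_true]; ring
      · have him : i ∉ Fm := Finset.disjoint_right.1 hFmp hf
        have hb := h8 i hf hi
        simp only [him, hf, if_false, if_true]; linarith
    have pG2 : ∀ i ∈ Gp, b i - x i = γ := by
      intro i hi
      have hgm : i ∉ Gm := Finset.disjoint_right.1 hGmp hi
      simp only [hx]
      rcases hcase i with hf | hf | hf
      · have hb := h7 i hf hi; simp only [hf, if_true]; linarith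
      · have him : i ∉ Fm := Finset.disjoint_right.1 hFms hf
        have hip : i ∉ Fp := Finset.disjoint_left.1 hFsp hf
        simp only [him, hip, hgm, hi, if_false, if_true]; ring
      · have him : i ∉ Fm := Finset.disjoint_right.1 hFmp hf
        have hb := h2 i hf hi
        simp only [him, hf, if_false, if_true]; linarith
    have pG3 : ∀ i ∈ Gs, b i - x i ∈ Set.Icc γ (γ + δ) := by
      intro i hi
      have hgm : i ∉ Gm := Finset.disjoint_right.1 hGms hi
      have hgp : i ∉ Gp := Finset.disjoint_left.1 hGsp hi
      simp only [hx, Set.mem_Icc]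
      rcases hcase i with hf | hf | hf
      · have hb := h5 i hf hi
        simp only [hf, if_true]
        constructor <;> linarith [hb.1, hb.2]
      · have him : i ∉ Fm := Finset.disjoint_right.1 hFms hf
        have hip : i ∉ Fp := Finset.disjoint_left.1 hFsp hf
        have hb := h9 i hf hi
        simp only [him, hip, hgm, hgp, if_false]
        constructor
        · have hm : max (a i - δ) (b i - γ - δ) ≤ b i - γ :=
            max_le (by linarith [hb.1]) (by linarith)
          linarith
        · have hm : b i - γ - δ ≤ max (a i - δ) (b i - γ - δ) := le_max_right _ _
          linarith
      · have him : i ∉ Fm := Finset.disjoint_right.1 hFmp hf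
        have hb := h3 i hf hi
        simp only [him, hf, if_false, if_true]
        constructor <;> linarith [hb.1, hb.2]
    have hda : tropDist x a = δ := by
      have := tropDist_eq_of_cone Fm Fs Fp hFcover hFm hFp x a 0 δ hδ pF1 pF2 pF3
      linarith
    have hdb : tropDist x b = δ :=
      tropDist_eq_of_cone Gm Gs Gp hGcover hGm hGp x b γ δ hδ pG1 pG2 pG3
    refine ⟨x, by rw [hda, hdb], ⟨0, δ, hδ, ?_, ?_, ?_⟩, ⟨γ, δ, hδ, ?_, ?_, ?_⟩⟩ <;>
      intro i hi <;> simp only [Pi.sub_apply]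
    · exact pF1 i hi
    · exact pF2 i hi
    · exact pF3 i hi
    · exact pG1 i hi
    · exact pG2 i hi
    · exact pG3 i hi
end

section
/- Let λ_{F_1},...,λ_{F_k} be the linear functionals corresponding to facets F_1,...,F_k of the tropical unit ball, where the facet F_i minimizes coordinate u_i and maximizes coordinate v_i, i.e. λ_{F_i}(x) = x_{v_i} - x_{u_i}. The k-1 functionals λ_{F_i} - λ_{F_1} (i = 2,...,k) are linearly independent if and only if the directed graph on [d+1] with arcs u_i → v_i either has no undirected cycle, or has a unique undirected cycle which is unbalanced (the numbers of arcs traversed in the two directions along the cycle differ). -/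
/-- The incidence vector `e_{v(t)} - e_{u(t)}` of the arc `u t → v t`. -/
def arcVec {d k : ℕ} (u v : Fin (k + 1) → Fin (d + 1)) (t : Fin (k + 1)) :
    Fin (d + 1) → ℝ :=
  (Pi.single (v t) 1 : Fin (d + 1) → ℝ) - Pi.single (u t) 1

/-- A (signed, simple, undirected) cycle of the multigraph with arcs
`u t → v t`: a `{-1,0,1}`-vector `c` on the arcs, nonzero, whose signed
incidence sum vanishes, and whose support is minimal with these properties.
These are exactly the signed circuits of the graphic matroid, i.e. the
undirected cycles of the multigraph together with a traversal direction. -/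
def IsGraphCycle {d k : ℕ} (u v : Fin (k + 1) → Fin (d + 1))
    (c : Fin (k + 1) → ℤ) : Prop :=
  (∀ t, c t = -1 ∨ c t = 0 ∨ c t = 1) ∧ c ≠ 0 ∧
    (∑ t, (c t : ℝ) • arcVec u v t) = 0 ∧
    ∀ c' : Fin (k + 1) → ℤ,
      ((∀ t, c' t = -1 ∨ c' t = 0 ∨ c' t = 1) ∧ c' ≠ 0 ∧
        (∑ t, (c' t : ℝ) • arcVec u v t) = 0) →
      {t | c' t ≠ 0} ⊆ {t | c t ≠ 0} → {t | c' t ≠ 0} = {t | c t ≠ 0}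

/-- The linear functional `x ↦ x_w - x_z` on `ℝ^{d+1}`. -/
def coordFunctional {d : ℕ} (z w : Fin (d + 1)) : (Fin (d + 1) → ℝ) →ₗ[ℝ] ℝ :=
  (LinearMap.proj w : (Fin (d + 1) → ℝ) →ₗ[ℝ] ℝ) - LinearMap.proj z

namespace TropCycle

variable {d k : ℕ} {u v : Fin (k + 1) → Fin (d + 1)}

lemma arcVec_apply (t : Fin (k + 1)) (s : Fin (d + 1)) :
    arcVec u v t s = (if s = v t then (1:ℝ) else 0) - (if s = u t then 1 else 0) := by
  simp [arcVec, Pi.single_apply]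

lemma dep_coord {c : Fin (k + 1) → ℝ} (h : ∑ t, c t • arcVec u v t = 0)
    (s : Fin (d + 1)) : ∑ t, c t * arcVec u v t s = 0 := by
  have := congrFun h s
  simpa using this

lemma telescope (g : ℕ → (Fin (d + 1) → ℝ)) (i : ℕ) :
    ∀ j, i ≤ j → ∑ m ∈ Finset.Ico i j, (g (m + 1) - g m) = g j - g i := by
  refine Nat.le_induction ?_ ?_
  · simp
  · intro j hij ih
    rw [Finset.sum_Ico_succ_top hij, ih]
    abel

lemma exists_pm_dep (huv : ∀ t, u t ≠ v t) (c : Fin (k + 1) → ℝ) (hc : c ≠ 0)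
    (hdep : ∑ t, c t • arcVec u v t = 0) :
    ∃ c' : Fin (k + 1) → ℤ,
      (∀ t, c' t = -1 ∨ c' t = 0 ∨ c' t = 1) ∧ c' ≠ 0 ∧
      (∑ t, (c' t : ℝ) • arcVec u v t) = 0 ∧ {t | c' t ≠ 0} ⊆ {t | c t ≠ 0} := by
  classical
  -- every endpoint of an arc in the support meets another arc of the support
  have deg2 : ∀ t, c t ≠ 0 → ∀ w, (w = u t ∨ w = v t) →
      ∃ t', c t' ≠ 0 ∧ t' ≠ t ∧ (w = u t' ∨ w = v t') := by
    intro t hct w hw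
    by_contra hno
    push_neg at hno
    have hsum := dep_coord hdep w
    have hsingle : ∑ t', c t' * arcVec u v t' w = c t * arcVec u v t w := by
      refine Finset.sum_eq_single t (fun t' _ ht' => ?_) (by simp)
      by_cases h0 : c t' = 0
      · simp [h0]
      · have := hno t' h0 ht'
        rw [arcVec_apply]
        have h1 : w ≠ v t' := fun h => (this.2 h).elim
        have h2 : w ≠ u t' := fun h => (this.1 h).elim
        simp [h1, h2]
    rw [hsingle] at hsum
    have harc : arcVec u v t w ≠ 0 := by
      rw [arcVec_apply]
      rcases hw with hw | hw
      · simp [hw, huv t]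
      · simp [hw, Ne.symm (huv t)]
    exact hct (by
      rcases mul_eq_zero.mp hsum with h | h
      · exact h
      · exact absurd h harc)
  -- the walk
  have hstart : ∃ t, c t ≠ 0 := by
    by_contra h
    push_neg at h
    exact hc (funext fun t => h t)
  obtain ⟨t₀, ht₀⟩ := hstart
  set Good : Fin (d + 1) × Fin (k + 1) → Prop :=
    fun p => c p.2 ≠ 0 ∧ (p.1 = u p.2 ∨ p.1 = v p.2) with hGood
  have step : ∀ p : {p // Good p}, ∃ q : {p // Good p},
      q.1.2 ≠ p.1.2 ∧
      ((u q.1.2 = p.1.1 ∧ v q.1.2 = q.1.1) ∨ (v q.1.2 = p.1.1 ∧ u q.1.2 = q.1.1)) := by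
    rintro ⟨⟨w, t⟩, hct, hwt⟩
    obtain ⟨t', hct', htt', hwt'⟩ := deg2 t hct w hwt
    rcases hwt' with h | h
    · exact ⟨⟨(v t', t'), hct', Or.inr rfl⟩, htt', Or.inl ⟨h.symm, rfl⟩⟩
    · exact ⟨⟨(u t', t'), hct', Or.inl rfl⟩, htt', Or.inr ⟨h.symm, rfl⟩⟩
  choose F hF using step
  set g : ℕ → {p // Good p} := fun n => F^[n] ⟨(u t₀, t₀), ht₀, Or.inl rfl⟩ with hg
  set x : ℕ → Fin (d + 1) := fun n => (g n).1.1 with hx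
  set tt : ℕ → Fin (k + 1) := fun n => (g n).1.2 with htt
  have hgsucc : ∀ n, g (n + 1) = F (g n) := by
    intro n
    simp only [hg, Function.iterate_succ_apply']
  have rel : ∀ n, tt (n + 1) ≠ tt n ∧
      ((u (tt (n + 1)) = x n ∧ v (tt (n + 1)) = x (n + 1)) ∨
       (v (tt (n + 1)) = x n ∧ u (tt (n + 1)) = x (n + 1))) := by
    intro n
    have := hF (g n)
    simp only [htt, hx, hgsucc n]
    exact this
  have good : ∀ n, c (tt n) ≠ 0 := fun n => (g n).2.1
  -- pigeonhole: a repeated vertex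
  have hrep : ∃ j, ∃ i, i < j ∧ x i = x j := by
    have hcards : Fintype.card (Fin (d + 1)) < Fintype.card (Fin (d + 2)) := by simp
    obtain ⟨a, b, hab, hxab⟩ :=
      Fintype.exists_ne_map_eq_of_card_lt (fun n : Fin (d + 2) => x n) hcards
    rcases lt_or_gt_of_ne (fun h : (a : ℕ) = (b : ℕ) => hab (Fin.ext h)) with h | h
    · exact ⟨b, a, h, hxab⟩
    · exact ⟨a, b, h, hxab.symm⟩
  set j₀ := Nat.find hrep with hj₀
  obtain ⟨i, hij, hxij⟩ := Nat.find_spec hrep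
  have hmin : ∀ m, m < j₀ → ¬∃ i, i < m ∧ x i = x m := fun m hm => Nat.find_min hrep hm
  have inj : ∀ a b, a < b → b < j₀ → x a ≠ x b := by
    intro a b hab hb h
    exact hmin b hb ⟨a, hab, h⟩
  -- the key consequence: equal values force the endpoints of the repetition
  have hxeq : ∀ a b, a < b → b ≤ j₀ → x a = x b → b = j₀ ∧ a = i := by
    intro a b hab hb h
    rcases lt_or_eq_of_le hb with hb' | hb'
    · exact absurd h (inj a b hab hb')
    · subst hb'
      refine ⟨rfl, ?_⟩
      by_contra hai
      have h' : x a = x i := h.trans hxij.symm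
      have ha : a < j₀ := hab
      rcases lt_or_gt_of_ne hai with hlt | hlt
      · exact inj a i hlt hij h'
      · exact inj i a hlt ha h'.symm
  -- distinctness of the arcs along the cycle segment
  have distinct : ∀ m m', i ≤ m → m < m' → m' < j₀ → tt (m + 1) ≠ tt (m' + 1) := by
    intro m m' him hmm' hm' heq
    obtain ⟨hne_m, hrm⟩ := rel m
    obtain ⟨hne_m', hrm'⟩ := rel m'
    rw [heq] at hrm
    rcases hrm with ⟨h1, h2⟩ | ⟨h1, h2⟩ <;> rcases hrm' with ⟨h3, h4⟩ | ⟨h3, h4⟩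
    · -- u = x m, u = x m'
      have : x m = x m' := h1.symm.trans h3
      exact absurd ((hxeq m m' hmm' (le_of_lt hm') this).1) (ne_of_lt hm')
    · -- u = x m, v = x (m+1); v = x m', u = x (m'+1)
      have hx1 : x (m + 1) = x m' := h2.symm.trans h3
      rcases lt_or_eq_of_le (Nat.succ_le_of_lt hmm') with hlt | heq'
      · exact absurd ((hxeq (m + 1) m' hlt (le_of_lt hm') hx1).1) (ne_of_lt hm')
      · -- m' = m + 1 : consecutive arcs are distinct
        subst heq'
        exact hne_m' heq.symm
    · -- v = x m, u = x (m+1); u = x m', v = x (m'+1)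
      have hx1 : x (m + 1) = x m' := h2.symm.trans h3
      rcases lt_or_eq_of_le (Nat.succ_le_of_lt hmm') with hlt | heq'
      · exact absurd ((hxeq (m + 1) m' hlt (le_of_lt hm') hx1).1) (ne_of_lt hm')
      · subst heq'
        exact hne_m' heq.symm
    · -- v = x m, v = x m'
      have : x m = x m' := h1.symm.trans h3
      exact absurd ((hxeq m m' hmm' (le_of_lt hm') this).1) (ne_of_lt hm')
  -- the sign of each traversed arc
  set σ : ℕ → ℤ := fun m => if u (tt (m + 1)) = x m then 1 else -1 with hσ
  have hstep_vec : ∀ m, (σ m : ℝ) • arcVec u v (tt (m + 1)) =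
      Pi.single (x (m + 1)) 1 - Pi.single (x m) 1 := by
    intro m
    obtain ⟨-, hrm⟩ := rel m
    rcases hrm with ⟨h1, h2⟩ | ⟨h1, h2⟩
    · simp only [hσ, if_pos h1, Int.cast_one, one_smul, arcVec, h2, h1]
    · have hne : u (tt (m + 1)) ≠ x m := by
        rw [← h1]; exact huv _
      simp only [hσ, if_neg hne, Int.cast_neg, Int.cast_one, neg_smul, one_smul,
        arcVec, h1, h2]
      abel
  -- define the cycle vector
  set c' : Fin (k + 1) → ℤ :=
    fun t => ∑ m ∈ Finset.Ico i j₀, if t = tt (m + 1) then σ m else 0 with hc'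
  have c'_at : ∀ m ∈ Finset.Ico i j₀, c' (tt (m + 1)) = σ m := by
    intro m hm
    have key : ∀ m' ∈ Finset.Ico i j₀, m' ≠ m →
        (if tt (m + 1) = tt (m' + 1) then σ m' else 0) = 0 := by
      intro m' hm' hne
      simp only [Finset.mem_Ico] at hm hm'
      have hd : tt (m + 1) ≠ tt (m' + 1) := by
        rcases lt_or_gt_of_ne (Ne.symm hne) with h | h
        · exact distinct m m' hm.1 h hm'.2
        · exact fun he => distinct m' m hm'.1 h hm.2 he.symm
      simp [hd]
    show (∑ m' ∈ Finset.Ico i j₀, if tt (m + 1) = tt (m' + 1) then σ m' else 0) = σ m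
    rw [Finset.sum_eq_single_of_mem m hm key, if_pos rfl]
  have c'_supp : ∀ t, c' t ≠ 0 → ∃ m ∈ Finset.Ico i j₀, t = tt (m + 1) := by
    intro t ht
    by_contra hno
    push_neg at hno
    apply ht
    show (∑ m ∈ Finset.Ico i j₀, if t = tt (m + 1) then σ m else 0) = 0
    exact Finset.sum_eq_zero fun m hm => if_neg (hno m hm)
  have hσpm : ∀ m, σ m = 1 ∨ σ m = -1 := by
    intro m
    simp only [hσ]
    by_cases h : u (tt (m + 1)) = x m <;> simp [h]
  refine ⟨c', ?_, ?_, ?_, ?_⟩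
  · intro t
    by_cases ht : c' t = 0
    · exact Or.inr (Or.inl ht)
    · obtain ⟨m, hm, rfl⟩ := c'_supp t ht
      rw [c'_at m hm]
      rcases hσpm m with h | h
      · exact Or.inr (Or.inr h)
      · exact Or.inl h
  · intro h0
    have : c' (tt (i + 1)) = σ i := c'_at i (Finset.mem_Ico.mpr ⟨le_refl i, hij⟩)
    rw [h0] at this
    rcases hσpm i with h | h <;> rw [h] at this <;> simp at this
  · -- the dependency
    have expand : ∀ t, ((c' t : ℝ) • arcVec u v t) =
        ∑ m ∈ Finset.Ico i j₀,
          (if t = tt (m + 1) then (σ m : ℝ) • arcVec u v t else 0) := by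
      intro t
      show ((((∑ m ∈ Finset.Ico i j₀, if t = tt (m + 1) then σ m else 0) : ℤ) : ℝ)
        • arcVec u v t) = _
      push_cast
      rw [Finset.sum_smul]
      refine Finset.sum_congr rfl fun m _ => ?_
      by_cases h : t = tt (m + 1) <;> simp [h]
    calc ∑ t, (c' t : ℝ) • arcVec u v t
        = ∑ t, ∑ m ∈ Finset.Ico i j₀,
            (if t = tt (m + 1) then (σ m : ℝ) • arcVec u v t else 0) := by
          exact Finset.sum_congr rfl fun t _ => expand t
      _ = ∑ m ∈ Finset.Ico i j₀, ∑ t,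
            (if t = tt (m + 1) then (σ m : ℝ) • arcVec u v t else 0) :=
          Finset.sum_comm
      _ = ∑ m ∈ Finset.Ico i j₀, (σ m : ℝ) • arcVec u v (tt (m + 1)) := by
          refine Finset.sum_congr rfl fun m _ => ?_
          rw [Finset.sum_ite_eq' Finset.univ (tt (m + 1))
            (fun t => (σ m : ℝ) • arcVec u v t)]
          simp
      _ = ∑ m ∈ Finset.Ico i j₀,
            ((Pi.single (x (m + 1)) 1 : Fin (d+1) → ℝ) - Pi.single (x m) 1) :=
          Finset.sum_congr rfl fun m _ => hstep_vec m
      _ = Pi.single (x j₀) 1 - Pi.single (x i) 1 :=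
          telescope (fun n => Pi.single (x n) 1) i j₀ (le_of_lt hij)
      _ = 0 := by rw [hxij]; abel
  · intro t ht
    obtain ⟨m, hm, rfl⟩ := c'_supp t ht
    exact good (m + 1)

/-- shorthand for the data of a signed cycle candidate -/
def PM (u v : Fin (k + 1) → Fin (d + 1)) (c : Fin (k + 1) → ℤ) : Prop :=
  (∀ t, c t = -1 ∨ c t = 0 ∨ c t = 1) ∧ c ≠ 0 ∧
    (∑ t, (c t : ℝ) • arcVec u v t) = 0

lemma minimize : ∀ n (c' : Fin (k + 1) → ℤ), PM u v c' →
    (Finset.univ.filter (fun t => c' t ≠ 0)).card ≤ n →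
    ∃ c₀, IsGraphCycle u v c₀ ∧ {t | c₀ t ≠ 0} ⊆ {t | c' t ≠ 0} := by
  classical
  intro n
  induction n with
  | zero =>
    intro c' hD hcard
    exfalso
    apply hD.2.1
    funext t
    simp only [Pi.zero_apply]
    by_contra ht
    have : t ∈ Finset.univ.filter (fun t => c' t ≠ 0) := by simp [ht]
    have := Finset.card_pos.mpr ⟨t, this⟩
    omega
  | succ n ih =>
    intro c' hD hcard
    by_cases hmin : ∀ c'' : Fin (k + 1) → ℤ,
        ((∀ t, c'' t = -1 ∨ c'' t = 0 ∨ c'' t = 1) ∧ c'' ≠ 0 ∧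
          (∑ t, (c'' t : ℝ) • arcVec u v t) = 0) →
        {t | c'' t ≠ 0} ⊆ {t | c' t ≠ 0} → {t | c'' t ≠ 0} = {t | c' t ≠ 0}
    · exact ⟨c', ⟨hD.1, hD.2.1, hD.2.2, hmin⟩, le_refl _⟩
    · push_neg at hmin
      obtain ⟨c'', hD'', hsub, hne⟩ := hmin
      have hssF : Finset.univ.filter (fun t => c'' t ≠ 0) ⊂
          Finset.univ.filter (fun t => c' t ≠ 0) := by
        rw [← Finset.coe_ssubset]
        have h1 : (↑(Finset.univ.filter (fun t => c'' t ≠ 0)) :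
            Set (Fin (k + 1))) = {t | c'' t ≠ 0} := by ext t; simp
        have h2 : (↑(Finset.univ.filter (fun t => c' t ≠ 0)) :
            Set (Fin (k + 1))) = {t | c' t ≠ 0} := by ext t; simp
        rw [h1, h2, Set.ssubset_iff_subset_ne]
        exact ⟨hsub, hne⟩
      have hcard'' : (Finset.univ.filter (fun t => c'' t ≠ 0)).card ≤ n := by
        have := Finset.card_lt_card hssF
        omega
      obtain ⟨c₀, hcyc, hsub₀⟩ := ih c'' ⟨hD''.1, hD''.2.1, hD''.2.2⟩ hcard''
      exact ⟨c₀, hcyc, hsub₀.trans hsub⟩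

lemma exists_cycle_of_dep (huv : ∀ t, u t ≠ v t) (c : Fin (k + 1) → ℝ)
    (hc : c ≠ 0) (hdep : ∑ t, c t • arcVec u v t = 0) :
    ∃ c₀, IsGraphCycle u v c₀ ∧ {t | c₀ t ≠ 0} ⊆ {t | c t ≠ 0} := by
  classical
  obtain ⟨c', h1, h2, h3, h4⟩ := exists_pm_dep huv c hc hdep
  obtain ⟨c₀, hcyc, hsub⟩ := minimize _ c' ⟨h1, h2, h3⟩ (le_refl _)
  exact ⟨c₀, hcyc, hsub.trans h4⟩

lemma coordFunctional_apply (z w : Fin (d + 1)) (x : Fin (d + 1) → ℝ) :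
    coordFunctional z w x = x w - x z := by
  simp [coordFunctional]

/-- functional sum is zero iff the incidence-vector sum is zero -/
lemma funSum_eq_zero_iff (c : Fin (k + 1) → ℝ) :
    (∑ t, c t • coordFunctional (u t) (v t)) = 0 ↔
      (∑ t, c t • arcVec u v t) = 0 := by
  have key : ∀ s : Fin (d + 1),
      (∑ t, c t • coordFunctional (u t) (v t)) (Pi.single s 1) =
        (∑ t, c t • arcVec u v t) s := by
    intro s
    rw [LinearMap.sum_apply, Finset.sum_apply]
    refine Finset.sum_congr rfl fun t _ => ?_
    rw [LinearMap.smul_apply, coordFunctional_apply, Pi.smul_apply,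
      arcVec_apply, Pi.single_apply, Pi.single_apply, smul_eq_mul, smul_eq_mul]
    congr 2 <;> simp [eq_comm]
  constructor
  · intro h
    funext s
    have := key s
    rw [h] at this
    simpa using this.symm
  · intro h
    refine LinearMap.ext fun x => ?_
    have hx : (∑ t, c t • coordFunctional (u t) (v t)) x =
        ∑ s, x s • (∑ t, c t • coordFunctional (u t) (v t)) (Pi.single s 1) := by
      have := LinearMap.pi_apply_eq_sum_univ (∑ t, c t • coordFunctional (u t) (v t)) x
      rw [this]
      refine Finset.sum_congr rfl fun s _ => ?_
      have hps : (fun j => if s = j then (1:ℝ) else 0) = Pi.single s 1 := by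
        funext j; simp [Pi.single_apply, eq_comm]
      rw [hps]
    rw [hx]
    simp only [key, h]
    simp

lemma sum_smul_sub {M : Type*} [AddCommGroup M] [Module ℝ M] (g : Fin k → ℝ)
    (A : Fin k → M) (B : M) :
    ∑ i, g i • (A i - B) = (∑ i, g i • A i) - (∑ i, g i) • B := by
  simp only [smul_sub]
  rw [Finset.sum_sub_distrib, Finset.sum_smul]

lemma indep_iff_K :
    (LinearIndependent ℝ fun i : Fin k =>
        (coordFunctional (u i.succ) (v i.succ) - coordFunctional (u 0) (v 0))) ↔
      (∀ c : Fin (k + 1) → ℝ,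
        (∑ t, c t • arcVec u v t) = 0 → (∑ t, c t) = 0 → c = 0) := by
  rw [Fintype.linearIndependent_iff]
  constructor
  · intro H c hdep hsum
    have hfun : ∑ t, c t • coordFunctional (u t) (v t) = 0 :=
      (funSum_eq_zero_iff c).mpr hdep
    have hc0 : c 0 = -∑ i : Fin k, c i.succ := by
      rw [Fin.sum_univ_succ] at hsum; linarith
    have hrel : ∑ i : Fin k, c i.succ •
        (coordFunctional (u i.succ) (v i.succ) - coordFunctional (u 0) (v 0)) = 0 := by
      rw [sum_smul_sub]
      rw [Fin.sum_univ_succ, hc0, (LinearMap.ext fun x => by simp : ((-∑ i : Fin k, c i.succ) • coordFunctional (u 0) (v 0) : (Fin (d + 1) → ℝ) →ₗ[ℝ] ℝ) = -((∑ i : Fin k, c i.succ) • coordFunctional (u 0) (v 0)))] at hfun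
      rw [← hfun]
      abel
    have hz := H (fun i => c i.succ) hrel
    funext t
    refine Fin.cases ?_ ?_ t
    · rw [hc0]
      simp only [Pi.zero_apply]
      rw [Finset.sum_eq_zero fun i _ => hz i]
      simp
    · intro i
      simpa using hz i
  · intro K g hrel i
    set c : Fin (k + 1) → ℝ := Fin.cons (-∑ i, g i) g with hcdef
    have hfun : ∑ t, c t • coordFunctional (u t) (v t) = 0 := by
      rw [Fin.sum_univ_succ]
      simp only [hcdef, Fin.cons_zero, Fin.cons_succ]
      rw [← hrel, sum_smul_sub, (LinearMap.ext fun x => by simp : ((-∑ i : Fin k, g i) • coordFunctional (u 0) (v 0) : (Fin (d + 1) → ℝ) →ₗ[ℝ] ℝ) = -((∑ i : Fin k, g i) • coordFunctional (u 0) (v 0)))]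
      abel
    have hdep := (funSum_eq_zero_iff c).mp hfun
    have hsum : ∑ t, c t = 0 := by
      rw [Fin.sum_univ_succ]
      simp [hcdef, Fin.cons_zero, Fin.cons_succ]
    have hc := K c hdep hsum
    have : c i.succ = 0 := by rw [hc]; rfl
    simpa [hcdef, Fin.cons_succ] using this

lemma K_iff_RHS (huv : ∀ t, u t ≠ v t) :
    (∀ c : Fin (k + 1) → ℝ,
        (∑ t, c t • arcVec u v t) = 0 → (∑ t, c t) = 0 → c = 0) ↔
      ((∀ c, ¬ IsGraphCycle u v c) ∨
        ((∀ c₁ c₂, IsGraphCycle u v c₁ → IsGraphCycle u v c₂ →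
            {t | c₁ t ≠ 0} = {t | c₂ t ≠ 0}) ∧
          ∀ c, IsGraphCycle u v c → (∑ t, c t) ≠ 0)) := by
  constructor
  · intro K
    by_cases hcyc : ∀ c, ¬ IsGraphCycle u v c
    · exact Or.inl hcyc
    right
    have hunbal : ∀ c, IsGraphCycle u v c → (∑ t, c t) ≠ 0 := by
      intro c hc hsum
      have hdep : ∑ t, ((c t : ℝ)) • arcVec u v t = 0 := hc.2.2.1
      have hsumR : ∑ t, ((c t : ℝ)) = 0 := by
        have : ((∑ t, c t : ℤ) : ℝ) = 0 := by rw [hsum]; simp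
        push_cast at this
        exact this
      have h0 := K (fun t => (c t : ℝ)) hdep hsumR
      apply hc.2.1
      funext t
      have := congrFun h0 t
      simpa using this
    refine ⟨?_, hunbal⟩
    intro c₁ c₂ h₁ h₂
    by_contra hne
    have hS₁ : (∑ t, c₁ t) ≠ 0 := hunbal c₁ h₁
    have hS₂ : (∑ t, c₂ t) ≠ 0 := hunbal c₂ h₂
    set w : Fin (k + 1) → ℝ := fun t =>
      ((∑ s, c₁ s : ℤ) : ℝ) * (c₂ t : ℝ) - ((∑ s, c₂ s : ℤ) : ℝ) * (c₁ t : ℝ)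
      with hwdef
    have hdepw : ∑ t, w t • arcVec u v t = 0 := by
      simp only [hwdef, sub_smul, mul_smul]
      rw [Finset.sum_sub_distrib, ← Finset.smul_sum, ← Finset.smul_sum,
        h₁.2.2.1, h₂.2.2.1]
      simp
    have hsumw : ∑ t, w t = 0 := by
      simp only [hwdef]
      rw [Finset.sum_sub_distrib, ← Finset.mul_sum, ← Finset.mul_sum]
      push_cast
      ring
    have hw0 := K w hdepw hsumw
    have hex : ∃ t, ¬ ((c₁ t ≠ 0) ↔ (c₂ t ≠ 0)) := by
      by_contra hall
      push_neg at hall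
      apply hne
      ext t
      simp only [Set.mem_setOf_eq]
      exact hall t
    obtain ⟨t, ht⟩ := hex
    have hwt := congrFun hw0 t
    simp only [hwdef, Pi.zero_apply] at hwt
    by_cases h1 : c₁ t = 0
    · have h2 : c₂ t ≠ 0 := by tauto
      rw [h1] at hwt
      simp only [Int.cast_zero, mul_zero, sub_zero] at hwt
      rcases mul_eq_zero.mp hwt with h | h
      · exact hS₁ (by exact_mod_cast h)
      · exact h2 (by exact_mod_cast h)
    · have h2 : c₂ t = 0 := by tauto
      rw [h2] at hwt
      simp only [Int.cast_zero, mul_zero, zero_sub, neg_eq_zero] at hwt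
      rcases mul_eq_zero.mp hwt with h | h
      · exact hS₂ (by exact_mod_cast h)
      · exact h1 (by exact_mod_cast h)
  · intro hRHS c hdep hsum
    by_contra hc
    obtain ⟨c₀, hcyc, hsupp⟩ := exists_cycle_of_dep huv c hc hdep
    rcases hRHS with hno | ⟨huniq, hunbal⟩
    · exact hno c₀ hcyc
    obtain ⟨t₀, ht₀⟩ : ∃ t, c₀ t ≠ 0 := by
      by_contra hall
      push_neg at hall
      exact hcyc.2.1 (funext fun t => hall t)
    set μ : ℝ := c t₀ / (c₀ t₀ : ℝ) with hμ
    have hden : ((c₀ t₀ : ℤ) : ℝ) ≠ 0 := Int.cast_ne_zero.mpr ht₀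
    set c₂ : Fin (k + 1) → ℝ := fun t => c t - μ * (c₀ t : ℝ) with hc₂
    have hdep₂ : ∑ t, c₂ t • arcVec u v t = 0 := by
      simp only [hc₂, sub_smul, mul_smul]
      rw [Finset.sum_sub_distrib, hdep, ← Finset.smul_sum, hcyc.2.2.1]
      simp
    have hc₂t₀ : c₂ t₀ = 0 := by
      simp only [hc₂, hμ]
      field_simp
      simp
    have hc₂0 : c₂ = 0 := by
      by_contra h₂
      obtain ⟨c₃, hcyc₃, hsupp₃⟩ := exists_cycle_of_dep huv c₂ h₂ hdep₂
      have hse := huniq c₃ c₀ hcyc₃ hcyc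
      have ht₀mem : t₀ ∈ {t | c₃ t ≠ 0} := by rw [hse]; exact ht₀
      exact (hsupp₃ ht₀mem) hc₂t₀
    have hcμ : ∀ t, c t = μ * (c₀ t : ℝ) := by
      intro t
      have := congrFun hc₂0 t
      simp only [hc₂, Pi.zero_apply] at this
      linarith
    have hμ0 : μ ≠ 0 := by
      intro h
      apply hc
      funext t
      rw [hcμ t, h, zero_mul]
      rfl
    have hkey : (0:ℝ) = μ * ((∑ t, c₀ t : ℤ) : ℝ) := by
      rw [← hsum]
      push_cast
      rw [Finset.mul_sum]
      exact Finset.sum_congr rfl fun t _ => hcμ t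
    have hz : ((∑ t, c₀ t : ℤ) : ℝ) = 0 := by
      rcases mul_eq_zero.mp hkey.symm with h | h
      · exact absurd h hμ0
      · exact h
    exact hunbal c₀ hcyc (by exact_mod_cast hz)

end TropCycle

/-- Let `λ_t(x) = x_{v t} - x_{u t}` be the facet functionals of the tropical
unit ball associated to the arcs `u t → v t`, `t = 0, …, k`.  The `k`
differences `λ_t - λ_0` (`t = 1, …, k`) are linearly independent iff the
multigraph on `[d+1]` with these arcs has no undirected cycle, or has a unique
undirected cycle and that cycle is unbalanced (its signed sum of arcs,
i.e. #forward − #backward arcs along a traversal, is nonzero). -/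
theorem facet_functionals_linearIndependent_iff {d k : ℕ}
    (u v : Fin (k + 1) → Fin (d + 1)) (huv : ∀ t, u t ≠ v t) :
    (LinearIndependent ℝ fun i : Fin k =>
        (coordFunctional (u i.succ) (v i.succ) - coordFunctional (u 0) (v 0))) ↔
      ((∀ c, ¬ IsGraphCycle u v c) ∨
        ((∀ c₁ c₂, IsGraphCycle u v c₁ → IsGraphCycle u v c₂ →
            {t | c₁ t ≠ 0} = {t | c₂ t ≠ 0}) ∧
          ∀ c, IsGraphCycle u v c → (∑ t, c t) ≠ 0)) :=
  (TropCycle.indep_iff_K).trans (TropCycle.K_iff_RHS huv)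
end
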